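/- arXiv:2509.11024 — 8 statements merged into one kernel-verified Lean document; each statement's English description precedes it below -/
import Mathlib

section
/- For every integer k ≥ 1, the pebbling number of the even cycle on 2k vertices satisfies π(C_{2k}) = 2^k. -/
/-- A single pebbling move on a graph `G`: remove two pebbles from a vertex `u`
and add one pebble to an adjacent vertex `v`. -/
def PebblingMove {V : Type*} [DecidableEq V] (G : SimpleGraph V) (C C' : V → ℕ) : Prop :=
  ∃ u v : V, G.Adj u v ∧ 2 ≤ C u ∧
    C' = fun w => if w = u then C u - 2 else if w = v then C v + 1 else C w

/-- A configuration `C` is `r`-solvable if some finite sequence of pebbling moves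
starting from `C` places at least one pebble on `r`. -/
def PebblingSolvable {V : Type*} [DecidableEq V] (G : SimpleGraph V) (r : V) (C : V → ℕ) : Prop :=
  ∃ C' : V → ℕ, Relation.ReflTransGen (PebblingMove G) C C' ∧ 1 ≤ C' r

/-- The rooted pebbling number `π(G, r)`: the least `t` such that every configuration
with `t` pebbles in total is `r`-solvable. -/
noncomputable def rootedPebblingNumber {V : Type*} [Fintype V] [DecidableEq V]
    (G : SimpleGraph V) (r : V) : ℕ :=
  sInf {t : ℕ | ∀ C : V → ℕ, (∑ v, C v) = t → PebblingSolvable G r C}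

/-- The pebbling number `π(G)`: the maximum of `π(G, r)` over all vertices `r`. -/
noncomputable def pebblingNumber {V : Type*} [Fintype V] [DecidableEq V]
    (G : SimpleGraph V) : ℕ :=
  Finset.univ.sup (rootedPebblingNumber G)


namespace PebAux
open Finset
open Fin.NatCast Fin.CommRing

variable {V : Type*} [DecidableEq V] {G : SimpleGraph V}

lemma solvable_head {r : V} {C C' : V → ℕ} (h : PebblingMove G C C')
    (hs : PebblingSolvable G r C') : PebblingSolvable G r C :=
  let ⟨D, hD, hr⟩ := hs; ⟨D, .head h hD, hr⟩

lemma path_solvable (m : ℕ) (f : ℕ → V)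
    (hadj : ∀ i < m, G.Adj (f (i + 1)) (f i))
    (hinj : ∀ i ≤ m, ∀ j ≤ m, f i = f j → i = j) :
    ∀ C : V → ℕ, 2 ^ m ≤ ∑ i ∈ range (m + 1), C (f i) * 2 ^ (m - i) →
      PebblingSolvable G (f 0) C := by
  induction m with
  | zero =>
    intro C hw
    simp at hw
    exact ⟨C, .refl, hw⟩
  | succ m ih =>
    have hadj' : ∀ i < m, G.Adj (f (i + 1)) (f i) := fun i hi => hadj i (by omega)
    have hinj' : ∀ i ≤ m, ∀ j ≤ m, f i = f j → i = j :=
      fun i hi j hj => hinj i (by omega) j (by omega)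
    intro C
    generalize hN : C (f (m + 1)) = N
    induction N using Nat.strong_induction_on generalizing C with
    | _ N ihN =>
    intro hw
    -- rewrite weight sum
    have hsplit : ∑ i ∈ range (m + 1 + 1), C (f i) * 2 ^ (m + 1 - i)
        = 2 * (∑ i ∈ range (m + 1), C (f i) * 2 ^ (m - i)) + N := by
      rw [sum_range_succ, hN]
      simp only [Nat.sub_self, pow_zero, mul_one]
      congr 1
      rw [mul_sum]
      refine sum_congr rfl fun i hi => ?_
      rw [mem_range] at hi
      have : m + 1 - i = (m - i) + 1 := by omega
      rw [this, pow_succ]; ring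
    by_cases h2 : N ≤ 1
    · apply ih hadj' hinj'
      have hP : 0 < 2 ^ m := Nat.pow_pos (by norm_num)
      have := hw
      rw [hsplit] at this
      have h21 : 2 ^ (m + 1) = 2 * 2 ^ m := by rw [pow_succ]; ring
      omega
    · push_neg at h2
      set C' : V → ℕ := fun w =>
        if w = f (m + 1) then C (f (m + 1)) - 2
        else if w = f m then C (f m) + 1 else C w with hC'
      have hne : f m ≠ f (m + 1) := fun h => by
        have := hinj m (by omega) (m + 1) (by omega) h; omega
      have hmv : PebblingMove G C C' :=
        ⟨f (m + 1), f m, hadj m (by omega), by omega, rfl⟩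
      refine solvable_head hmv (ihN (N - 2) (by omega) C' ?_ ?_)
      · simp [hC', if_pos rfl, hN]
      · -- weight of C' ≥ 2^(m+1)
        have key : ∑ i ∈ range (m + 1 + 1), C' (f i) * 2 ^ (m + 1 - i)
            = ∑ i ∈ range (m + 1 + 1), C (f i) * 2 ^ (m + 1 - i) := by
          rw [sum_range_succ, sum_range_succ, sum_range_succ (fun i => C (f i) * 2 ^ (m+1-i)), sum_range_succ (fun i => C (f i) * 2 ^ (m+1-i))]
          have e1 : ∀ i ∈ range m, C' (f i) * 2 ^ (m + 1 - i) = C (f i) * 2 ^ (m + 1 - i) := by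
            intro i hi
            rw [mem_range] at hi
            have h1 : f i ≠ f (m + 1) := fun h => by
              have := hinj i (by omega) (m + 1) (by omega) h; omega
            have h2 : f i ≠ f m := fun h => by
              have := hinj i (by omega) m (by omega) h; omega
            simp [hC', h1, h2]
          rw [sum_congr rfl e1]
          have hv1 : C' (f m) = C (f m) + 1 := by simp [hC', hne]
          have hv2 : C' (f (m + 1)) = N - 2 := by simp [hC', hN]
          rw [hv1, hv2, hN]
          have : m + 1 - m = 1 := by omega
          rw [this]
          simp only [Nat.sub_self, pow_zero, mul_one, pow_one]
          omega
        omega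

lemma cyc_adj_succ {n : ℕ} [NeZero n] (hn : 2 ≤ n) (v : Fin n) :
    (SimpleGraph.cycleGraph n).Adj (v + 1) v := by
  rw [SimpleGraph.cycleGraph_adj']
  left
  have : v + 1 - v = 1 := by ring
  rw [this, Fin.val_one', Nat.mod_eq_of_lt (by omega)]

lemma cyc_adj_pred {n : ℕ} [NeZero n] (hn : 2 ≤ n) (v : Fin n) :
    (SimpleGraph.cycleGraph n).Adj (v - 1) v := by
  rw [SimpleGraph.cycleGraph_adj']
  right
  have : v - (v - 1) = 1 := by ring
  rw [this, Fin.val_one', Nat.mod_eq_of_lt (by omega)]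

lemma cycle_solvable (k : ℕ) (hk : 1 ≤ k) [NeZero (2 * k)] (C : Fin (2 * k) → ℕ)
    (hsum : 2 ^ k ≤ ∑ v, C v) :
    PebblingSolvable (SimpleGraph.cycleGraph (2 * k)) 0 C := by
  by_cases hr : 1 ≤ C 0
  · exact ⟨C, .refl, hr⟩
  push_neg at hr
  set g : ℕ → ℕ := fun i => C ((i : ℕ) : Fin (2 * k)) with hg
  set g' : ℕ → ℕ := fun i => C (-((i : ℕ) : Fin (2 * k))) with hg'
  have hg0 : g 0 = 0 := by simp [hg]; omega
  have hneg : ∀ i ≤ 2 * k, -((i : ℕ) : Fin (2 * k)) = ((2 * k - i : ℕ) : Fin (2 * k)) := by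
    intro i hi
    apply neg_eq_of_add_eq_zero_right
    rw [← Nat.cast_add]
    have : i + (2 * k - i) = 2 * k := by omega
    rw [this, Fin.natCast_self]
  have hg'0 : g' 0 = 0 := by
    have : -((0 : ℕ) : Fin (2 * k)) = ((0:ℕ) : Fin (2*k)) := by simp
    simp only [hg', this]; simpa [hg] using hg0
  have hg'k : g' k = g k := by
    simp only [hg', hg]
    congr 1
    rw [hneg k (by omega)]
    congr 1
    omega
  -- total sum
  have hT : ∑ v, C v = ∑ i ∈ range (2 * k), g i := by
    rw [← Fin.sum_univ_eq_sum_range (fun i => g i) (2 * k)]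
    exact Fintype.sum_congr _ _ fun v => by simp [hg]
  have hTsplit : ∑ i ∈ range (2 * k), g i
      = ∑ i ∈ range (k + 1), g i + ∑ i ∈ Ico (k + 1) (2 * k), g i := by
    rw [range_eq_Ico, range_eq_Ico]
    exact (Finset.sum_Ico_consecutive _ (by omega : 0 ≤ k + 1) (by omega : k + 1 ≤ 2 * k)).symm
  have hBsum : ∑ i ∈ Ico (k + 1) (2 * k), g i = ∑ i ∈ Ico 1 k, g' i := by
    apply Finset.sum_nbij' (i := fun j => 2 * k - j) (j := fun j => 2 * k - j)
    · intro a ha; rw [mem_Ico] at *; omega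
    · intro a ha; rw [mem_Ico] at *; omega
    · intro a ha; rw [mem_Ico] at ha; omega
    · intro a ha; rw [mem_Ico] at ha; omega
    · intro a ha
      rw [mem_Ico] at ha
      simp only [hg', hg]
      congr 1
      rw [hneg (2 * k - a) (by omega)]
      congr 1
      omega
  -- generic decomposition of a range (k+1) sum
  have hdec : ∀ h : ℕ → ℕ, ∑ i ∈ range (k + 1), h i
      = h 0 + ∑ i ∈ Ico 1 k, h i + h k := by
    intro h
    rw [sum_range_succ, range_eq_Ico, Finset.sum_eq_sum_Ico_succ_bot (by omega : 0 < k)]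
  have hbound : ∀ h : ℕ → ℕ, 2 * ∑ i ∈ Ico 1 k, h i ≤ ∑ i ∈ Ico 1 k, h i * 2 ^ (k - i) := by
    intro h
    rw [mul_sum]
    refine sum_le_sum fun i hi => ?_
    rw [mem_Ico] at hi
    have h2 : 2 ^ 1 ≤ 2 ^ (k - i) := Nat.pow_le_pow_right (by norm_num) (by omega)
    calc 2 * h i = h i * 2 ^ 1 := by ring
    _ ≤ h i * 2 ^ (k - i) := Nat.mul_le_mul_left _ h2
  have claim : 2 ^ k ≤ ∑ i ∈ range (k + 1), g i * 2 ^ (k - i)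
      ∨ 2 ^ k ≤ ∑ i ∈ range (k + 1), g' i * 2 ^ (k - i) := by
    by_contra hcon
    push_neg at hcon
    obtain ⟨hA, hB⟩ := hcon
    have eA := hdec (fun i => g i * 2 ^ (k - i))
    have eB := hdec (fun i => g' i * 2 ^ (k - i))
    have eT := hdec g
    have bA := hbound g
    have bB := hbound g'
    simp only [Nat.sub_self, pow_zero, mul_one, Nat.sub_zero] at eA eB
    have hsum' := hsum
    rw [hT, hTsplit, hBsum, eT] at hsum'
    omega
  rcases claim with hA | hB
  · have hs := path_solvable (G := SimpleGraph.cycleGraph (2 * k)) k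
      (fun i => ((i : ℕ) : Fin (2 * k)))
      (fun i hi => by
        have : ((i + 1 : ℕ) : Fin (2 * k)) = ((i : ℕ) : Fin (2 * k)) + 1 := by push_cast; ring
        simp only [this]
        exact cyc_adj_succ (by omega) _)
      (fun i hi j hj hij => by
        have := congrArg Fin.val hij
        rwa [Fin.val_cast_of_lt (by omega), Fin.val_cast_of_lt (by omega)] at this)
      C hA
    simpa using hs
  · have hs := path_solvable (G := SimpleGraph.cycleGraph (2 * k)) k
      (fun i => -((i : ℕ) : Fin (2 * k)))
      (fun i hi => by
        have : -((i + 1 : ℕ) : Fin (2 * k)) = -((i : ℕ) : Fin (2 * k)) - 1 := by push_cast; ring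
        simp only [this]
        exact cyc_adj_pred (by omega) _)
      (fun i hi j hj hij => by
        rw [neg_inj] at hij
        have := congrArg Fin.val hij
        rwa [Fin.val_cast_of_lt (by omega), Fin.val_cast_of_lt (by omega)] at this)
      C hB
    simpa using hs

/-- distance-to-0 based weight on the cycle -/
def wt (k : ℕ) (v : Fin (2 * k)) : ℕ := 2 ^ (k - min v.val (2 * k - v.val))

lemma adj_val {n : ℕ} {u v : Fin n} (h : (SimpleGraph.cycleGraph n).Adj u v) :
    (u.val = v.val + 1 ∨ v.val = u.val + 1 ∨ (u.val = 0 ∧ v.val = n - 1)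
      ∨ (v.val = 0 ∧ u.val = n - 1)) := by
  have hn : 0 < n := u.pos
  have hu := u.isLt
  have hv := v.isLt
  have hne : u.val ≠ v.val := fun hh => (SimpleGraph.cycleGraph n).loopless.irrefl u (by
    rwa [show v = u from Fin.ext hh.symm] at h)
  rw [SimpleGraph.cycleGraph_adj'] at h
  have hsub : ∀ a b : Fin n, (a - b).val = (n - b.val + a.val) % n := fun a b => by
    rw [Fin.sub_def]
  rcases h with h | h
  · rw [hsub] at h
    set d := n - v.val + u.val with hd
    have hdn : d < 2 * n := by omega
    rcases Nat.lt_or_ge d n with hc | hc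
    · rw [Nat.mod_eq_of_lt hc] at h; omega
    · rw [Nat.mod_eq_sub_mod hc, Nat.mod_eq_of_lt (by omega)] at h; omega
  · rw [hsub] at h
    set d := n - u.val + v.val with hd
    have hdn : d < 2 * n := by omega
    rcases Nat.lt_or_ge d n with hc | hc
    · rw [Nat.mod_eq_of_lt hc] at h; omega
    · rw [Nat.mod_eq_sub_mod hc, Nat.mod_eq_of_lt (by omega)] at h; omega

lemma wt_adj {k : ℕ} (hk : 1 ≤ k) {u v : Fin (2 * k)}
    (h : (SimpleGraph.cycleGraph (2 * k)).Adj u v) : wt k v ≤ 2 * wt k u := by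
  have hu := u.isLt
  have hv := v.isLt
  have l1 := min_le_left u.val (2 * k - u.val)
  have l2 := min_le_right u.val (2 * k - u.val)
  have l3 := min_le_left v.val (2 * k - v.val)
  have l4 := min_le_right v.val (2 * k - v.val)
  have : k - min v.val (2 * k - v.val) ≤ (k - min u.val (2 * k - u.val)) + 1 := by
    rcases adj_val h with h1 | h1 | h1 | h1 <;>
      rcases min_choice u.val (2 * k - u.val) with h2 | h2 <;>
      rcases min_choice v.val (2 * k - v.val) with h3 | h3 <;> omega
  calc wt k v = 2 ^ (k - min v.val (2 * k - v.val)) := rfl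
    _ ≤ 2 ^ ((k - min u.val (2 * k - u.val)) + 1) := Nat.pow_le_pow_right (by norm_num) this
    _ = 2 * wt k u := by rw [pow_succ, wt]; ring

lemma wt_mono {k : ℕ} (hk : 1 ≤ k) {C C' : Fin (2 * k) → ℕ}
    (h : PebblingMove (SimpleGraph.cycleGraph (2 * k)) C C') :
    ∑ x, C' x * wt k x ≤ ∑ x, C x * wt k x := by
  obtain ⟨u, v, huv, hu2, rfl⟩ := h
  have hne : u ≠ v := huv.ne
  have hvmem : v ∈ (univ : Finset (Fin (2 * k))).erase u := by
    simp [hne.symm]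
  have split : ∀ F : Fin (2 * k) → ℕ, ∑ x, F x
      = F u + (F v + ∑ x ∈ (univ.erase u).erase v, F x) := by
    intro F
    rw [← Finset.add_sum_erase _ _ (mem_univ u), ← Finset.add_sum_erase _ _ hvmem]
  rw [split, split (fun x => C x * wt k x)]
  have hrest : ∑ x ∈ (univ.erase u).erase v,
      (if x = u then C u - 2 else if x = v then C v + 1 else C x) * wt k x
      = ∑ x ∈ (univ.erase u).erase v, C x * wt k x := by
    refine sum_congr rfl fun x hx => ?_
    rw [mem_erase, mem_erase] at hx
    simp [hx.1, hx.2.1]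
  rw [hrest]
  beta_reduce
  rw [if_pos rfl, if_neg hne.symm, if_pos rfl]
  have hwa := wt_adj hk huv
  have e1 : (C u - 2) * wt k u + 2 * wt k u = C u * wt k u := by
    rw [← Nat.add_mul]
    congr 1
    omega
  have e2 : (C v + 1) * wt k v = C v * wt k v + wt k v := by ring
  omega

lemma unsolvable_lower (k : ℕ) (hk : 1 ≤ k) [NeZero (2 * k)] (t : ℕ) (ht : t < 2 ^ k) :
    ¬ PebblingSolvable (SimpleGraph.cycleGraph (2 * k)) 0
      (fun v => if v = ((k : ℕ) : Fin (2 * k)) then t else 0) := by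
  rintro ⟨C', hsteps, hr⟩
  -- weight is monotone along the chain
  have hmono : ∑ x, C' x * wt k x ≤ ∑ x, (if x = ((k : ℕ) : Fin (2 * k)) then t else 0) * wt k x := by
    clear hr
    induction hsteps with
    | refl => exact le_refl _
    | tail hab hbc ih => exact le_trans (wt_mono hk hbc) ih
  have hinit : ∑ x, (if x = ((k : ℕ) : Fin (2 * k)) then t else 0) * wt k x = t := by
    rw [Finset.sum_eq_single ((k : ℕ) : Fin (2 * k))]
    · have hvk : (((k : ℕ) : Fin (2 * k))).val = k := Fin.val_cast_of_lt (by omega)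
      have h2k : 2 * k - k = k := by omega
      simp [wt, hvk, h2k, min_self]
    · intro b _ hb; simp [hb]
    · simp
  have hw0 : wt k 0 = 2 ^ k := by simp [wt]
  have hfinal : 2 ^ k ≤ ∑ x, C' x * wt k x := by
    calc 2 ^ k = 1 * wt k 0 := by rw [hw0, one_mul]
    _ ≤ C' 0 * wt k 0 := Nat.mul_le_mul_right _ hr
    _ ≤ ∑ x, C' x * wt k x :=
      Finset.single_le_sum (f := fun x : Fin (2 * k) => C' x * wt k x)
        (fun x _ => Nat.zero_le _) (mem_univ (0 : Fin (2 * k)))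
  omega

lemma solvable_comp (σ : V ≃ V)
    (hσ : ∀ u v, G.Adj u v → G.Adj (σ.symm u) (σ.symm v)) (r : V) (C : V → ℕ)
    (h : PebblingSolvable G r C) : PebblingSolvable G (σ.symm r) (C ∘ σ) := by
  obtain ⟨C', hC', hr⟩ := h
  refine ⟨C' ∘ σ, ?_, by simpa using hr⟩
  refine Relation.ReflTransGen.lift (· ∘ σ) ?_ _ _ hC'
  rintro A B ⟨u, v, huv, hu, rfl⟩
  refine ⟨σ.symm u, σ.symm v, hσ u v huv, by simpa using hu, ?_⟩
  funext w
  by_cases h1 : σ w = u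
  · have : w = σ.symm u := by simp [← h1]
    simp [Function.comp, h1, this]
  · have h1' : w ≠ σ.symm u := fun hh => h1 (by simp [hh])
    by_cases h2 : σ w = v
    · have : w = σ.symm v := by simp [← h2]
      simp [Function.comp, h1, h1', h2, this]
    · have h2' : w ≠ σ.symm v := fun hh => h2 (by simp [hh])
      simp [Function.comp, h1, h1', h2, h2']


lemma solvable_any (k : ℕ) (hk : 1 ≤ k) [NeZero (2 * k)] (r : Fin (2 * k))
    (C : Fin (2 * k) → ℕ) (hsum : 2 ^ k ≤ ∑ v, C v) :
    PebblingSolvable (SimpleGraph.cycleGraph (2 * k)) r C := by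
  set σ : Fin (2 * k) ≃ Fin (2 * k) := Equiv.subRight r with hσdef
  have hσ : ∀ u v, (SimpleGraph.cycleGraph (2 * k)).Adj u v →
      (SimpleGraph.cycleGraph (2 * k)).Adj (σ.symm u) (σ.symm v) := by
    intro u v huv
    rw [SimpleGraph.cycleGraph_adj'] at huv ⊢
    have e1 : σ.symm u - σ.symm v = u - v := by simp [hσdef]
    have e2 : σ.symm v - σ.symm u = v - u := by simp [hσdef]
    rw [e1, e2]
    exact huv
  set D : Fin (2 * k) → ℕ := fun x => C (x + r) with hDdef
  have hDsum : ∑ v, D v = ∑ v, C v := Equiv.sum_comp (Equiv.addRight r) C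
  have hD : PebblingSolvable (SimpleGraph.cycleGraph (2 * k)) 0 D :=
    cycle_solvable k hk D (by rw [hDsum]; exact hsum)
  have := solvable_comp σ hσ 0 D hD
  have hr0 : σ.symm 0 = r := by simp [hσdef]
  have hDC : D ∘ σ = C := by
    funext x
    simp [hDdef, hσdef]
  rwa [hr0, hDC] at this

end PebAux

/-- For every `k ≥ 1`, the pebbling number of the even cycle `C_{2k}` is `2^k`. -/
theorem pebblingNumber_even_cycle (k : ℕ) (hk : 1 ≤ k) :
    pebblingNumber (SimpleGraph.cycleGraph (2 * k)) = 2 ^ k := by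
  haveI : NeZero (2 * k) := ⟨by omega⟩
  unfold pebblingNumber
  apply le_antisymm
  · apply Finset.sup_le
    intro r _
    exact Nat.sInf_le fun C hC => PebAux.solvable_any k hk r C (le_of_eq hC.symm)
  · have h0 : 2 ^ k ≤ rootedPebblingNumber (SimpleGraph.cycleGraph (2 * k)) 0 := by
      apply le_csInf
      · exact ⟨2 ^ k, fun C hC => PebAux.solvable_any k hk 0 C (le_of_eq hC.symm)⟩
      · intro t ht
        by_contra hlt
        push_neg at hlt
        open Fin.NatCast in
        have hB : ∑ v, (fun v => if v = ((k : ℕ) : Fin (2 * k)) then t else 0) v = t := by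
          simp [Finset.sum_ite_eq']
        exact PebAux.unsolvable_lower k hk t hlt (ht _ hB)
    exact le_trans h0 (Finset.le_sup (Finset.mem_univ 0))
end

section
/- For every integer k ≥ 1, the pebbling number of the odd cycle on 2k+1 vertices satisfies π(C_{2k+1}) = 2·⌊2^{k+1}/3⌋ + 1. -/
set_option linter.unusedSectionVars false
set_option linter.unusedVariables false

section Mono

variable {V : Type*} [DecidableEq V] {G : SimpleGraph V}

lemma pebblingMove_mono {C D C₂ : V → ℕ} (h : PebblingMove G C D) (hle : ∀ x, C x ≤ C₂ x) :
    ∃ D₂, PebblingMove G C₂ D₂ ∧ ∀ x, D x ≤ D₂ x := by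
  obtain ⟨u, v, hadj, h2, rfl⟩ := h
  refine ⟨_, ⟨u, v, hadj, le_trans h2 (hle u), rfl⟩, ?_⟩
  intro x
  have h1 := hle u; have h2' := hle v; have h3 := hle x
  dsimp only
  split_ifs <;> omega

lemma pebblingRTG_mono {C D C₂ : V → ℕ}
    (h : Relation.ReflTransGen (PebblingMove G) C D) (hle : ∀ x, C x ≤ C₂ x) :
    ∃ D₂, Relation.ReflTransGen (PebblingMove G) C₂ D₂ ∧ ∀ x, D x ≤ D₂ x := by
  induction h with
  | refl => exact ⟨C₂, Relation.ReflTransGen.refl, hle⟩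
  | tail _ hstep ih =>
      obtain ⟨E, hE, hEle⟩ := ih
      obtain ⟨D₂, hD₂, hD₂le⟩ := pebblingMove_mono hstep hEle
      exact ⟨D₂, hE.tail hD₂, hD₂le⟩

lemma pebblingSolvable_mono {r : V} {C C₂ : V → ℕ} (hle : ∀ x, C x ≤ C₂ x)
    (h : PebblingSolvable G r C) : PebblingSolvable G r C₂ := by
  obtain ⟨C', hC', hr⟩ := h
  obtain ⟨D₂, hD₂, hD₂le⟩ := pebblingRTG_mono hC' hle
  exact ⟨D₂, hD₂, le_trans hr (hD₂le r)⟩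

lemma path_weight_solvable (G : SimpleGraph V) (r : V) (m : ℕ) (p : ℕ → V) (w : ℕ → ℕ)
    (hp0 : 0 < m → G.Adj r (p 0))
    (hpadj : ∀ i, i + 1 < m → G.Adj (p i) (p (i + 1)))
    (hpr : ∀ i, i < m → p i ≠ r)
    (hpinj : ∀ i j, i < m → j < m → p i = p j → i = j)
    (hw : ∀ i, i + 1 < m → 2 * w (i + 1) ≤ w i) :
    ∀ C : V → ℕ, (∑ i ∈ Finset.range m, w i) < (∑ i ∈ Finset.range m, w i * C (p i)) →
      PebblingSolvable G r C := by
  intro C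
  generalize hN : (∑ i ∈ Finset.range m, C (p i)) = N
  induction N using Nat.strong_induction_on generalizing C with
  | _ N ih =>
  intro hbig
  by_cases hex : ∃ i, i < m ∧ 2 ≤ C (p i)
  · obtain ⟨i, him, hi2⟩ := hex
    rcases Nat.eq_zero_or_pos i with rfl | hipos
    · refine ⟨fun x => if x = p 0 then C (p 0) - 2 else if x = r then C r + 1 else C x,
        Relation.ReflTransGen.single ⟨p 0, r, (hp0 him).symm, hi2, rfl⟩, ?_⟩
      dsimp only
      rw [if_neg (Ne.symm (hpr 0 him)), if_pos rfl]
      omega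
    · have hi1m : i - 1 < m := by omega
      have hisucc : i - 1 + 1 = i := by omega
      have hii : ¬ (i = i - 1) := by omega
      set C' : V → ℕ := fun x => if x = p i then C (p i) - 2
        else if x = p (i - 1) then C (p (i - 1)) + 1 else C x with hC'def
      have hmove : PebblingMove G C C' :=
        ⟨p i, p (i - 1), by rw [← hisucc]; exact (hpadj (i-1) (by omega)).symm, hi2, rfl⟩
      have keyfun : ∀ j, j < m →
          (C' (p j) + (if j = i then 2 else 0) = C (p j) + (if j = i - 1 then 1 else 0)) := by
        intro j hj
        simp only [hC'def]
        rcases eq_or_ne j i with rfl | h1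
        · rw [if_pos rfl, if_pos rfl, if_neg hii]; omega
        · have hp1 : p j ≠ p i := fun h => h1 (hpinj j i hj him h)
          rcases eq_or_ne j (i - 1) with rfl | h2
          · rw [if_neg hp1, if_pos rfl, if_neg h1, if_pos rfl]
          · have hp2 : p j ≠ p (i - 1) := fun h => h2 (hpinj j (i-1) hj hi1m h)
            rw [if_neg hp1, if_neg hp2, if_neg h1, if_neg h2]
      have keyw : ∀ j ∈ Finset.range m,
          (w j * C' (p j) + (if j = i then 2 * w i else 0)
            = w j * C (p j) + (if j = i - 1 then w (i-1) else 0)) := by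
        intro j hj
        rw [Finset.mem_range] at hj
        have hkf := keyfun j hj
        rcases eq_or_ne j i with rfl | h1
        · rw [if_pos rfl, if_neg hii] at hkf ⊢
          rw [show C (p j) = C' (p j) + 2 by omega]; ring
        · rcases eq_or_ne j (i - 1) with rfl | h2
          · rw [if_neg h1, if_pos rfl] at hkf ⊢
            rw [show C' (p (i-1)) = C (p (i-1)) + 1 by omega]; ring
          · rw [if_neg h1, if_neg h2] at hkf ⊢
            rw [show C' (p j) = C (p j) by omega]
      have hsums : (∑ j ∈ Finset.range m, w j * C' (p j)) + 2 * w i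
          = (∑ j ∈ Finset.range m, w j * C (p j)) + w (i-1) := by
        have h1 := Finset.sum_congr rfl keyw
        rw [Finset.sum_add_distrib, Finset.sum_add_distrib,
          Finset.sum_ite_eq' (Finset.range m) i, Finset.sum_ite_eq' (Finset.range m) (i-1)] at h1
        simpa [Finset.mem_range, him, hi1m] using h1
      have hcount : (∑ j ∈ Finset.range m, C' (p j)) + 2
          = (∑ j ∈ Finset.range m, C (p j)) + 1 := by
        have h1 := Finset.sum_congr rfl (fun j hj => keyfun j (Finset.mem_range.mp hj))
        rw [Finset.sum_add_distrib, Finset.sum_add_distrib,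
          Finset.sum_ite_eq' (Finset.range m) i, Finset.sum_ite_eq' (Finset.range m) (i-1)] at h1
        simpa [Finset.mem_range, him, hi1m] using h1
      have hwi : 2 * w i ≤ w (i - 1) := by
        have := hw (i-1) (by omega); rwa [hisucc] at this
      have hbig' : (∑ j ∈ Finset.range m, w j) < ∑ j ∈ Finset.range m, w j * C' (p j) := by
        omega
      have hNpos : 1 ≤ N := by
        subst hN
        calc 1 ≤ C (p i) := by omega
        _ ≤ _ := Finset.single_le_sum (f := fun j => C (p j))
            (fun j _ => Nat.zero_le _) (Finset.mem_range.mpr him)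
      obtain ⟨D, hD, hDr⟩ := ih (N - 1) (by omega) C' (by omega) hbig'
      exact ⟨D, hD.head hmove, hDr⟩
  · exfalso
    push_neg at hex
    have : (∑ i ∈ Finset.range m, w i * C (p i)) ≤ ∑ i ∈ Finset.range m, w i := by
      refine Finset.sum_le_sum fun j hj => ?_
      rw [Finset.mem_range] at hj
      calc w j * C (p j) ≤ w j * 1 := Nat.mul_le_mul_left _ (by have := hex j hj; omega)
      _ = w j := Nat.mul_one _
    omega

end Mono

section Lower

variable {V : Type*} [DecidableEq V] {G : SimpleGraph V}

/-- A pebbling move that avoids the vertex `r` entirely. -/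
def RestrictedMove (G : SimpleGraph V) (r : V) (C C' : V → ℕ) : Prop :=
  ∃ u v : V, G.Adj u v ∧ u ≠ r ∧ v ≠ r ∧ 2 ≤ C u ∧
    C' = fun w => if w = u then C u - 2 else if w = v then C v + 1 else C w

lemma cut_lemma {r : V} {C D : V → ℕ}
    (h : Relation.ReflTransGen (PebblingMove G) C D) (h0 : C r = 0) (hD : 1 ≤ D r) :
    ∃ C', Relation.ReflTransGen (RestrictedMove G r) C C' ∧ ∃ u, G.Adj u r ∧ 2 ≤ C' u := by
  induction h using Relation.ReflTransGen.head_induction_on with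
  | refl => omega
  | head hstep _ ih =>
      rename_i a c _
      obtain ⟨u, v, hadj, h2, rfl⟩ := hstep
      have hur : u ≠ r := by intro h; rw [h] at h2; omega
      by_cases hvr : v = r
      · subst hvr
        exact ⟨a, Relation.ReflTransGen.refl, u, hadj, h2⟩
      · have hc : (fun w => if w = u then a u - 2 else if w = v then a v + 1 else a w) r = 0 := by
          dsimp only
          rw [if_neg (show ¬ r = u from fun h => hur h.symm),
            if_neg (show ¬ r = v from fun h => hvr h.symm)]
          exact h0
        obtain ⟨C', hC', hu⟩ := ih hc
        exact ⟨C', hC'.head ⟨u, v, hadj, hur, hvr, h2, rfl⟩, hu⟩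

variable [Fintype V]

lemma potential_mono {r : V} {ω : V → ℕ}
    (hω : ∀ u v, G.Adj u v → u ≠ r → v ≠ r → ω v ≤ 2 * ω u) {C D : V → ℕ}
    (h : Relation.ReflTransGen (RestrictedMove G r) C D) :
    (∑ x, ω x * D x) ≤ ∑ x, ω x * C x := by
  induction h with
  | refl => exact le_refl _
  | tail _ hstep ih =>
      refine le_trans ?_ ih
      rename_i b c _
      obtain ⟨u, v, hadj, hur, hvr, h2, rfl⟩ := hstep
      have huv : u ≠ v := hadj.ne
      have key : ∀ x : V, ω x * (if x = u then b u - 2 else if x = v then b v + 1 else b x)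
          + (if x = u then 2 * ω u else 0) = ω x * b x + (if x = v then ω v else 0) := by
        intro x
        split_ifs with h1 h2 h2
        · exact absurd (h1.symm.trans h2) huv
        · subst h1
          have hb : b x - 2 + 2 = b x := by omega
          rw [add_zero, show ω x * (b x - 2) + 2 * ω x = ω x * (b x - 2 + 2) from by ring, hb]
        · subst h2; rw [add_zero]; ring
        · rfl
      show (∑ x, ω x * (if x = u then b u - 2 else if x = v then b v + 1 else b x))
          ≤ ∑ x, ω x * b x
      have hsum := Finset.sum_congr rfl (fun x (_ : x ∈ Finset.univ) => key x)
      rw [Finset.sum_add_distrib, Finset.sum_add_distrib,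
        Finset.sum_ite_eq' Finset.univ u, Finset.sum_ite_eq' Finset.univ v] at hsum
      simp only [Finset.mem_univ, if_true] at hsum
      have := hω u v hadj hur hvr
      omega

lemma potential_lower {ω : V → ℕ} (C : V → ℕ) (u : V) (h2 : 2 ≤ C u) :
    2 * ω u ≤ ∑ x, ω x * C x := by
  calc 2 * ω u ≤ ω u * C u := by nlinarith
  _ ≤ _ := Finset.single_le_sum (f := fun x => ω x * C x)
      (fun x _ => Nat.zero_le _) (Finset.mem_univ u)

end Lower

section CycleAdj

lemma nat_mod_eq_one {n d : ℕ} (hn : 2 ≤ n) (h2 : 2 ≤ d) (hlt : d < 2 * n) (h : d % n = 1) :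
    d = n + 1 := by
  rcases lt_or_ge d n with hd | hd
  · rw [Nat.mod_eq_of_lt hd] at h; omega
  · rw [Nat.mod_eq_sub_mod hd, Nat.mod_eq_of_lt (by omega)] at h; omega

variable {k : ℕ}

lemma cyc_adj_succ (hk : 1 ≤ k) {x : ℕ} (h : x + 1 < 2 * k + 1) :
    (SimpleGraph.cycleGraph (2 * k + 1)).Adj ⟨x, by omega⟩ ⟨x + 1, h⟩ := by
  rw [SimpleGraph.cycleGraph_adj']
  right
  rw [Fin.sub_def]
  simp only
  have h1 : 2 * k + 1 - x + (x + 1) = (2 * k + 1) + 1 := by omega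
  rw [h1, Nat.add_mod_left, Nat.mod_eq_of_lt (by omega)]

lemma cyc_adj_wrap (hk : 1 ≤ k) :
    (SimpleGraph.cycleGraph (2 * k + 1)).Adj ⟨2 * k, by omega⟩ ⟨0, by omega⟩ := by
  rw [SimpleGraph.cycleGraph_adj']
  right
  rw [Fin.sub_def]
  simp only
  rw [show 2 * k + 1 - 2 * k + 0 = 1 by omega, Nat.mod_eq_of_lt (by omega)]

lemma cyc_adj_zero (hk : 1 ≤ k) {u : Fin (2 * k + 1)}
    (h : (SimpleGraph.cycleGraph (2 * k + 1)).Adj u ⟨0, by omega⟩) :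
    u.val = 1 ∨ u.val = 2 * k := by
  rw [SimpleGraph.cycleGraph_adj'] at h
  have hu := u.isLt
  rcases h with h | h
  · rw [Fin.sub_def] at h
    simp only at h
    left
    rw [show 2 * k + 1 - 0 + u.val = (2 * k + 1) + u.val by omega, Nat.add_mod_left,
      Nat.mod_eq_of_lt hu] at h
    exact h
  · rw [Fin.sub_def] at h
    simp only at h
    right
    rcases Nat.eq_zero_or_pos u.val with h0 | h0
    · rw [h0] at h
      rw [show 2 * k + 1 - 0 + 0 = 2 * k + 1 by omega, Nat.mod_self] at h
      omega
    · rw [Nat.mod_eq_of_lt (by omega)] at h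
      omega

lemma cyc_adj_vals (hk : 1 ≤ k) {u v : Fin (2 * k + 1)}
    (h : (SimpleGraph.cycleGraph (2 * k + 1)).Adj u v)
    (hu : u.val ≠ 0) (hv : v.val ≠ 0) :
    u.val + 1 = v.val ∨ v.val + 1 = u.val := by
  rw [SimpleGraph.cycleGraph_adj'] at h
  have hu' := u.isLt
  have hv' := v.isLt
  rcases h with h | h
  · right
    rw [Fin.sub_def] at h
    simp only at h
    have := nat_mod_eq_one (by omega) (by omega) (by omega) h
    omega
  · left
    rw [Fin.sub_def] at h
    simp only at h
    have := nat_mod_eq_one (by omega) (by omega) (by omega) h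
    omega

end CycleAdj

section Upper

lemma geom_two (n : ℕ) : ∑ i ∈ Finset.range n, 2 ^ i = 2 ^ n - 1 := by
  induction n with
  | zero => simp
  | succ n ih => rw [Finset.sum_range_succ, ih]; have := Nat.one_le_two_pow (n := n); omega

variable {k : ℕ}

/-- The weight function used for both arc strategies. -/
def cycW (k : ℕ) : ℕ → ℕ := fun j => if j ≤ k then 2 ^ (k - j) else 0

lemma cycW_sum (hk : 1 ≤ k) : ∑ j ∈ Finset.range (2 * k), cycW k j = 2 ^ (k + 1) - 1 := by
  have h1 : ∑ j ∈ Finset.range (k + 1), cycW k j = ∑ j ∈ Finset.range (2 * k), cycW k j := by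
    apply Finset.sum_subset
    · intro x hx; rw [Finset.mem_range] at *; omega
    · intro x _ hx
      rw [Finset.mem_range] at hx
      simp only [cycW, if_neg (by omega : ¬ x ≤ k)]
  rw [← h1]
  have h2 : ∀ j ∈ Finset.range (k + 1), cycW k j = 2 ^ (k - j) := by
    intro j hj; rw [Finset.mem_range] at hj
    simp only [cycW, if_pos (by omega : j ≤ k)]
  rw [Finset.sum_congr rfl h2]
  have h3 := Finset.sum_range_reflect (fun j => (2:ℕ) ^ j) (k + 1)
  simp only [show ∀ j, k + 1 - 1 - j = k - j from fun j => by omega] at h3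
  rw [h3, geom_two]

lemma cycW_halving (hk : 1 ≤ k) : ∀ i, i + 1 < 2 * k → 2 * cycW k (i + 1) ≤ cycW k i := by
  intro i _
  simp only [cycW]
  by_cases h1 : i + 1 ≤ k
  · rw [if_pos h1, if_pos (by omega)]
    rw [← pow_succ']
    apply Nat.pow_le_pow_right (by norm_num)
    omega
  · rw [if_neg h1]
    simp

lemma cycW_cover (hk : 1 ≤ k) : ∀ j, j < 2 * k → 3 ≤ cycW k j + cycW k (2 * k - 1 - j) := by
  intro j hj
  simp only [cycW]
  rcases lt_trichotomy j k with h | h | h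
  · rcases eq_or_ne j (k - 1) with rfl | h2
    · rw [if_pos (by omega), if_pos (by omega)]
      have e1 : k - (k - 1) = 1 := by omega
      have e2 : k - (2 * k - 1 - (k - 1)) = 0 := by omega
      rw [e1, e2]; norm_num
    · have h4 : 2 ≤ k - j := by omega
      rw [if_pos (by omega)]
      have : 4 ≤ 2 ^ (k - j) :=
        le_trans (by norm_num) (Nat.pow_le_pow_right (by norm_num) h4)
      omega
  · subst h
    rw [if_pos le_rfl, if_pos (by omega)]
    have e1 : j - j = 0 := by omega
    have e2 : j - (2 * j - 1 - j) = 1 := by omega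
    rw [e1, e2]; norm_num
  · have h1 : ¬ j ≤ k := by omega
    have h4 : 2 ≤ k - (2 * k - 1 - j) := by omega
    rw [if_neg h1, if_pos (by omega)]
    have : 4 ≤ 2 ^ (k - (2 * k - 1 - j)) :=
      le_trans (by norm_num) (Nat.pow_le_pow_right (by norm_num) h4)
    omega

lemma cycle_upper (hk : 1 ≤ k) (C : Fin (2 * k + 1) → ℕ)
    (hsum : (∑ v, C v) = 2 * (2 ^ (k + 1) / 3) + 1) :
    PebblingSolvable (SimpleGraph.cycleGraph (2 * k + 1)) ⟨0, by omega⟩ C := by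
  by_cases hC0 : 1 ≤ C ⟨0, by omega⟩
  · exact ⟨C, Relation.ReflTransGen.refl, hC0⟩
  by_contra hns
  push_neg at hC0
  have hC00 : C ⟨0, by omega⟩ = 0 := by omega
  set p : ℕ → Fin (2 * k + 1) := fun j => ⟨(j + 1) % (2 * k + 1), Nat.mod_lt _ (by omega)⟩ with hp
  set q : ℕ → Fin (2 * k + 1) := fun j => ⟨2 * k - j, by omega⟩ with hq
  have hpval : ∀ j, ∀ hj : j + 1 < 2 * k + 1, p j = ⟨j + 1, hj⟩ := fun j hj =>
    Fin.ext (show (j + 1) % (2 * k + 1) = j + 1 from Nat.mod_eq_of_lt hj)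
  have hAle : ∑ j ∈ Finset.range (2 * k), cycW k j * C (p j)
      ≤ ∑ j ∈ Finset.range (2 * k), cycW k j := by
    by_contra hbig
    push_neg at hbig
    refine hns (path_weight_solvable _ _ (2 * k) p (cycW k) ?_ ?_ ?_ ?_ (cycW_halving hk) C hbig)
    · intro h0
      rw [hpval 0 (by omega)]
      exact cyc_adj_succ hk (x := 0) (by omega)
    · intro i hi
      rw [hpval i (by omega), hpval (i + 1) (by omega)]
      exact cyc_adj_succ hk (by omega)
    · intro i hi
      rw [hpval i (by omega)]
      intro hcon
      simp only [Fin.mk.injEq] at hcon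
      omega
    · intro i j hi hj hij
      rw [hpval i (by omega), hpval j (by omega)] at hij
      simp only [Fin.mk.injEq] at hij
      omega
  have hBle : ∑ j ∈ Finset.range (2 * k), cycW k j * C (q j)
      ≤ ∑ j ∈ Finset.range (2 * k), cycW k j := by
    by_contra hbig
    push_neg at hbig
    refine hns (path_weight_solvable _ _ (2 * k) q (cycW k) ?_ ?_ ?_ ?_ (cycW_halving hk) C hbig)
    · intro h0
      have hq0 : q 0 = ⟨2 * k, by omega⟩ := Fin.ext (show 2 * k - 0 = 2 * k by omega)
      rw [hq0]
      exact (cyc_adj_wrap hk).symm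
    · intro i hi
      have e1 : q (i + 1) = ⟨2 * k - i - 1, by omega⟩ :=
        Fin.ext (show 2 * k - (i + 1) = 2 * k - i - 1 by omega)
      have e2 : q i = ⟨(2 * k - i - 1) + 1, by omega⟩ :=
        Fin.ext (show 2 * k - i = (2 * k - i - 1) + 1 by omega)
      rw [e1, e2]
      exact (cyc_adj_succ hk (by omega)).symm
    · intro i hi hcon
      have : 2 * k - i = 0 := congrArg Fin.val hcon
      omega
    · intro i j hi hj hij
      have : 2 * k - i = 2 * k - j := congrArg Fin.val hij
      omega
  have hqp : ∀ j, j < 2 * k → q (2 * k - 1 - j) = p j := by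
    intro j hj
    rw [hpval j (by omega)]
    exact Fin.ext (show 2 * k - (2 * k - 1 - j) = j + 1 by omega)
  have hBrefl : ∑ j ∈ Finset.range (2 * k), cycW k (2 * k - 1 - j) * C (p j)
      = ∑ j ∈ Finset.range (2 * k), cycW k j * C (q j) := by
    rw [← Finset.sum_range_reflect (fun j => cycW k j * C (q j)) (2 * k)]
    refine Finset.sum_congr rfl fun j hj => ?_
    rw [Finset.mem_range] at hj
    rw [hqp j hj]
  have hT : ∑ j ∈ Finset.range (2 * k), C (p j) = 2 * (2 ^ (k + 1) / 3) + 1 := by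
    have h1 : ∑ v : Fin (2 * k + 1), C v
        = ∑ j ∈ Finset.range (2 * k + 1), C ⟨j % (2 * k + 1), Nat.mod_lt _ (by omega)⟩ := by
      rw [← Fin.sum_univ_eq_sum_range (fun j => C ⟨j % (2 * k + 1), Nat.mod_lt _ (by omega)⟩)
        (2 * k + 1)]
      refine Finset.sum_congr rfl fun x _ => ?_
      congr 1
      exact (Fin.ext (Nat.mod_eq_of_lt x.isLt)).symm
    rw [Finset.sum_range_succ'] at h1
    have h2 : C ⟨0 % (2 * k + 1), Nat.mod_lt _ (by omega)⟩ = C ⟨0, by omega⟩ :=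
      congrArg C (Fin.ext (Nat.zero_mod _))
    rw [h2, hC00, add_zero] at h1
    have h3 : ∀ j ∈ Finset.range (2 * k),
        C ⟨(j + 1) % (2 * k + 1), Nat.mod_lt _ (by omega)⟩ = C (p j) := by
      intro j _
      rfl
    rw [Finset.sum_congr rfl h3] at h1
    omega
  have hcomb : 3 * (2 * (2 ^ (k + 1) / 3) + 1) ≤ 2 * (2 ^ (k + 1) - 1) := by
    calc 3 * (2 * (2 ^ (k + 1) / 3) + 1) = ∑ j ∈ Finset.range (2 * k), 3 * C (p j) := by
          rw [← Finset.mul_sum, hT]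
    _ ≤ ∑ j ∈ Finset.range (2 * k), (cycW k j + cycW k (2 * k - 1 - j)) * C (p j) := by
          refine Finset.sum_le_sum fun j hj => ?_
          rw [Finset.mem_range] at hj
          exact Nat.mul_le_mul_right _ (cycW_cover hk j hj)
    _ = (∑ j ∈ Finset.range (2 * k), cycW k j * C (p j))
        + ∑ j ∈ Finset.range (2 * k), cycW k (2 * k - 1 - j) * C (p j) := by
          rw [← Finset.sum_add_distrib]
          refine Finset.sum_congr rfl fun j _ => by ring
    _ ≤ 2 * (2 ^ (k + 1) - 1) := by
          rw [hBrefl]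
          have := cycW_sum hk
          omega
  have hdvd : ¬ (3 ∣ 2 ^ (k + 1)) := by
    intro h
    have := Nat.Prime.dvd_of_dvd_pow (p := 3) (by norm_num) h
    omega
  have hmod := Nat.div_add_mod (2 ^ (k + 1)) 3
  have hmodne : 2 ^ (k + 1) % 3 ≠ 0 := fun h => hdvd (Nat.dvd_of_mod_eq_zero h)
  have hmodlt : 2 ^ (k + 1) % 3 < 3 := Nat.mod_lt _ (by norm_num)
  have hpow : 1 ≤ 2 ^ (k + 1) := Nat.one_le_two_pow
  omega

end Upper

section LowerCycle

variable {k : ℕ}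

/-- The extremal unsolvable configuration: `a` pebbles on each of vertices `k` and `k+1`. -/
def cycConf (k a : ℕ) : Fin (2 * k + 1) → ℕ := fun x =>
  (if x.val = k then a else 0) + (if x.val = k + 1 then a else 0)

lemma cycConf_eq (hk : 1 ≤ k) (a : ℕ) : cycConf k a =
    (fun x => (if x = (⟨k, by omega⟩ : Fin (2 * k + 1)) then a else 0) +
      (if x = (⟨k + 1, by omega⟩ : Fin (2 * k + 1)) then a else 0)) := by
  funext x
  simp only [cycConf]
  have h1 : (x.val = k) = (x = (⟨k, by omega⟩ : Fin (2 * k + 1))) :=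
    propext ⟨fun h => Fin.ext h, fun h => congrArg Fin.val h⟩
  have h2 : (x.val = k + 1) = (x = (⟨k + 1, by omega⟩ : Fin (2 * k + 1))) :=
    propext ⟨fun h => Fin.ext h, fun h => congrArg Fin.val h⟩
  simp only [h1, h2]

lemma cycConf_sum (k a b : ℕ) (hk : 1 ≤ k) :
    (∑ v, ((fun x => (if x = (⟨k, by omega⟩ : Fin (2 * k + 1)) then a else 0) +
      (if x = (⟨k + 1, by omega⟩ : Fin (2 * k + 1)) then b else 0)) : Fin (2 * k + 1) → ℕ) v)
      = a + b := by
  rw [Finset.sum_add_distrib, Finset.sum_ite_eq' Finset.univ, Finset.sum_ite_eq' Finset.univ]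
  simp

lemma cycConf_potential (k a b : ℕ) (hk : 1 ≤ k) (ω : Fin (2 * k + 1) → ℕ) :
    (∑ x, ω x * ((fun x => (if x = (⟨k, by omega⟩ : Fin (2 * k + 1)) then a else 0) +
      (if x = (⟨k + 1, by omega⟩ : Fin (2 * k + 1)) then b else 0)) : Fin (2 * k + 1) → ℕ) x)
      = ω ⟨k, by omega⟩ * a + ω ⟨k + 1, by omega⟩ * b := by
  have key : ∀ x : Fin (2 * k + 1),
      ω x * ((if x = (⟨k, by omega⟩ : Fin (2 * k + 1)) then a else 0) +
        (if x = (⟨k + 1, by omega⟩ : Fin (2 * k + 1)) then b else 0))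
      = (if x = (⟨k, by omega⟩ : Fin (2 * k + 1)) then ω x * a else 0) +
        (if x = (⟨k + 1, by omega⟩ : Fin (2 * k + 1)) then ω x * b else 0) := by
    intro x
    split_ifs <;> ring
  rw [Finset.sum_congr rfl (fun x _ => key x), Finset.sum_add_distrib,
    Finset.sum_ite_eq' Finset.univ, Finset.sum_ite_eq' Finset.univ]
  simp

lemma cycle_lower (hk : 1 ≤ k) :
    ¬ PebblingSolvable (SimpleGraph.cycleGraph (2 * k + 1)) ⟨0, by omega⟩
      (cycConf k (2 ^ (k + 1) / 3)) := by
  rintro ⟨D, hRTG, hD⟩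
  have hdvd : ¬ (3 ∣ 2 ^ (k + 1)) := by
    intro h
    have := Nat.Prime.dvd_of_dvd_pow (p := 3) (by norm_num) h
    norm_num at this
  have hmod := Nat.div_add_mod (2 ^ (k + 1)) 3
  have hmodne : 2 ^ (k + 1) % 3 ≠ 0 := fun h => hdvd (Nat.dvd_of_mod_eq_zero h)
  set a := 2 ^ (k + 1) / 3 with ha
  have h3a : 3 * a < 2 ^ (k + 1) := by omega
  have h01 : (⟨0, by omega⟩ : Fin (2 * k + 1)) ≠ ⟨k, by omega⟩ := fun h => by
    have : (0 : ℕ) = k := congrArg Fin.val h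
    omega
  have h02 : (⟨0, by omega⟩ : Fin (2 * k + 1)) ≠ ⟨k + 1, by omega⟩ := fun h => by
    have : (0 : ℕ) = k + 1 := congrArg Fin.val h
    omega
  have hC0 : cycConf k a ⟨0, by omega⟩ = 0 := by
    rw [cycConf_eq hk]
    dsimp only
    rw [if_neg h01, if_neg h02]
  obtain ⟨C', hC', u, hadj, hu2⟩ := cut_lemma hRTG hC0 hD
  have huval := cyc_adj_zero hk hadj
  rcases huval with h1 | h1
  · -- pebble reached vertex 1 : use left potential 2^(2k - x)
    set ω : Fin (2 * k + 1) → ℕ := fun x => 2 ^ (2 * k - x.val) with hω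
    have hmono : ∀ u v : Fin (2 * k + 1), (SimpleGraph.cycleGraph (2 * k + 1)).Adj u v →
        u ≠ ⟨0, by omega⟩ → v ≠ ⟨0, by omega⟩ → ω v ≤ 2 * ω u := by
      intro u v hadj' hu hv
      have hu0 : u.val ≠ 0 := fun h => hu (Fin.ext h)
      have hv0 : v.val ≠ 0 := fun h => hv (Fin.ext h)
      have hvals := cyc_adj_vals hk hadj' hu0 hv0
      have hult := u.isLt
      have hvlt := v.isLt
      simp only [hω]
      rcases hvals with h | h
      · apply le_trans (Nat.pow_le_pow_right (by norm_num)
          (show 2 * k - v.val ≤ 2 * k - u.val by omega))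
        omega
      · rw [show 2 * k - v.val = (2 * k - u.val) + 1 by omega, pow_succ]
        omega
    have hpot := potential_mono hmono hC'
    have hlow : 2 * ω u ≤ ∑ x, ω x * C' x := potential_lower C' u hu2
    have hωu : ω u = 2 ^ (2 * k - 1) := by
      simp only [hω, h1]
    have hinit := cycConf_potential k a a hk ω
    have hstart : (∑ x, ω x * cycConf k a x) = 2 ^ k * a + 2 ^ (k - 1) * a := by
      rw [cycConf_eq hk, hinit]
      have e1 : ω ⟨k, by omega⟩ = 2 ^ k := by
        simp only [hω]
        congr 1
        omega
      have e2 : ω ⟨k + 1, by omega⟩ = 2 ^ (k - 1) := by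
        simp only [hω]
        congr 1
        omega
      rw [e1, e2]
    -- contradiction: 2^(2k) ≤ 3 * a * 2^(k-1) < 2^(2k)
    have hchain : 2 * 2 ^ (2 * k - 1) ≤ 2 ^ k * a + 2 ^ (k - 1) * a := by
      rw [← hωu, ← hstart]
      exact le_trans hlow hpot
    have e3 : 2 * 2 ^ (2 * k - 1) = 2 ^ (2 * k) := by
      rw [← pow_succ']
      congr 1
      omega
    have e4 : (2 : ℕ) ^ k = 2 * 2 ^ (k - 1) := by
      rw [← pow_succ']
      congr 1
      omega
    have e5 : 2 ^ (k + 1) * 2 ^ (k - 1) = 2 ^ (2 * k) := by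
      rw [← pow_add]
      congr 1
      omega
    have hcontr : 2 ^ k * a + 2 ^ (k - 1) * a < 2 ^ (2 * k) := by
      calc 2 ^ k * a + 2 ^ (k - 1) * a = 3 * a * 2 ^ (k - 1) := by rw [e4]; ring
      _ < 2 ^ (k + 1) * 2 ^ (k - 1) :=
          Nat.mul_lt_mul_of_lt_of_le h3a le_rfl (Nat.pow_pos (by norm_num))
      _ = 2 ^ (2 * k) := e5
    omega
  · -- pebble reached vertex 2k : use right potential 2^(x)
    set ω : Fin (2 * k + 1) → ℕ := fun x => 2 ^ x.val with hω
    have hmono : ∀ u v : Fin (2 * k + 1), (SimpleGraph.cycleGraph (2 * k + 1)).Adj u v →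
        u ≠ ⟨0, by omega⟩ → v ≠ ⟨0, by omega⟩ → ω v ≤ 2 * ω u := by
      intro u v hadj' hu hv
      have hu0 : u.val ≠ 0 := fun h => hu (Fin.ext h)
      have hv0 : v.val ≠ 0 := fun h => hv (Fin.ext h)
      have hvals := cyc_adj_vals hk hadj' hu0 hv0
      simp only [hω]
      rcases hvals with h | h
      · rw [show v.val = u.val + 1 by omega, pow_succ]
        omega
      · apply le_trans (Nat.pow_le_pow_right (by norm_num)
          (show v.val ≤ u.val by omega))
        omega
    have hpot := potential_mono hmono hC'
    have hlow : 2 * ω u ≤ ∑ x, ω x * C' x := potential_lower C' u hu2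
    have hωu : ω u = 2 ^ (2 * k) := by
      simp only [hω, h1]
    have hinit := cycConf_potential k a a hk ω
    have hstart : (∑ x, ω x * cycConf k a x) = 2 ^ k * a + 2 ^ (k + 1) * a := by
      rw [cycConf_eq hk, hinit]
    have hchain : 2 * 2 ^ (2 * k) ≤ 2 ^ k * a + 2 ^ (k + 1) * a := by
      rw [← hωu, ← hstart]
      exact le_trans hlow hpot
    have e4 : (2 : ℕ) ^ (k + 1) = 2 * 2 ^ k := by
      rw [← pow_succ']
    have e5 : 2 ^ (k + 1) * 2 ^ k = 2 * 2 ^ (2 * k) := by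
      rw [← pow_succ', ← pow_add]
      congr 1
      omega
    have hcontr : 2 ^ k * a + 2 ^ (k + 1) * a < 2 * 2 ^ (2 * k) := by
      calc 2 ^ k * a + 2 ^ (k + 1) * a = 3 * a * 2 ^ k := by rw [e4]; ring
      _ < 2 ^ (k + 1) * 2 ^ k :=
          Nat.mul_lt_mul_of_lt_of_le h3a le_rfl (Nat.pow_pos (by norm_num))
      _ = 2 * 2 ^ (2 * k) := e5
    omega

end LowerCycle

section Final

variable {k : ℕ}

lemma rooted_zero (hk : 1 ≤ k) :
    rootedPebblingNumber (SimpleGraph.cycleGraph (2 * k + 1)) ⟨0, by omega⟩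
      = 2 * (2 ^ (k + 1) / 3) + 1 := by
  have hmem : (2 * (2 ^ (k + 1) / 3) + 1) ∈ {t : ℕ | ∀ C : Fin (2 * k + 1) → ℕ,
      (∑ v, C v) = t → PebblingSolvable (SimpleGraph.cycleGraph (2 * k + 1)) ⟨0, by omega⟩ C} :=
    fun C hC => cycle_upper hk C hC
  have hnot : ∀ t, t ≤ 2 * (2 ^ (k + 1) / 3) → t ∉ {t : ℕ | ∀ C : Fin (2 * k + 1) → ℕ,
      (∑ v, C v) = t → PebblingSolvable (SimpleGraph.cycleGraph (2 * k + 1)) ⟨0, by omega⟩ C} := by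
    intro t ht hmemt
    set a := 2 ^ (k + 1) / 3 with ha
    set Ct : Fin (2 * k + 1) → ℕ := fun x =>
      (if x = (⟨k, by omega⟩ : Fin (2 * k + 1)) then min t a else 0) +
      (if x = (⟨k + 1, by omega⟩ : Fin (2 * k + 1)) then t - min t a else 0) with hCt
    have hsum : (∑ v, Ct v) = t := by
      rw [hCt, cycConf_sum k (min t a) (t - min t a) hk]
      have := min_le_left t a
      omega
    have hsolv := hmemt Ct hsum
    have hle : ∀ x, Ct x ≤ cycConf k a x := by
      intro x
      rw [hCt, cycConf_eq hk]
      dsimp only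
      have hmin := min_choice t a
      split_ifs <;> omega
    exact cycle_lower hk (pebblingSolvable_mono hle hsolv)
  rw [rootedPebblingNumber]
  apply le_antisymm (Nat.sInf_le hmem)
  refine le_csInf ⟨_, hmem⟩ fun t htS => ?_
  by_contra hcon
  exact hnot t (by omega) htS

lemma rooted_rot (hk : 1 ≤ k) (r : Fin (2 * k + 1)) :
    rootedPebblingNumber (SimpleGraph.cycleGraph (2 * k + 1)) r
      = 2 * (2 ^ (k + 1) / 3) + 1 := by
  have hzero : (⟨0, by omega⟩ : Fin (2 * k + 1)) = 0 := rfl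
  set e : Fin (2 * k + 1) ≃ Fin (2 * k + 1) := Equiv.addRight r with he
  have hadj : ∀ x y : Fin (2 * k + 1),
      (SimpleGraph.cycleGraph (2 * k + 1)).Adj x y →
      (SimpleGraph.cycleGraph (2 * k + 1)).Adj (e x) (e y) := by
    intro x y h
    rw [SimpleGraph.cycleGraph_adj'] at h ⊢
    have h1 : e x - e y = x - y := by
      simp only [he, Equiv.coe_addRight]
      abel
    have h2 : e y - e x = y - x := by
      simp only [he, Equiv.coe_addRight]
      abel
    rw [h1, h2]
    exact h
  have hadj' : ∀ x y : Fin (2 * k + 1),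
      (SimpleGraph.cycleGraph (2 * k + 1)).Adj x y →
      (SimpleGraph.cycleGraph (2 * k + 1)).Adj (e.symm x) (e.symm y) := by
    intro x y h
    rw [SimpleGraph.cycleGraph_adj'] at h ⊢
    have hx : e.symm x = x - r := by
      rw [Equiv.symm_apply_eq]
      simp only [he, Equiv.coe_addRight]
      abel
    have hy : e.symm y = y - r := by
      rw [Equiv.symm_apply_eq]
      simp only [he, Equiv.coe_addRight]
      abel
    have h1 : e.symm x - e.symm y = x - y := by rw [hx, hy]; abel
    have h2 : e.symm y - e.symm x = y - x := by rw [hx, hy]; abel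
    rw [h1, h2]
    exact h
  have hmove : ∀ (f : Fin (2 * k + 1) ≃ Fin (2 * k + 1)),
      (∀ x y, (SimpleGraph.cycleGraph (2 * k + 1)).Adj x y →
        (SimpleGraph.cycleGraph (2 * k + 1)).Adj (f x) (f y)) →
      ∀ A B, PebblingMove (SimpleGraph.cycleGraph (2 * k + 1)) A B →
        PebblingMove (SimpleGraph.cycleGraph (2 * k + 1))
          (fun x => A (f.symm x)) (fun x => B (f.symm x)) := by
    intro f hf A B hAB
    obtain ⟨u, v, huv, h2, rfl⟩ := hAB
    refine ⟨f u, f v, hf u v huv, by simpa using h2, ?_⟩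
    funext x
    simp only
    have h1 : (f.symm x = u) = (x = f u) := propext (Equiv.symm_apply_eq f)
    have h2' : (f.symm x = v) = (x = f v) := propext (Equiv.symm_apply_eq f)
    simp only [h1, h2', Equiv.symm_apply_apply]
  have hsolv : ∀ (f : Fin (2 * k + 1) ≃ Fin (2 * k + 1)),
      (∀ x y, (SimpleGraph.cycleGraph (2 * k + 1)).Adj x y →
        (SimpleGraph.cycleGraph (2 * k + 1)).Adj (f x) (f y)) →
      ∀ s C, PebblingSolvable (SimpleGraph.cycleGraph (2 * k + 1)) s C →
        PebblingSolvable (SimpleGraph.cycleGraph (2 * k + 1)) (f s) (fun x => C (f.symm x)) := by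
    intro f hf s C ⟨D, hD, hr⟩
    refine ⟨fun x => D (f.symm x),
      Relation.ReflTransGen.lift (fun (g : Fin (2 * k + 1) → ℕ) => fun x => g (f.symm x)) (hmove f hf) _ _ hD, ?_⟩
    simpa using hr
  rw [← rooted_zero hk, hzero]
  rw [rootedPebblingNumber, rootedPebblingNumber]
  congr 1
  ext t
  simp only [Set.mem_setOf_eq]
  constructor
  · intro h C hC
    have hsum : (∑ v, C (e.symm v)) = t := by
      rw [Equiv.sum_comp e.symm C]
      exact hC
    have hs := hsolv e.symm hadj' r (fun x => C (e.symm x)) (h _ hsum)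
    have hre : e.symm r = 0 := by
      rw [Equiv.symm_apply_eq]
      simp only [he, Equiv.coe_addRight]
      exact (zero_add r).symm
    rw [hre] at hs
    convert hs using 1
    funext x
    simp
  · intro h C hC
    have hsum : (∑ v, C (e v)) = t := by
      rw [Equiv.sum_comp e C]
      exact hC
    have hs := hsolv e hadj 0 (fun x => C (e x)) (h _ hsum)
    have hre : e 0 = r := by
      simp only [he, Equiv.coe_addRight]
      exact zero_add r
    rw [hre] at hs
    convert hs using 1
    funext x
    simp

end Final

/-- For every `k ≥ 1`, the pebbling number of the odd cycle `C_{2k+1}` is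
`2 * ⌊2^{k+1} / 3⌋ + 1`. -/
theorem pebblingNumber_odd_cycle (k : ℕ) (hk : 1 ≤ k) :
    pebblingNumber (SimpleGraph.cycleGraph (2 * k + 1)) = 2 * (2 ^ (k + 1) / 3) + 1 := by
  rw [pebblingNumber]
  apply le_antisymm
  · exact Finset.sup_le fun r _ => le_of_eq (rooted_rot hk r)
  · exact le_trans (le_of_eq (rooted_rot hk 0).symm)
      (Finset.le_sup (Finset.mem_univ (0 : Fin (2 * k + 1))))
end

section
/- (Path weight bound) Let P_n be the path v_1 v_2 ⋯ v_n (n ≥ 2) with weight function ω(v_i) = 2^{n−i} for 2 ≤ i ≤ n and ω(v_1) = 0. Then every v_1-unsolvable pebbling configuration C on P_n satisfies ∑_{i=2}^{n} ω(v_i)·C(v_i) ≤ 2^{n−1} − 1, and this bound is attained by the configuration placing exactly one pebble on each of v_2, …, v_n and none on v_1. -/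
/-- The weight function on the path `P_n` with root `v_1`: `ω(v_1) = 0` and
`ω(v_i) = 2^{n-i}` for `2 ≤ i ≤ n` (here `v_i` is the vertex of index `i - 1`). -/
def pathWeight (n : ℕ) : Fin n → ℕ :=
  fun j => if j.val = 0 then 0 else 2 ^ (n - 1 - j.val)

lemma two_pow_sum (m : ℕ) : ∑ j ∈ Finset.range m, 2^j = 2^m - 1 := by
  induction m with
  | zero => simp
  | succ k ih =>
    rw [Finset.sum_range_succ, ih]
    have : 1 ≤ 2^k := Nat.one_le_two_pow
    have : 2^(k+1) = 2 * 2^k := by rw [pow_succ]; ring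
    omega

lemma sum_pathWeight' (m : ℕ) :
    ∑ j : Fin (m+1), (if (j : Fin (m+1)).val = 0 then (0:ℕ) else 2 ^ (m + 1 - 1 - j.val)) = 2^m - 1 := by
  have h1 : ∑ j : Fin (m+1), (if (j : Fin (m+1)).val = 0 then (0:ℕ) else 2 ^ (m + 1 - 1 - j.val))
      = ∑ i ∈ Finset.range (m+1), (if i = 0 then 0 else 2^(m - i)) := by
    rw [← Fin.sum_univ_eq_sum_range (fun i => if i = 0 then (0:ℕ) else 2^(m - i))]
    exact Finset.sum_congr rfl (fun j _ => by simp)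
  rw [h1, ← Finset.sum_range_reflect]
  have h2 : ∀ j ∈ Finset.range (m+1),
      (if (m + 1 - 1 - j) = 0 then (0:ℕ) else 2^(m - (m + 1 - 1 - j)))
        = (if j = m then 0 else 2^j) := by
    intro j hj
    simp only [Finset.mem_range] at hj
    rcases eq_or_ne j m with rfl | hne
    · simp
    · have h3 : m + 1 - 1 - j = m - j := by omega
      rw [h3, if_neg (by omega), if_neg hne]
      congr 1; omega
  rw [Finset.sum_congr rfl h2, Finset.sum_range_succ, if_pos rfl, add_zero]
  rw [Finset.sum_congr rfl (fun j hj => if_neg (by simp only [Finset.mem_range] at hj; omega))]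
  exact two_pow_sum m

lemma sum_pathWeight (m : ℕ) :
    ∑ j : Fin (m+1), pathWeight (m+1) j = 2^m - 1 := by
  simpa [pathWeight] using sum_pathWeight' m

/-- Effect of a pebbling move on a weighted sum, stated without subtraction. -/
lemma move_sum {n : ℕ} (g : Fin n → ℕ) (C : Fin n → ℕ) (u v : Fin n)
    (huv : u ≠ v) (hu : 2 ≤ C u) :
    (∑ w, g w * (if w = u then C u - 2 else if w = v then C v + 1 else C w)) + 2 * g u
      = (∑ w, g w * C w) + g v := by
  have key : ∀ w : Fin n,
      g w * (if w = u then C u - 2 else if w = v then C v + 1 else C w)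
        + (if w = u then 2 * g u else 0)
      = g w * C w + (if w = v then g v else 0) := by
    intro w
    rcases eq_or_ne w u with rfl | hwu
    · rw [if_pos rfl, if_pos rfl, if_neg huv]
      have h2 : C w - 2 + 2 = C w := by omega
      calc g w * (C w - 2) + 2 * g w = g w * (C w - 2 + 2) := by ring
        _ = g w * C w + 0 := by rw [h2, add_zero]
    · rcases eq_or_ne w v with rfl | hwv
      · rw [if_neg hwu, if_pos rfl, if_neg hwu, if_pos rfl]
        ring
      · rw [if_neg hwu, if_neg hwv, if_neg hwu, if_neg hwv]
  have hL : ∑ w : Fin n, (if w = u then 2 * g u else 0) = 2 * g u := by simp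
  have hR : ∑ w : Fin n, (if w = v then g v else 0) = g v := by simp
  calc (∑ w, g w * (if w = u then C u - 2 else if w = v then C v + 1 else C w)) + 2 * g u
      = ∑ w, (g w * (if w = u then C u - 2 else if w = v then C v + 1 else C w)
          + (if w = u then 2 * g u else 0)) := by rw [Finset.sum_add_distrib, hL]
    _ = ∑ w, (g w * C w + (if w = v then g v else 0)) :=
        Finset.sum_congr rfl (fun w _ => key w)
    _ = (∑ w, g w * C w) + g v := by rw [Finset.sum_add_distrib, hR]

lemma fullWeight_mono {n : ℕ} {C C' : Fin n → ℕ}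
    (h : PebblingMove (SimpleGraph.pathGraph n) C C') :
    ∑ w, 2^(n-1-w.val) * C' w ≤ ∑ w, 2^(n-1-w.val) * C w := by
  obtain ⟨u, v, hadj, hu, rfl⟩ := h
  have huv : u ≠ v := hadj.ne
  have hms := move_sum (fun j : Fin n => 2^(n-1-j.val)) C u v huv hu
  simp only at hms ⊢
  have hgv : (2:ℕ)^(n-1-v.val) ≤ 2 * 2^(n-1-u.val) := by
    rw [SimpleGraph.pathGraph_adj] at hadj
    rcases hadj with h1 | h1
    · have h2 : (2:ℕ)^(n-1-v.val) ≤ 2^(n-1-u.val) :=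
        Nat.pow_le_pow_right (by norm_num) (by omega)
      omega
    · have hlt := u.isLt
      have h2 : n-1-v.val = (n-1-u.val)+1 := by omega
      rw [h2, pow_succ]
      omega
  omega

lemma fullWeight_rt {n : ℕ} {C C' : Fin n → ℕ}
    (h : Relation.ReflTransGen (PebblingMove (SimpleGraph.pathGraph n)) C C') :
    ∑ w, 2^(n-1-w.val) * C' w ≤ ∑ w, 2^(n-1-w.val) * C w := by
  induction h with
  | refl => exact le_rfl
  | tail _ hbc ih => exact le_trans (fullWeight_mono hbc) ih

lemma path_unsolv {n : ℕ} (h0 : 0 < n) (C : Fin n → ℕ)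
    (h : ∑ w, 2^(n-1-w.val) * C w < 2^(n-1)) :
    ¬ PebblingSolvable (SimpleGraph.pathGraph n) ⟨0, h0⟩ C := by
  rintro ⟨C', hsteps, hC'⟩
  have hmono := fullWeight_rt hsteps
  have hroot : 2^(n-1) ≤ ∑ w, 2^(n-1-w.val) * C' w := by
    have hmem : (⟨0, h0⟩ : Fin n) ∈ Finset.univ := Finset.mem_univ _
    have := Finset.single_le_sum (f := fun w : Fin n => 2^(n-1-w.val) * C' w)
      (fun w _ => Nat.zero_le _) hmem
    simp only [Nat.sub_zero] at this
    calc 2^(n-1) = 2^(n-1) * 1 := by ring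
      _ ≤ 2^(n-1-(0:ℕ)) * C' ⟨0, h0⟩ := by
          rw [Nat.sub_zero]; exact Nat.mul_le_mul_left _ hC'
      _ ≤ _ := by simpa using this
  omega

lemma path_solv {n : ℕ} (hn : 2 ≤ n) :
    ∀ N (C : Fin n → ℕ), (∑ j, C j) ≤ N →
      2^(n-1) ≤ ∑ j, 2^(n-1-j.val) * C j →
      PebblingSolvable (SimpleGraph.pathGraph n) ⟨0, lt_of_lt_of_le (by norm_num) hn⟩ C := by
  intro N
  induction N with
  | zero =>
    intro C hC hw
    exfalso
    have hz : ∀ j ∈ Finset.univ, C j = 0 :=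
      Finset.sum_eq_zero_iff.mp (Nat.le_zero.mp hC)
    have h0 : ∑ j, 2^(n-1-j.val) * C j = 0 :=
      Finset.sum_eq_zero (fun j hj => by rw [hz j hj, mul_zero])
    rw [h0] at hw
    have : 0 < 2^(n-1) := Nat.pow_pos (by norm_num)
    omega
  | succ N ih =>
    intro C hC hw
    by_cases h0 : 1 ≤ C ⟨0, by omega⟩
    · exact ⟨C, Relation.ReflTransGen.refl, h0⟩
    · have hC0 : C ⟨0, by omega⟩ = 0 := by omega
      by_cases hall : ∀ j, C j ≤ 1
      · exfalso
        have hle : ∑ j, 2^(n-1-j.val) * C j ≤ ∑ j : Fin n, pathWeight n j := by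
          apply Finset.sum_le_sum
          intro j _
          by_cases hj : j.val = 0
          · have hje : j = ⟨0, by omega⟩ := Fin.ext hj
            rw [hje, hC0, mul_zero]
            exact Nat.zero_le _
          · calc 2^(n-1-j.val) * C j ≤ 2^(n-1-j.val) * 1 :=
                Nat.mul_le_mul_left _ (hall j)
              _ = pathWeight n j := by simp [pathWeight, hj]
        obtain ⟨m, rfl⟩ : ∃ m, n = m + 1 := ⟨n - 1, by omega⟩
        simp only [Nat.add_sub_cancel] at hw hle
        rw [sum_pathWeight] at hle
        have h1 : (1:ℕ) ≤ 2^m := Nat.one_le_two_pow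
        omega
      · push_neg at hall
        obtain ⟨u, hu⟩ := hall
        have hu2 : 2 ≤ C u := hu
        have hune : u.val ≠ 0 := by
          intro h
          rw [show u = (⟨0, by omega⟩ : Fin n) from Fin.ext h] at hu2
          omega
        have hvlt : u.val - 1 < n := by have := u.isLt; omega
        set v : Fin n := ⟨u.val - 1, hvlt⟩ with hv
        have hadj : (SimpleGraph.pathGraph n).Adj u v :=
          SimpleGraph.pathGraph_adj.mpr (Or.inr (by simp [hv]; omega))
        have huv : u ≠ v := by
          intro h
          have : u.val = u.val - 1 := congrArg Fin.val h
          omega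
        set C' : Fin n → ℕ :=
          fun w => if w = u then C u - 2 else if w = v then C v + 1 else C w with hC'
        have hmove : PebblingMove (SimpleGraph.pathGraph n) C C' := ⟨u, v, hadj, hu2, rfl⟩
        have hgv : (2:ℕ)^(n-1-v.val) = 2 * 2^(n-1-u.val) := by
          have := u.isLt
          rw [show n-1-v.val = (n-1-u.val)+1 from by simp [hv]; omega, pow_succ]
          ring
        have hms : (∑ j, 2^(n-1-j.val) * C' j) + 2 * 2^(n-1-u.val)
            = (∑ j, 2^(n-1-j.val) * C j) + 2^(n-1-v.val) :=
          move_sum (fun j : Fin n => 2^(n-1-j.val)) C u v huv hu2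
        have hw' : 2^(n-1) ≤ ∑ j, 2^(n-1-j.val) * C' j := by omega
        have hms1 : (∑ j, 1 * C' j) + 2 * 1 = (∑ j, 1 * C j) + 1 :=
          move_sum (fun _ : Fin n => 1) C u v huv hu2
        simp only [one_mul, mul_one] at hms1
        have hsum' : ∑ j, C' j ≤ N := by omega
        obtain ⟨D, hD, hD1⟩ := ih C' hsum' hw'
        exact ⟨D, Relation.ReflTransGen.head hmove hD, hD1⟩

/-- **Path weight bound.** -/
theorem path_weight_bound (n : ℕ) (hn : 2 ≤ n) :
    (∀ C : Fin n → ℕ,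
        ¬ PebblingSolvable (SimpleGraph.pathGraph n) (⟨0, by omega⟩ : Fin n) C →
        ∑ j, pathWeight n j * C j ≤ 2 ^ (n - 1) - 1) ∧
    ¬ PebblingSolvable (SimpleGraph.pathGraph n) (⟨0, by omega⟩ : Fin n)
        (fun j => if j.val = 0 then 0 else 1) ∧
    (∑ j, pathWeight n j * (fun j : Fin n => if j.val = 0 then 0 else 1) j)
      = 2 ^ (n - 1) - 1 := by
  have hone : ∑ j, pathWeight n j * (fun j : Fin n => if j.val = 0 then 0 else 1) j
      = ∑ j, pathWeight n j := by
    apply Finset.sum_congr rfl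
    intro j _
    by_cases hj : j.val = 0 <;> simp [pathWeight, hj]
  refine ⟨?_, ?_, ?_⟩
  · intro C hns
    by_contra hgt
    push_neg at hgt
    apply hns
    apply path_solv hn (∑ j, C j) C le_rfl
    have hle : ∑ j, pathWeight n j * C j ≤ ∑ j, 2^(n-1-j.val) * C j := by
      apply Finset.sum_le_sum
      intro j _
      by_cases hj : j.val = 0 <;> simp [pathWeight, hj]
    have h1 : (1:ℕ) ≤ 2^(n-1) := Nat.one_le_two_pow
    omega
  · apply path_unsolv (by omega : 0 < n)
    have heq : ∑ w : Fin n, 2^(n-1-w.val) * (if w.val = 0 then 0 else 1)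
        = ∑ w : Fin n, pathWeight n w := by
      apply Finset.sum_congr rfl
      intro w _
      by_cases hw : w.val = 0 <;> simp [pathWeight, hw]
    rw [heq]
    obtain ⟨m, rfl⟩ : ∃ m, n = m + 1 := ⟨n - 1, by omega⟩
    rw [sum_pathWeight]
    have h1 : (1:ℕ) ≤ 2^m := Nat.one_le_two_pow
    have h2 : m + 1 - 1 = m := by omega
    rw [h2]
    omega
  · rw [hone]
    obtain ⟨m, rfl⟩ : ∃ m, n = m + 1 := ⟨n - 1, by omega⟩
    rw [sum_pathWeight, Nat.add_sub_cancel]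
end

section
/- (Weight Function Lemma) Let G be a finite simple graph, r a vertex of G, and T a subtree of G rooted at r with at least two vertices; for each non-root vertex v of T let v⁺ denote its parent in T (the neighbor of v in T on the unique T-path from v to r). Let ω : V(G) → ℕ be a weight function such that ω(v) = 0 for all v ∉ V(T), ω(r) = 0, ω(v) ≥ 1 for every non-root v ∈ V(T), and ω(v⁺) = 2·ω(v) for every non-root v ∈ V(T) with v⁺ ≠ r. Then every r-unsolvable pebbling configuration C on G satisfies ∑_{v ∈ V(G)} ω(v)·C(v) ≤ ∑_{v ∈ V(T), v ≠ r} ω(v). -/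
open Classical

/-- **Weight Function Lemma (Hurlbert).** Let `T` be a subtree of `G` rooted at `r`
(a connected acyclic subgraph containing `r`) with at least two vertices, let
`par v` be the parent of each non-root vertex `v` of `T` (the neighbor of `v` in `T`
lying on the unique path in `T` from `v` to `r`), and let `ω` be a weight function
vanishing outside `T` and at `r`, positive on non-root vertices of `T`, and doubling
along parents (`ω(v⁺) = 2 ω(v)` whenever `v⁺ ≠ r`). Then every `r`-unsolvable
configuration `C` satisfies `∑ v, ω(v) C(v) ≤ ∑_{v ∈ V(T), v ≠ r} ω(v)`. -/
theorem weight_function_lemma {V : Type*} [Fintype V] [DecidableEq V]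
    (G : SimpleGraph V) (r : V) (T : G.Subgraph) (hr : r ∈ T.verts)
    (hT2 : 2 ≤ T.verts.ncard)
    (hconn : T.coe.Connected) (hacyc : T.coe.IsAcyclic)
    (par : V → V)
    (hpar : ∀ (v : V) (hv : v ∈ T.verts), v ≠ r →
      T.Adj v (par v) ∧
      ∃ hp : par v ∈ T.verts,
        ∀ p : T.coe.Walk ⟨v, hv⟩ ⟨r, hr⟩, p.IsPath →
          (⟨par v, hp⟩ : T.verts) ∈ p.support)
    (ω : V → ℕ)
    (hω0 : ∀ v, v ∉ T.verts → ω v = 0) (hωr : ω r = 0)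
    (hω1 : ∀ v ∈ T.verts, v ≠ r → 1 ≤ ω v)
    (hω2 : ∀ v ∈ T.verts, v ≠ r → par v ≠ r → ω (par v) = 2 * ω v)
    (C : V → ℕ) (hC : ¬ PebblingSolvable G r C) :
    ∑ v, ω v * C v ≤ ∑ v ∈ Finset.univ.filter (fun v => v ∈ T.verts ∧ v ≠ r), ω v := by
  classical
  suffices H : ∀ n (C : V → ℕ), ∑ v, C v = n → ¬ PebblingSolvable G r C →
      ∑ v, ω v * C v ≤ ∑ v ∈ Finset.univ.filter (fun v => v ∈ T.verts ∧ v ≠ r), ω v from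
    H _ C rfl hC
  intro n
  induction n using Nat.strong_induction_on with
  | _ n ih =>
  intro C hn hC
  by_cases hcase : ∃ u, u ∈ T.verts ∧ u ≠ r ∧ 2 ≤ C u
  · obtain ⟨u, huT, hur, hcu⟩ := hcase
    obtain ⟨hadj, hp, -⟩ := hpar u huT hur
    have hGadj : G.Adj u (par u) := T.adj_sub hadj
    have hune : u ≠ par u := G.ne_of_adj hGadj
    by_cases hpr : par u = r
    · exfalso
      apply hC
      have hGadj' : G.Adj u r := hpr ▸ hGadj
      refine ⟨fun w => if w = u then C u - 2 else if w = r then C r + 1 else C w,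
        Relation.ReflTransGen.single ⟨u, r, hGadj', hcu, rfl⟩, ?_⟩
      simp [Ne.symm hur]
    · set C' : V → ℕ := fun w => if w = u then C u - 2 else
        if w = par u then C (par u) + 1 else C w with hC'def
      have hmove : PebblingMove G C C' := ⟨u, par u, hGadj, hcu, rfl⟩
      have hC'unsolv : ¬ PebblingSolvable G r C' := by
        rintro ⟨D, hD, hD1⟩
        exact hC ⟨D, Relation.ReflTransGen.head hmove hD, hD1⟩
      have split : ∀ f : V → ℕ, ∑ v, f v =
          f u + (f (par u) + ∑ v ∈ (Finset.univ.erase u).erase (par u), f v) := by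
        intro f
        rw [Finset.add_sum_erase _ f (Finset.mem_erase.mpr ⟨Ne.symm hune, Finset.mem_univ _⟩),
          Finset.add_sum_erase _ f (Finset.mem_univ u)]
      have hC'u : C' u = C u - 2 := by simp [hC'def]
      have hC'p : C' (par u) = C (par u) + 1 := by simp [hC'def, Ne.symm hune]
      have hrest : ∀ v ∈ (Finset.univ.erase u).erase (par u), C' v = C v := by
        intro v hv
        rw [Finset.mem_erase, Finset.mem_erase] at hv
        simp [hC'def, hv.1, hv.2.1]
      obtain ⟨b', hb'⟩ : ∃ b', C u = b' + 2 := ⟨C u - 2, by omega⟩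
      have hrestsum : ∑ v ∈ (Finset.univ.erase u).erase (par u), ω v * C' v
          = ∑ v ∈ (Finset.univ.erase u).erase (par u), ω v * C v :=
        Finset.sum_congr rfl (fun v hv => by rw [hrest v hv])
      have hrest2 : ∑ v ∈ (Finset.univ.erase u).erase (par u), C' v
          = ∑ v ∈ (Finset.univ.erase u).erase (par u), C v :=
        Finset.sum_congr rfl hrest
      have hsum : ∑ v, C' v = n - 1 := by
        have h1 := split C'
        have h2 := split C
        rw [hC'u, hC'p, hrest2] at h1
        omega
      have hnpos : 1 ≤ n := by
        have h2 := split C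
        omega
      have hIH := ih (n - 1) (by omega) C' hsum hC'unsolv
      have hωeq : ∑ v, ω v * C v = ∑ v, ω v * C' v := by
        have h1 := split (fun v => ω v * C v)
        have h2 := split (fun v => ω v * C' v)
        rw [hC'u, hC'p, hrestsum] at h2
        rw [h1, h2, hω2 u huT hur hpr, hb']
        simp only [Nat.add_sub_cancel]
        ring
      rw [hωeq]
      exact hIH
  · push_neg at hcase
    have hzero : ∀ v ∈ Finset.univ.filter (fun v => ¬(v ∈ T.verts ∧ v ≠ r)), ω v * C v = 0 := by
      intro v hv
      rw [Finset.mem_filter] at hv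
      rcases Classical.em (v ∈ T.verts) with h | h
      · have : v = r := by tauto
        rw [this, hωr, zero_mul]
      · rw [hω0 v h, zero_mul]
    calc ∑ v, ω v * C v
        = ∑ v ∈ Finset.univ.filter (fun v => v ∈ T.verts ∧ v ≠ r), ω v * C v := by
          rw [← Finset.sum_filter_add_sum_filter_not Finset.univ
            (fun v => v ∈ T.verts ∧ v ≠ r) (fun v => ω v * C v),
            Finset.sum_eq_zero hzero, add_zero]
      _ ≤ ∑ v ∈ Finset.univ.filter (fun v => v ∈ T.verts ∧ v ≠ r), ω v * 1 := by
          refine Finset.sum_le_sum fun v hv => ?_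
          rw [Finset.mem_filter] at hv
          have := hcase v hv.2.1 hv.2.2
          exact Nat.mul_le_mul_left _ (by omega)
      _ = ∑ v ∈ Finset.univ.filter (fun v => v ∈ T.verts ∧ v ≠ r), ω v := by simp
end

section
/- (Linear optimization bound) Let G be a finite connected simple graph with root vertex r, and let ω_1, …, ω_k be weight functions of strategies rooted at r (i.e., each ω_i is supported on a subtree T_i of G rooted at r, with ω_i(r) = 0, ω_i(v) ≥ 1 for non-root vertices of T_i, and ω_i(v⁺) = 2·ω_i(v) for every non-root v ∈ V(T_i) whose parent v⁺ ≠ r). Set κ = min over vertices v ≠ r of ∑_{i=1}^{k} ω_i(v) and χ = ∑_{i=1}^{k} ∑_{v ≠ r} ω_i(v). If κ ≥ 1, then every r-unsolvable configuration C satisfies ∑_{v ≠ r} C(v) ≤ χ/κ, and consequently π(G, r) ≤ ⌊χ/κ⌋ + 1. -/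
theorem weight_lemma {V : Type*} [Fintype V] [DecidableEq V]
    (G : SimpleGraph V) (r : V) (T : G.Subgraph) (par : V → V)
    (hpar : ∀ v ∈ T.verts, v ≠ r → T.Adj v (par v))
    (ω : V → ℕ) (hω0 : ∀ v, v ∉ T.verts → ω v = 0)
    (hω2 : ∀ v ∈ T.verts, v ≠ r → par v ≠ r → ω (par v) = 2 * ω v)
    (C : V → ℕ) (hC : ¬ PebblingSolvable G r C) :
    ∑ v ∈ Finset.univ.erase r, ω v * C v ≤ ∑ v ∈ Finset.univ.erase r, ω v := by
  suffices H : ∀ n (C : V → ℕ), ∑ v, C v = n → ¬ PebblingSolvable G r C →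
      ∑ v ∈ Finset.univ.erase r, ω v * C v ≤ ∑ v ∈ Finset.univ.erase r, ω v from
    H _ C rfl hC
  intro n
  induction n using Nat.strong_induction_on with
  | _ n ih =>
    intro C hn hC
    by_cases h : ∃ u, u ∈ T.verts ∧ u ≠ r ∧ 2 ≤ C u
    · obtain ⟨u, hu, hur, hCu⟩ := h
      set p := par u with hp
      have hadj : T.Adj u p := hpar u hu hur
      have hGadj : G.Adj u p := hadj.adj_sub
      have hup : u ≠ p := hGadj.ne
      have hpr : p ≠ r := by
        intro hpr
        apply hC
        refine ⟨fun w => if w = u then C u - 2 else if w = r then C r + 1 else C w,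
          Relation.ReflTransGen.single ⟨u, r, by rwa [hpr] at hGadj, hCu, rfl⟩, ?_⟩
        simp [Ne.symm hur]
      set C' : V → ℕ := fun w => if w = u then C u - 2 else if w = p then C p + 1 else C w
        with hC'def
      have hmove : PebblingMove G C C' := ⟨u, p, hGadj, hCu, rfl⟩
      have hC' : ¬ PebblingSolvable G r C' := by
        intro ⟨D, hrel, hD⟩
        exact hC ⟨D, Relation.ReflTransGen.head hmove hrel, hD⟩
      have key : ∀ D : V → ℕ, ∀ f : V → ℕ,
          ∑ v ∈ Finset.univ.erase r, f v * D v =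
            f u * D u + (f p * D p +
              ∑ v ∈ ((Finset.univ.erase r).erase u).erase p, f v * D v) := by
        intro D f
        rw [← Finset.add_sum_erase _ (fun v => f v * D v)
            (Finset.mem_erase.mpr ⟨hur, Finset.mem_univ u⟩),
          ← Finset.add_sum_erase _ (fun v => f v * D v)
            (Finset.mem_erase.mpr ⟨Ne.symm hup,
              Finset.mem_erase.mpr ⟨hpr, Finset.mem_univ p⟩⟩)]
      have hC'u : C' u = C u - 2 := by simp [hC'def]
      have hC'p : C' p = C p + 1 := by simp [hC'def, Ne.symm hup]
      have hrest : ∀ v ∈ ((Finset.univ.erase r).erase u).erase p, C' v = C v := by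
        intro v hv
        simp only [Finset.mem_erase] at hv
        simp [hC'def, hv.1, hv.2.1]
      have hsum : ∑ v, C' v < n := by
        have k2 : ∀ D : V → ℕ, ∑ v, D v =
            D u + (D p + ∑ v ∈ ((Finset.univ.erase u)).erase p, D v) := by
          intro D
          rw [← Finset.add_sum_erase _ D (Finset.mem_univ u),
            ← Finset.add_sum_erase _ D
              (Finset.mem_erase.mpr ⟨Ne.symm hup, Finset.mem_univ p⟩)]
        have e1 := k2 C
        have e2 := k2 C'
        have hrest' : ∑ v ∈ ((Finset.univ.erase u)).erase p, C' v
            = ∑ v ∈ ((Finset.univ.erase u)).erase p, C v := by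
          apply Finset.sum_congr rfl
          intro v hv
          simp only [Finset.mem_erase] at hv
          simp [hC'def, hv.1, hv.2]
        rw [hrest'] at e2
        rw [hC'u, hC'p] at e2
        omega
      have hweq : ∑ v ∈ Finset.univ.erase r, ω v * C' v
          = ∑ v ∈ Finset.univ.erase r, ω v * C v := by
        have hrest2 : ∑ v ∈ ((Finset.univ.erase r).erase u).erase p, ω v * C' v
            = ∑ v ∈ ((Finset.univ.erase r).erase u).erase p, ω v * C v :=
          Finset.sum_congr rfl fun v hv => by rw [hrest v hv]
        rw [key C ω, key C' ω, hrest2, hC'u, hC'p, hω2 u hu hur hpr]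
        obtain ⟨y, hy⟩ : ∃ y, C u = y + 2 := ⟨C u - 2, by omega⟩
        rw [hy, Nat.add_sub_cancel]
        ring
      rw [← hweq]
      exact ih _ (hn ▸ hsum) C' rfl hC'
    · push_neg at h
      apply Finset.sum_le_sum
      intro v hv
      rcases Finset.mem_erase.mp hv with ⟨hvr, -⟩
      by_cases hvT : v ∈ T.verts
      · have := h v hvT hvr
        nlinarith [this]
      · simp [hω0 v hvT]

open Classical

/-- **Linear optimization bound.** Let `G` be a finite connected graph with root `r`
and let `ω 0, …, ω (k-1)` be weight functions of strategies rooted at `r`: each `ω i`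
is supported on a subtree `T i` of `G` rooted at `r` (with parent function `par i`),
vanishes at `r`, is positive on non-root vertices of `T i`, and doubles along parents.
With `κ = min_{v ≠ r} ∑ i, ω i v` and `χ = ∑ i ∑_{v ≠ r} ω i v`, if `κ ≥ 1` then every
`r`-unsolvable configuration `C` satisfies `∑_{v ≠ r} C v ≤ χ / κ`, and consequently
`π(G, r) ≤ ⌊χ / κ⌋ + 1`. -/
theorem linear_optimization_bound {V : Type*} [Fintype V] [DecidableEq V]
    (G : SimpleGraph V) (hG : G.Connected) (r : V) (k : ℕ)
    (T : Fin k → G.Subgraph) (hr : ∀ i, r ∈ (T i).verts)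
    (hconn : ∀ i, (T i).coe.Connected) (hacyc : ∀ i, (T i).coe.IsAcyclic)
    (par : Fin k → V → V)
    (hpar : ∀ (i : Fin k) (v : V) (hv : v ∈ (T i).verts), v ≠ r →
      (T i).Adj v (par i v) ∧
      ∃ hp : par i v ∈ (T i).verts,
        ∀ p : (T i).coe.Walk ⟨v, hv⟩ ⟨r, hr i⟩, p.IsPath →
          (⟨par i v, hp⟩ : (T i).verts) ∈ p.support)
    (ω : Fin k → V → ℕ)
    (hω0 : ∀ i, ∀ v, v ∉ (T i).verts → ω i v = 0) (hωr : ∀ i, ω i r = 0)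
    (hω1 : ∀ i, ∀ v ∈ (T i).verts, v ≠ r → 1 ≤ ω i v)
    (hω2 : ∀ i, ∀ v ∈ (T i).verts, v ≠ r → par i v ≠ r → ω i (par i v) = 2 * ω i v)
    (κ χ : ℕ)
    (hκ : IsLeast {m : ℕ | ∃ v : V, v ≠ r ∧ m = ∑ i, ω i v} κ)
    (hκ1 : 1 ≤ κ)
    (hχ : χ = ∑ i, ∑ v ∈ Finset.univ.erase r, ω i v) :
    (∀ C : V → ℕ, ¬ PebblingSolvable G r C →
        (∑ v ∈ Finset.univ.erase r, (C v : ℚ)) ≤ (χ : ℚ) / (κ : ℚ)) ∧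
    rootedPebblingNumber G r ≤ χ / κ + 1 := by
  have main : ∀ C : V → ℕ, ¬ PebblingSolvable G r C →
      κ * ∑ v ∈ Finset.univ.erase r, C v ≤ χ := by
    intro C hC
    have h1 : ∀ i : Fin k, ∑ v ∈ Finset.univ.erase r, ω i v * C v ≤
        ∑ v ∈ Finset.univ.erase r, ω i v := fun i =>
      weight_lemma G r (T i) (par i) (fun v hv hvr => (hpar i v hv hvr).1)
        (ω i) (hω0 i) (hω2 i) C hC
    have h2 : ∑ v ∈ Finset.univ.erase r, (∑ i, ω i v) * C v ≤ χ := by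
      rw [hχ]
      calc ∑ v ∈ Finset.univ.erase r, (∑ i, ω i v) * C v
          = ∑ i, ∑ v ∈ Finset.univ.erase r, ω i v * C v := by
            rw [Finset.sum_comm]
            exact Finset.sum_congr rfl fun v _ => Finset.sum_mul _ _ _
        _ ≤ ∑ i, ∑ v ∈ Finset.univ.erase r, ω i v :=
            Finset.sum_le_sum fun i _ => h1 i
    have h3 : κ * ∑ v ∈ Finset.univ.erase r, C v ≤
        ∑ v ∈ Finset.univ.erase r, (∑ i, ω i v) * C v := by
      rw [Finset.mul_sum]
      exact Finset.sum_le_sum fun v hv =>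
        Nat.mul_le_mul_right _ (hκ.2 ⟨v, (Finset.mem_erase.mp hv).1, rfl⟩)
    exact le_trans h3 h2
  constructor
  · intro C hC
    have h := main C hC
    have hκQ : (0 : ℚ) < (κ : ℚ) := by exact_mod_cast hκ1
    rw [le_div_iff₀ hκQ]
    have hcast : ((κ * ∑ v ∈ Finset.univ.erase r, C v : ℕ) : ℚ) ≤ (χ : ℚ) := by
      exact_mod_cast h
    push_cast at hcast
    linarith
  · refine Nat.sInf_le ?_
    intro C hCsum
    by_contra hC
    have hr0 : C r = 0 := by
      by_contra h
      exact hC ⟨C, Relation.ReflTransGen.refl, by omega⟩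
    have hsplit := Finset.add_sum_erase Finset.univ C (Finset.mem_univ r)
    have hsum : ∑ v ∈ Finset.univ.erase r, C v = χ / κ + 1 := by omega
    have h := main C hC
    rw [hsum] at h
    have h2 : χ / κ + 1 ≤ χ / κ :=
      (Nat.le_div_iff_mul_le hκ1).mpr (by rw [Nat.mul_comm]; exact h)
    omega
end

section
/- Let B_4 be the fourth weak Bruhat graph: the simple graph whose vertices are the 24 permutations of {1,2,3,4} (the symmetric group S_4), with two permutations σ and τ adjacent exactly when τ = σ·s for some adjacent transposition s ∈ {(1 2), (2 3), (3 4)}. Then the pebbling number of B_4 satisfies π(B_4) ≤ 66. -/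
/-- The fourth weak Bruhat graph `B₄`: vertices are the 24 permutations of
`{1,2,3,4}`, with `σ` and `τ` adjacent exactly when `τ = σ * s` for some adjacent
transposition `s ∈ {(1 2), (2 3), (3 4)}`. -/
def bruhatGraph4 : SimpleGraph (Equiv.Perm (Fin 4)) :=
  SimpleGraph.fromRel fun σ τ =>
    ∃ s ∈ ({Equiv.swap 0 1, Equiv.swap 1 2, Equiv.swap 2 3} : Set (Equiv.Perm (Fin 4))),
      τ = σ * s

lemma solvable_step {V : Type*} [DecidableEq V] {G : SimpleGraph V} {r : V} {C C' : V → ℕ}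
    (h : PebblingMove G C C') (hs : PebblingSolvable G r C') : PebblingSolvable G r C := by
  obtain ⟨D, hD, hr⟩ := hs
  exact ⟨D, Relation.ReflTransGen.head h hD, hr⟩

lemma weight_function_lemma_s13 {V : Type*} [Fintype V] [DecidableEq V] (G : SimpleGraph V)
    (r : V) (w : V → ℕ)
    (hw : ∀ v, v ≠ r → 0 < w v → ∃ u, G.Adj v u ∧ (u = r ∨ 2 * w v ≤ w u)) :
    ∀ C : V → ℕ, (∑ v, w v) < ∑ v, w v * C v → PebblingSolvable G r C := by
  suffices H : ∀ N : ℕ, ∀ C : V → ℕ, (∑ v, C v) ≤ N →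
      (∑ v, w v) < ∑ v, w v * C v → PebblingSolvable G r C by
    intro C h; exact H (∑ v, C v) C le_rfl h
  intro N
  induction N with
  | zero =>
    intro C hC h
    exfalso
    have h0 : ∑ v, C v = 0 := Nat.le_zero.mp hC
    have hz : ∀ v ∈ Finset.univ, C v = 0 := Finset.sum_eq_zero_iff.mp h0
    have : ∀ v, C v = 0 := fun v => hz v (Finset.mem_univ v)
    simp only [this, Nat.mul_zero, Finset.sum_const_zero] at h
    omega
  | succ N ih =>
    intro C hC h
    by_cases hr : 1 ≤ C r
    · exact ⟨C, Relation.ReflTransGen.refl, hr⟩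
    by_cases hex : ∃ v, v ≠ r ∧ 0 < w v ∧ 2 ≤ C v
    · obtain ⟨v, hvr, hwv, hCv⟩ := hex
      obtain ⟨u, hadj, hu⟩ := hw v hvr hwv
      have hvu : v ≠ u := G.ne_of_adj hadj
      set C' : V → ℕ := fun x => if x = v then C v - 2 else if x = u then C u + 1 else C x with hC'
      have hmove : PebblingMove G C C' := ⟨v, u, hadj, hCv, rfl⟩
      have hsum : (∑ x, C' x) + 2 = (∑ x, C x) + 1 := by
        have key : ∀ x, C' x + (if x = v then 2 else 0) = C x + (if x = u then 1 else 0) := by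
          intro x
          simp only [hC']
          by_cases h1 : x = v
          · rw [if_pos h1, if_pos h1, if_neg (by rw [h1]; exact hvu), h1]
            omega
          · rw [if_neg h1, if_neg h1]
            by_cases h2 : x = u
            · rw [if_pos h2, if_pos h2, h2]
            · rw [if_neg h2, if_neg h2]
        calc (∑ x, C' x) + 2 = ∑ x, (C' x + (if x = v then 2 else 0)) := by
              rw [Finset.sum_add_distrib, Finset.sum_ite_eq' Finset.univ v fun _ => 2]
              simp
          _ = ∑ x, (C x + (if x = u then 1 else 0)) := by simp only [key]
          _ = (∑ x, C x) + 1 := by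
              rw [Finset.sum_add_distrib, Finset.sum_ite_eq' Finset.univ u fun _ => 1]
              simp
      have hwsum : (∑ x, w x * C' x) + 2 * w v = (∑ x, w x * C x) + w u := by
        have key : ∀ x, w x * C' x + (if x = v then 2 * w v else 0)
            = w x * C x + (if x = u then w u else 0) := by
          intro x
          simp only [hC']
          by_cases h1 : x = v
          · rw [if_pos h1, if_pos h1, if_neg (by rw [h1]; exact hvu), h1]
            have hc : C v = (C v - 2) + 2 := by omega
            conv_rhs => rw [hc]
            rw [Nat.mul_add]
            omega
          · rw [if_neg h1, if_neg h1]
            by_cases h2 : x = u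
            · rw [if_pos h2, if_pos h2, h2, Nat.mul_add, Nat.mul_one]
              omega
            · rw [if_neg h2, if_neg h2]
        calc (∑ x, w x * C' x) + 2 * w v
            = ∑ x, (w x * C' x + (if x = v then 2 * w v else 0)) := by
              rw [Finset.sum_add_distrib, Finset.sum_ite_eq' Finset.univ v fun _ => 2 * w v]
              simp
          _ = ∑ x, (w x * C x + (if x = u then w u else 0)) := by simp only [key]
          _ = (∑ x, w x * C x) + w u := by
              rw [Finset.sum_add_distrib, Finset.sum_ite_eq' Finset.univ u fun _ => w u]
              simp
      rcases hu with rfl | hu2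
      · refine solvable_step hmove ⟨C', Relation.ReflTransGen.refl, ?_⟩
        have hC'u : C' u = C u + 1 := by
          simp only [hC']
          rw [if_neg (fun hh => hvu hh.symm)]
          simp
        omega
      · exact solvable_step hmove (ih C' (by omega) (by omega))
    · exfalso
      push_neg at hex
      have hle : ∀ x, w x * C x ≤ w x := by
        intro x
        by_cases hxr : x = r
        · have : C x = 0 := by rw [hxr]; omega
          simp [this]
        · by_cases hwx : 0 < w x
          · have h1 : C x ≤ 1 := by have := hex x hxr hwx; omega
            calc w x * C x ≤ w x * 1 := Nat.mul_le_mul le_rfl h1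
              _ = w x := Nat.mul_one _
          · have : w x = 0 := by omega
            simp [this]
      have : (∑ x, w x * C x) ≤ ∑ x, w x := Finset.sum_le_sum (fun x _ => hle x)
      omega

lemma bruhat_adj_iff (σ τ : Equiv.Perm (Fin 4)) :
    bruhatGraph4.Adj σ τ ↔ σ ≠ τ ∧
      ((τ = σ * Equiv.swap 0 1 ∨ τ = σ * Equiv.swap 1 2 ∨ τ = σ * Equiv.swap 2 3) ∨
       (σ = τ * Equiv.swap 0 1 ∨ σ = τ * Equiv.swap 1 2 ∨ σ = τ * Equiv.swap 2 3)) := by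
  simp only [bruhatGraph4, SimpleGraph.fromRel_adj, Set.mem_insert_iff, Set.mem_singleton_iff]
  constructor
  · rintro ⟨h, H⟩
    refine ⟨h, ?_⟩
    rcases H with ⟨s, hs, rfl⟩ | ⟨s, hs, rfl⟩
    · exact Or.inl (by rcases hs with rfl|rfl|rfl <;> simp)
    · exact Or.inr (by rcases hs with rfl|rfl|rfl <;> simp)
  · rintro ⟨h, H⟩
    refine ⟨h, ?_⟩
    rcases H with (rfl|rfl|rfl)|(rfl|rfl|rfl)
    · exact Or.inl ⟨_, Or.inl rfl, rfl⟩
    · exact Or.inl ⟨_, Or.inr (Or.inl rfl), rfl⟩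
    · exact Or.inl ⟨_, Or.inr (Or.inr rfl), rfl⟩
    · exact Or.inr ⟨_, Or.inl rfl, rfl⟩
    · exact Or.inr ⟨_, Or.inr (Or.inl rfl), rfl⟩
    · exact Or.inr ⟨_, Or.inr (Or.inr rfl), rfl⟩

instance : DecidableRel bruhatGraph4.Adj := fun a b =>
  decidable_of_iff' _ (bruhat_adj_iff a b)

def wtable (l : List ℕ) (σ : Equiv.Perm (Fin 4)) : ℕ :=
  l.getD ((σ 0).val * 16 + (σ 1).val * 4 + (σ 2).val) 0

def W0 : List ℕ := [0, 0, 0, 0, 0, 0, 0, 0, 0, 0, 0, 0, 0, 0, 0, 0, 0, 0, 32, 16, 0, 0, 0, 0, 0, 0, 0, 0, 8, 0, 4, 0, 0, 0, 0, 0, 0, 0, 0, 0, 0, 0, 0, 0, 0, 0, 0, 0, 0, 0, 0, 0, 0, 0, 2, 0, 0, 1, 0, 0, 0, 0, 0, 0]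

def W1 : List ℕ := [0, 0, 0, 0, 0, 0, 0, 0, 0, 32, 0, 16, 0, 0, 8, 0, 0, 0, 0, 0, 0, 0, 0, 0, 0, 0, 0, 0, 0, 0, 0, 0, 0, 0, 0, 0, 0, 0, 0, 0, 0, 0, 0, 0, 0, 0, 0, 0, 0, 0, 4, 0, 0, 0, 0, 0, 2, 1, 0, 0, 0, 0, 0, 0]

def W2 : List ℕ := [0, 0, 0, 0, 0, 0, 0, 0, 0, 64, 0, 32, 0, 0, 0, 0, 0, 0, 0, 0, 0, 0, 0, 0, 0, 0, 0, 0, 0, 0, 0, 0, 0, 0, 0, 16, 0, 0, 0, 0, 0, 0, 0, 0, 8, 4, 0, 0, 0, 0, 0, 0, 0, 0, 1, 0, 4, 2, 0, 0, 0, 0, 0, 0]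

def W3 : List ℕ := [0, 0, 0, 0, 0, 0, 0, 0, 0, 0, 0, 0, 0, 0, 0, 0, 0, 0, 128, 0, 0, 0, 0, 0, 64, 0, 0, 0, 0, 0, 0, 0, 0, 0, 0, 0, 32, 0, 0, 16, 0, 0, 0, 0, 0, 8, 0, 0, 0, 0, 0, 0, 1, 0, 2, 0, 2, 4, 0, 0, 0, 0, 0, 0]

def W4 : List ℕ := [0, 0, 0, 0, 0, 0, 0, 0, 0, 128, 0, 0, 0, 0, 0, 0, 0, 0, 0, 0, 0, 0, 0, 0, 0, 0, 0, 0, 0, 0, 1, 0, 0, 64, 0, 32, 0, 0, 0, 0, 0, 0, 0, 0, 16, 8, 0, 0, 0, 0, 0, 0, 1, 0, 2, 0, 0, 4, 0, 0, 0, 0, 0, 0]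

def W5 : List ℕ := [0, 0, 0, 0, 0, 0, 0, 64, 0, 0, 0, 0, 0, 32, 0, 0, 0, 0, 0, 0, 0, 0, 0, 0, 0, 0, 0, 0, 0, 0, 2, 0, 0, 0, 0, 0, 0, 0, 0, 0, 0, 0, 0, 0, 0, 1, 0, 0, 0, 16, 0, 0, 8, 0, 4, 0, 1, 2, 0, 0, 0, 0, 0, 0]

def W6 : List ℕ := [0, 0, 0, 0, 0, 0, 0, 0, 0, 0, 0, 0, 0, 0, 0, 0, 0, 0, 128, 0, 0, 0, 0, 0, 64, 0, 0, 32, 0, 0, 16, 0, 0, 0, 0, 0, 0, 0, 0, 16, 0, 0, 0, 0, 4, 8, 0, 0, 0, 0, 1, 0, 0, 0, 0, 0, 2, 4, 0, 0, 0, 0, 0, 0]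

def W7 : List ℕ := [0, 0, 0, 0, 0, 0, 0, 0, 0, 64, 0, 0, 0, 0, 0, 0, 0, 0, 0, 0, 0, 0, 0, 0, 0, 0, 0, 0, 0, 0, 0, 0, 0, 32, 0, 16, 0, 0, 0, 0, 0, 0, 0, 0, 8, 0, 0, 0, 0, 0, 2, 0, 0, 0, 1, 0, 4, 2, 0, 0, 0, 0, 0, 0]

def W8 : List ℕ := [0, 0, 0, 0, 0, 0, 0, 0, 0, 0, 0, 0, 0, 0, 0, 0, 0, 0, 128, 0, 0, 0, 0, 0, 64, 0, 0, 32, 0, 0, 16, 0, 0, 0, 0, 0, 0, 0, 0, 16, 0, 0, 0, 0, 4, 8, 0, 0, 0, 0, 1, 0, 0, 0, 8, 0, 2, 4, 0, 0, 0, 0, 0, 0]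

def W9 : List ℕ := [0, 0, 0, 0, 0, 0, 0, 0, 0, 128, 0, 64, 0, 0, 0, 0, 0, 0, 0, 0, 0, 0, 0, 0, 0, 0, 0, 0, 0, 0, 0, 0, 0, 0, 0, 32, 0, 0, 0, 0, 0, 0, 0, 0, 16, 8, 0, 0, 0, 0, 4, 0, 1, 0, 2, 0, 8, 4, 0, 0, 0, 0, 0, 0]

def W10 : List ℕ := [0, 0, 0, 0, 0, 0, 0, 128, 0, 0, 0, 0, 0, 0, 0, 0, 0, 0, 0, 64, 0, 0, 0, 0, 0, 0, 0, 0, 32, 0, 0, 0, 0, 0, 0, 0, 0, 0, 0, 0, 0, 0, 0, 0, 1, 2, 0, 0, 0, 0, 1, 0, 16, 0, 8, 0, 2, 4, 0, 0, 0, 0, 0, 0]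

lemma valid0 : ∀ v : Equiv.Perm (Fin 4), v ≠ 1 → 0 < wtable W0 v →
    ∃ u, bruhatGraph4.Adj v u ∧ (u = 1 ∨ 2 * wtable W0 v ≤ wtable W0 u) := by decide

lemma sumw0 : (∑ v, wtable W0 v) = 63 := by decide

lemma valid1 : ∀ v : Equiv.Perm (Fin 4), v ≠ 1 → 0 < wtable W1 v →
    ∃ u, bruhatGraph4.Adj v u ∧ (u = 1 ∨ 2 * wtable W1 v ≤ wtable W1 u) := by decide

lemma sumw1 : (∑ v, wtable W1 v) = 63 := by decide

lemma valid2 : ∀ v : Equiv.Perm (Fin 4), v ≠ 1 → 0 < wtable W2 v →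
    ∃ u, bruhatGraph4.Adj v u ∧ (u = 1 ∨ 2 * wtable W2 v ≤ wtable W2 u) := by decide

lemma sumw2 : (∑ v, wtable W2 v) = 131 := by decide

lemma valid3 : ∀ v : Equiv.Perm (Fin 4), v ≠ 1 → 0 < wtable W3 v →
    ∃ u, bruhatGraph4.Adj v u ∧ (u = 1 ∨ 2 * wtable W3 v ≤ wtable W3 u) := by decide

lemma sumw3 : (∑ v, wtable W3 v) = 257 := by decide

lemma valid4 : ∀ v : Equiv.Perm (Fin 4), v ≠ 1 → 0 < wtable W4 v →
    ∃ u, bruhatGraph4.Adj v u ∧ (u = 1 ∨ 2 * wtable W4 v ≤ wtable W4 u) := by decide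

lemma sumw4 : (∑ v, wtable W4 v) = 256 := by decide

lemma valid5 : ∀ v : Equiv.Perm (Fin 4), v ≠ 1 → 0 < wtable W5 v →
    ∃ u, bruhatGraph4.Adj v u ∧ (u = 1 ∨ 2 * wtable W5 v ≤ wtable W5 u) := by decide

lemma sumw5 : (∑ v, wtable W5 v) = 130 := by decide

lemma valid6 : ∀ v : Equiv.Perm (Fin 4), v ≠ 1 → 0 < wtable W6 v →
    ∃ u, bruhatGraph4.Adj v u ∧ (u = 1 ∨ 2 * wtable W6 v ≤ wtable W6 u) := by decide

lemma sumw6 : (∑ v, wtable W6 v) = 275 := by decide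

lemma valid7 : ∀ v : Equiv.Perm (Fin 4), v ≠ 1 → 0 < wtable W7 v →
    ∃ u, bruhatGraph4.Adj v u ∧ (u = 1 ∨ 2 * wtable W7 v ≤ wtable W7 u) := by decide

lemma sumw7 : (∑ v, wtable W7 v) = 129 := by decide

lemma valid8 : ∀ v : Equiv.Perm (Fin 4), v ≠ 1 → 0 < wtable W8 v →
    ∃ u, bruhatGraph4.Adj v u ∧ (u = 1 ∨ 2 * wtable W8 v ≤ wtable W8 u) := by decide

lemma sumw8 : (∑ v, wtable W8 v) = 283 := by decide

lemma valid9 : ∀ v : Equiv.Perm (Fin 4), v ≠ 1 → 0 < wtable W9 v →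
    ∃ u, bruhatGraph4.Adj v u ∧ (u = 1 ∨ 2 * wtable W9 v ≤ wtable W9 u) := by decide

lemma sumw9 : (∑ v, wtable W9 v) = 267 := by decide

lemma valid10 : ∀ v : Equiv.Perm (Fin 4), v ≠ 1 → 0 < wtable W10 v →
    ∃ u, bruhatGraph4.Adj v u ∧ (u = 1 ∨ 2 * wtable W10 v ≤ wtable W10 u) := by decide

lemma sumw10 : (∑ v, wtable W10 v) = 258 := by decide

lemma cover : ∀ v : Equiv.Perm (Fin 4), v = 1 ∨ 383232 ≤ 34840 * wtable W0 v + 81368 * wtable W1 v + 14268 * wtable W2 v + 11976 * wtable W3 v + 4352 * wtable W4 v + 23952 * wtable W5 v + 3355 * wtable W6 v + 3948 * wtable W7 v + 8621 * wtable W8 v + 6840 * wtable W9 v + 10528 * wtable W10 v := by decide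

lemma solvable66 : ∀ C : Equiv.Perm (Fin 4) → ℕ, (∑ v, C v) = 66 →
    PebblingSolvable bruhatGraph4 1 C := by
  intro C hC
  by_contra hns
  have h1 : C 1 = 0 := by
    rcases Nat.eq_zero_or_pos (C 1) with h | h
    · exact h
    · exact absurd ⟨C, Relation.ReflTransGen.refl, h⟩ hns
  have hb0 : ∑ v, wtable W0 v * C v ≤ 63 := by
    by_contra hlt
    push_neg at hlt
    exact hns (weight_function_lemma_s13 bruhatGraph4 1 (wtable W0) valid0 C (by rw [sumw0]; exact hlt))
  have hb1 : ∑ v, wtable W1 v * C v ≤ 63 := by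
    by_contra hlt
    push_neg at hlt
    exact hns (weight_function_lemma_s13 bruhatGraph4 1 (wtable W1) valid1 C (by rw [sumw1]; exact hlt))
  have hb2 : ∑ v, wtable W2 v * C v ≤ 131 := by
    by_contra hlt
    push_neg at hlt
    exact hns (weight_function_lemma_s13 bruhatGraph4 1 (wtable W2) valid2 C (by rw [sumw2]; exact hlt))
  have hb3 : ∑ v, wtable W3 v * C v ≤ 257 := by
    by_contra hlt
    push_neg at hlt
    exact hns (weight_function_lemma_s13 bruhatGraph4 1 (wtable W3) valid3 C (by rw [sumw3]; exact hlt))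
  have hb4 : ∑ v, wtable W4 v * C v ≤ 256 := by
    by_contra hlt
    push_neg at hlt
    exact hns (weight_function_lemma_s13 bruhatGraph4 1 (wtable W4) valid4 C (by rw [sumw4]; exact hlt))
  have hb5 : ∑ v, wtable W5 v * C v ≤ 130 := by
    by_contra hlt
    push_neg at hlt
    exact hns (weight_function_lemma_s13 bruhatGraph4 1 (wtable W5) valid5 C (by rw [sumw5]; exact hlt))
  have hb6 : ∑ v, wtable W6 v * C v ≤ 275 := by
    by_contra hlt
    push_neg at hlt
    exact hns (weight_function_lemma_s13 bruhatGraph4 1 (wtable W6) valid6 C (by rw [sumw6]; exact hlt))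
  have hb7 : ∑ v, wtable W7 v * C v ≤ 129 := by
    by_contra hlt
    push_neg at hlt
    exact hns (weight_function_lemma_s13 bruhatGraph4 1 (wtable W7) valid7 C (by rw [sumw7]; exact hlt))
  have hb8 : ∑ v, wtable W8 v * C v ≤ 283 := by
    by_contra hlt
    push_neg at hlt
    exact hns (weight_function_lemma_s13 bruhatGraph4 1 (wtable W8) valid8 C (by rw [sumw8]; exact hlt))
  have hb9 : ∑ v, wtable W9 v * C v ≤ 267 := by
    by_contra hlt
    push_neg at hlt
    exact hns (weight_function_lemma_s13 bruhatGraph4 1 (wtable W9) valid9 C (by rw [sumw9]; exact hlt))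
  have hb10 : ∑ v, wtable W10 v * C v ≤ 258 := by
    by_contra hlt
    push_neg at hlt
    exact hns (weight_function_lemma_s13 bruhatGraph4 1 (wtable W10) valid10 C (by rw [sumw10]; exact hlt))
  have combo : (∑ v, (34840 * wtable W0 v + 81368 * wtable W1 v + 14268 * wtable W2 v + 11976 * wtable W3 v + 4352 * wtable W4 v + 23952 * wtable W5 v + 3355 * wtable W6 v + 3948 * wtable W7 v + 8621 * wtable W8 v + 6840 * wtable W9 v + 10528 * wtable W10 v) * C v) = 34840 * (∑ v, wtable W0 v * C v) + 81368 * (∑ v, wtable W1 v * C v) + 14268 * (∑ v, wtable W2 v * C v) + 11976 * (∑ v, wtable W3 v * C v) + 4352 * (∑ v, wtable W4 v * C v) + 23952 * (∑ v, wtable W5 v * C v) + 3355 * (∑ v, wtable W6 v * C v) + 3948 * (∑ v, wtable W7 v * C v) + 8621 * (∑ v, wtable W8 v * C v) + 6840 * (∑ v, wtable W9 v * C v) + 10528 * (∑ v, wtable W10 v * C v) := by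
    simp only [add_mul, Finset.sum_add_distrib, mul_assoc, ← Finset.mul_sum]
  have upper : (∑ v, (34840 * wtable W0 v + 81368 * wtable W1 v + 14268 * wtable W2 v + 11976 * wtable W3 v + 4352 * wtable W4 v + 23952 * wtable W5 v + 3355 * wtable W6 v + 3948 * wtable W7 v + 8621 * wtable W8 v + 6840 * wtable W9 v + 10528 * wtable W10 v) * C v) ≤ 24910080 := by
    rw [combo]
    have u0 : 34840 * (∑ v, wtable W0 v * C v) ≤ 34840 * 63 := Nat.mul_le_mul le_rfl hb0
    have u1 : 81368 * (∑ v, wtable W1 v * C v) ≤ 81368 * 63 := Nat.mul_le_mul le_rfl hb1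
    have u2 : 14268 * (∑ v, wtable W2 v * C v) ≤ 14268 * 131 := Nat.mul_le_mul le_rfl hb2
    have u3 : 11976 * (∑ v, wtable W3 v * C v) ≤ 11976 * 257 := Nat.mul_le_mul le_rfl hb3
    have u4 : 4352 * (∑ v, wtable W4 v * C v) ≤ 4352 * 256 := Nat.mul_le_mul le_rfl hb4
    have u5 : 23952 * (∑ v, wtable W5 v * C v) ≤ 23952 * 130 := Nat.mul_le_mul le_rfl hb5
    have u6 : 3355 * (∑ v, wtable W6 v * C v) ≤ 3355 * 275 := Nat.mul_le_mul le_rfl hb6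
    have u7 : 3948 * (∑ v, wtable W7 v * C v) ≤ 3948 * 129 := Nat.mul_le_mul le_rfl hb7
    have u8 : 8621 * (∑ v, wtable W8 v * C v) ≤ 8621 * 283 := Nat.mul_le_mul le_rfl hb8
    have u9 : 6840 * (∑ v, wtable W9 v * C v) ≤ 6840 * 267 := Nat.mul_le_mul le_rfl hb9
    have u10 : 10528 * (∑ v, wtable W10 v * C v) ≤ 10528 * 258 := Nat.mul_le_mul le_rfl hb10
    omega
  have lower : 383232 * 66 ≤ (∑ v, (34840 * wtable W0 v + 81368 * wtable W1 v + 14268 * wtable W2 v + 11976 * wtable W3 v + 4352 * wtable W4 v + 23952 * wtable W5 v + 3355 * wtable W6 v + 3948 * wtable W7 v + 8621 * wtable W8 v + 6840 * wtable W9 v + 10528 * wtable W10 v) * C v) + 383232 * C 1 := by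
    calc 383232 * 66 = 383232 * ∑ v, C v := by rw [hC]
      _ = ∑ v, 383232 * C v := Finset.mul_sum _ _ _
      _ ≤ ∑ v, ((34840 * wtable W0 v + 81368 * wtable W1 v + 14268 * wtable W2 v + 11976 * wtable W3 v + 4352 * wtable W4 v + 23952 * wtable W5 v + 3355 * wtable W6 v + 3948 * wtable W7 v + 8621 * wtable W8 v + 6840 * wtable W9 v + 10528 * wtable W10 v) * C v + if v = 1 then 383232 * C v else 0) := by
          apply Finset.sum_le_sum
          intro v _
          by_cases hv : v = 1
          · rw [if_pos hv]
            exact Nat.le_add_left _ _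
          · rw [if_neg hv, Nat.add_zero]
            rcases cover v with h | h
            · exact absurd h hv
            · exact Nat.mul_le_mul h le_rfl
      _ = (∑ v, (34840 * wtable W0 v + 81368 * wtable W1 v + 14268 * wtable W2 v + 11976 * wtable W3 v + 4352 * wtable W4 v + 23952 * wtable W5 v + 3355 * wtable W6 v + 3948 * wtable W7 v + 8621 * wtable W8 v + 6840 * wtable W9 v + 10528 * wtable W10 v) * C v) + 383232 * C 1 := by
          rw [Finset.sum_add_distrib, Finset.sum_ite_eq' Finset.univ 1 (fun v => 383232 * C v)]
          simp
  rw [h1, Nat.mul_zero, Nat.add_zero] at lower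
  omega

lemma pebblingMove_mulLeft (g : Equiv.Perm (Fin 4)) {D D' : Equiv.Perm (Fin 4) → ℕ}
    (h : PebblingMove bruhatGraph4 D D') :
    PebblingMove bruhatGraph4 (fun σ => D (g⁻¹ * σ)) (fun σ => D' (g⁻¹ * σ)) := by
  obtain ⟨u, v, hadj, hu, hE⟩ := h
  refine ⟨g * u, g * v, ?_, by simpa using hu, ?_⟩
  · rw [bruhat_adj_iff] at hadj ⊢
    obtain ⟨hne, H⟩ := hadj
    refine ⟨fun hh => hne (mul_left_cancel hh), ?_⟩
    rcases H with (rfl|rfl|rfl)|(rfl|rfl|rfl) <;> simp [mul_assoc]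
  · funext σ
    simp only [hE]
    simp only [inv_mul_cancel_left, inv_mul_eq_iff_eq_mul]

lemma solvable_mulLeft (g r : Equiv.Perm (Fin 4)) (C : Equiv.Perm (Fin 4) → ℕ)
    (h : PebblingSolvable bruhatGraph4 r (fun σ => C (g * σ))) :
    PebblingSolvable bruhatGraph4 (g * r) C := by
  obtain ⟨D', steps, hr⟩ := h
  refine ⟨fun σ => D' (g⁻¹ * σ), ?_, by simpa using hr⟩
  have hlift := Relation.ReflTransGen.lift (fun (D : Equiv.Perm (Fin 4) → ℕ) => fun σ => D (g⁻¹ * σ))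
    (fun a b hab => pebblingMove_mulLeft g hab) _ _ steps
  simpa [mul_inv_cancel_left, Function.onFun] using hlift

/-- The pebbling number of the fourth weak Bruhat graph is at most `66`. -/
theorem pebblingNumber_bruhat4_le : pebblingNumber bruhatGraph4 ≤ 66 := by
  apply Finset.sup_le
  intro r _
  apply Nat.sInf_le
  intro C hC
  have hD : (∑ v, C (r * v)) = 66 := by
    rw [← hC]
    have h2 := Equiv.sum_comp (Equiv.mulLeft r) C
    simp only [Equiv.coe_mulLeft] at h2
    exact h2
  have := solvable_mulLeft r 1 C (solvable66 _ hD)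
  rwa [mul_one] at this
end

section
/- (Tree lower bound) Let T be a finite tree rooted at a vertex r, and let 𝒫 be a collection of pairwise edge-disjoint paths in T whose union is all of T, such that each path P ∈ 𝒫 is descending: every vertex of P other than the endpoint of P closest to r has its parent (its neighbor toward r in T) on P. For each P ∈ 𝒫, let e_P be the number of edges of P and y_P the endpoint of P farthest from r. Then the configuration that places exactly 2^{e_P} − 1 pebbles on y_P for each P ∈ 𝒫 and no pebbles elsewhere is r-unsolvable; consequently π(T, r) ≥ (∑_{P ∈ 𝒫} 2^{e_P}) − |𝒫| + 1. -/
open SimpleGraph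

namespace PebAux

set_option linter.unusedSectionVars false

variable {V : Type*} [Fintype V] [DecidableEq V] (T : SimpleGraph V) (r : V)

omit [DecidableEq V] in
lemma exists_spath (hc : T.Connected) (u : V) :
    ∃ p : T.Walk u r, p.IsPath ∧ p.length = T.dist u r := by
  classical
  obtain ⟨p, hp⟩ := hc.exists_walk_length_eq_dist u r
  refine ⟨p.bypass, p.bypass_isPath, le_antisymm ?_ (SimpleGraph.dist_le _)⟩
  calc p.bypass.length ≤ p.length := p.length_bypass_le
    _ = _ := hp

omit [DecidableEq V] in
lemma dist_succ_le_of_mem_support {v u : V} {p : T.Walk u r}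
    (hv : v ∈ p.support) (hne : v ≠ u) : T.dist v r + 1 ≤ p.length := by
  classical
  have hs := congrArg SimpleGraph.Walk.length (p.take_spec hv)
  rw [SimpleGraph.Walk.length_append] at hs
  have h1 : T.dist v r ≤ (p.dropUntil v hv).length := SimpleGraph.dist_le _
  have h2 : (p.takeUntil v hv).length ≠ 0 := fun h0 =>
    hne (SimpleGraph.Walk.eq_of_length_eq_zero h0).symm
  omega

omit [DecidableEq V] in
lemma depth_lt_card (hc : T.Connected) (v : V) : T.dist v r < Fintype.card V := by
  obtain ⟨p, hp, hl⟩ := exists_spath T r hc v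
  exact hl ▸ hp.length_lt

lemma parent_unique (hT : T.IsTree) {v w₁ w₂ : V} (h₁ : T.Adj v w₁) (h₂ : T.Adj v w₂)
    (d₁ : T.dist w₁ r + 1 = T.dist v r) (d₂ : T.dist w₂ r + 1 = T.dist v r) : w₁ = w₂ := by
  obtain ⟨p₁, hp₁, hl₁⟩ := exists_spath T r hT.isConnected w₁
  obtain ⟨p₂, hp₂, hl₂⟩ := exists_spath T r hT.isConnected w₂
  have hv₁ : v ∉ p₁.support := by
    intro hv
    have := dist_succ_le_of_mem_support T r hv (h₁.ne)
    omega
  have hv₂ : v ∉ p₂.support := by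
    intro hv
    have := dist_succ_le_of_mem_support T r hv (h₂.ne)
    omega
  have q₁ : T.Walk v r := .cons h₁ p₁
  have huniq := hT.IsAcyclic.path_unique ⟨.cons h₁ p₁, hp₁.cons hv₁⟩ ⟨.cons h₂ p₂, hp₂.cons hv₂⟩
  have hw : (SimpleGraph.Walk.cons h₁ p₁).support = (SimpleGraph.Walk.cons h₂ p₂).support := by
    rw [Subtype.ext_iff] at huniq
    exact congrArg SimpleGraph.Walk.support huniq
  rw [SimpleGraph.Walk.support_cons, SimpleGraph.Walk.support_cons,
    p₁.support_eq_cons, p₂.support_eq_cons] at hw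
  simp only [List.cons.injEq] at hw
  exact hw.2.1

lemma adj_depth (hT : T.IsTree) {u v : V} (h : T.Adj u v) :
    T.dist u r = T.dist v r + 1 ∨ T.dist v r = T.dist u r + 1 := by
  by_contra hcon
  push_neg at hcon
  obtain ⟨p, hp, hl⟩ := exists_spath T r hT.isConnected u
  obtain ⟨q, hq, hlq⟩ := exists_spath T r hT.isConnected v
  have hub : T.dist u r ≤ T.dist v r + 1 := by
    have := SimpleGraph.dist_le (SimpleGraph.Walk.cons h q)
    simpa [hlq] using this
  have hvb : T.dist v r ≤ T.dist u r + 1 := by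
    have := SimpleGraph.dist_le (SimpleGraph.Walk.cons h.symm p)
    simpa [hl] using this
  have hd : T.dist u r = T.dist v r := by omega
  by_cases hv : v ∈ p.support
  · have := dist_succ_le_of_mem_support T r hv h.ne'
    omega
  · have hcons : (SimpleGraph.Walk.cons h.symm p).IsPath := hp.cons hv
    have huniq := hT.IsAcyclic.path_unique ⟨SimpleGraph.Walk.cons h.symm p, hcons⟩ ⟨q, hq⟩
    rw [Subtype.ext_iff] at huniq
    have := congrArg SimpleGraph.Walk.length huniq
    simp only [SimpleGraph.Walk.length_cons] at this
    omega

open scoped Classical in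
/-- The children of `v` (away from `r`). -/
noncomputable def children (v : V) : Finset V :=
  Finset.univ.filter (fun u => T.Adj v u ∧ T.dist u r = T.dist v r + 1)

lemma mem_children {v u : V} : u ∈ children T r v ↔ T.Adj v u ∧ T.dist u r = T.dist v r + 1 := by
  classical
  simp [children]

/-- Greedy pebble-collecting potential on the tree. -/
noncomputable def gA (hc : T.Connected) (C : V → ℕ) (v : V) : ℕ :=
  C v + ∑ u ∈ (children T r v).attach, gA hc C u.1 / 2
termination_by Fintype.card V - T.dist v r
decreasing_by
  have hu := u.2
  simp only [children, Finset.mem_filter] at hu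
  obtain ⟨-, -, hu⟩ := hu
  have := depth_lt_card T r hc u.1
  omega

lemma gA_eq (hc : T.Connected) (C : V → ℕ) (v : V) :
    gA T r hc C v = C v + ∑ u ∈ children T r v, gA T r hc C u / 2 := by
  rw [gA.eq_1, Finset.sum_attach (children T r v) (fun u => gA T r hc C u / 2)]

lemma self_le_gA (hc : T.Connected) (C : V → ℕ) (v : V) : C v ≤ gA T r hc C v := by
  rw [gA_eq]; exact Nat.le_add_right _ _

lemma children_ind (hc : T.Connected) (Q : V → Prop)
    (h : ∀ v, (∀ u ∈ children T r v, Q u) → Q v) : ∀ v, Q v := by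
  suffices H : ∀ n v, Fintype.card V - T.dist v r ≤ n → Q v from
    fun v => H (Fintype.card V) v (by omega)
  intro n
  induction n with
  | zero => intro v hv; have := depth_lt_card T r hc v; omega
  | succ n ih =>
    intro v hv
    refine h v fun u hu => ?_
    have hu' := (mem_children T r).1 hu
    have := depth_lt_card T r hc u
    exact ih u (by omega)

lemma gA_mono (hc : T.Connected) {C C' : V → ℕ} (h : ∀ v, C v ≤ C' v) :
    ∀ v, gA T r hc C v ≤ gA T r hc C' v := by
  refine children_ind T r hc _ fun v ih => ?_
  rw [gA_eq, gA_eq]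
  exact Nat.add_le_add (h v)
    (Finset.sum_le_sum fun u hu => Nat.div_le_div_right (ih u hu))

/-- `x` lies in the subtree below `v` (with respect to root `r`). -/
def Below (v x : V) : Prop := T.dist x r = T.dist x v + T.dist v r

lemma below_self (v : V) : Below T r v v := by simp [Below]

lemma below_dist_le {v x : V} (h : Below T r v x) : T.dist v r ≤ T.dist x r := by
  rw [h]; omega

lemma below_eq_of_dist_eq (hc : T.Connected) {v x : V} (h : Below T r v x)
    (hd : T.dist x r = T.dist v r) : x = v := by
  have : T.dist x v = 0 := by rw [Below] at h; omega
  exact hc.dist_eq_zero_iff.mp this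

lemma below_child (hc : T.Connected) {v u : V} (hu : u ∈ children T r v) {x : V}
    (hx : Below T r u x) : Below T r v x := by
  obtain ⟨hadj, hd⟩ := (mem_children T r).1 hu
  rw [Below] at hx ⊢
  have h1 : T.dist x r ≤ T.dist x v + T.dist v r := hc.dist_triangle
  have h2 : T.dist x v ≤ T.dist x u + T.dist u v := hc.dist_triangle
  have h3 : T.dist u v ≤ 1 := by
    have := SimpleGraph.dist_le (SimpleGraph.Walk.cons hadj.symm SimpleGraph.Walk.nil)
    simpa using this
  omega

lemma gA_local (hc : T.Connected) {C C' : V → ℕ} :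
    ∀ v, (∀ x, Below T r v x → C x = C' x) → gA T r hc C v = gA T r hc C' v := by
  refine children_ind T r hc _ fun v ih h => ?_
  rw [gA_eq, gA_eq, h v (below_self T r v)]
  congr 1
  refine Finset.sum_congr rfl fun u hu => ?_
  rw [ih u hu fun x hx => h x (below_child T r hc hu hx)]

section Move

variable (hT : T.IsTree) {C C' : V → ℕ} {u₀ v₀ : V} (hadj : T.Adj u₀ v₀) (h2 : 2 ≤ C u₀)
  (hC' : C' = fun w => if w = u₀ then C u₀ - 2 else if w = v₀ then C v₀ + 1 else C w)

-- Case A : the move goes toward the root  (v₀ is the parent of u₀)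
section CaseA

variable (hUp : T.dist u₀ r = T.dist v₀ r + 1)

include hadj h2 hC' hUp

lemma gA_A1 : gA T r hT.isConnected C' u₀ + 2 = gA T r hT.isConnected C u₀ := by
  have hc := hT.isConnected
  rw [gA_eq, gA_eq]
  have hsum : ∀ u ∈ children T r u₀, gA T r hc C' u = gA T r hc C u := by
    intro u hu
    obtain ⟨-, hd⟩ := (mem_children T r).1 hu
    refine (gA_local T r hc u fun x hx => ?_).symm
    have h1 := below_dist_le T r hx
    subst hC'
    have hx1 : x ≠ u₀ := by rintro rfl; omega
    have hx2 : x ≠ v₀ := by rintro rfl; omega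
    simp [hx1, hx2]
  rw [Finset.sum_congr rfl fun u hu => by rw [hsum u hu]]
  have : C' u₀ = C u₀ - 2 := by subst hC'; simp
  omega

lemma gA_A2 : gA T r hT.isConnected C' v₀ = gA T r hT.isConnected C v₀ := by
  have hc := hT.isConnected
  have hu₀ : u₀ ∈ children T r v₀ := (mem_children T r).2 ⟨hadj.symm, hUp⟩
  rw [gA_eq, gA_eq, ← Finset.add_sum_erase _ _ hu₀, ← Finset.add_sum_erase _ _ hu₀]
  have hsum : ∀ u ∈ (children T r v₀).erase u₀, gA T r hc C' u = gA T r hc C u := by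
    intro u hu
    have hne := Finset.ne_of_mem_erase hu
    obtain ⟨-, hd⟩ := (mem_children T r).1 (Finset.mem_of_mem_erase hu)
    refine (gA_local T r hc u fun x hx => ?_).symm
    have h1 := below_dist_le T r hx
    subst hC'
    have hx1 : x ≠ u₀ := by
      rintro rfl
      exact hne (below_eq_of_dist_eq T r hc hx (by omega)).symm
    have hx2 : x ≠ v₀ := by rintro rfl; omega
    simp [hx1, hx2]
  rw [Finset.sum_congr rfl fun u hu => by rw [hsum u hu]]
  have hA1 := gA_A1 T r hT hadj h2 hC' hUp
  have hge2 : 2 ≤ gA T r hc C u₀ := le_trans h2 (self_le_gA T r hc C u₀)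
  have hdiv : gA T r hc C' u₀ / 2 + 1 = gA T r hc C u₀ / 2 := by
    rw [← hA1, Nat.add_div_right _ (by norm_num)]
  have hv : C' v₀ = C v₀ + 1 := by
    subst hC'; simp [(hadj.ne.symm : v₀ ≠ u₀)]
  omega

lemma gA_A3 : ∀ w, gA T r hT.isConnected C' w ≤ gA T r hT.isConnected C w := by
  have hc := hT.isConnected
  refine children_ind T r hc _ fun w ih => ?_
  by_cases hw1 : w = u₀
  · subst hw1; have := gA_A1 T r hT hadj h2 hC' hUp; omega
  by_cases hw2 : w = v₀
  · subst hw2; exact le_of_eq (gA_A2 T r hT hadj h2 hC' hUp)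
  rw [gA_eq, gA_eq]
  have : C' w = C w := by subst hC'; simp [hw1, hw2]
  rw [this]
  exact Nat.add_le_add_left
    (Finset.sum_le_sum fun u hu => Nat.div_le_div_right (ih u hu)) _

end CaseA

-- Case B : the move goes away from the root (v₀ is a child of u₀)
section CaseB

variable (hDn : T.dist v₀ r = T.dist u₀ r + 1)

include hadj h2 hC' hDn

lemma gA_B1 : gA T r hT.isConnected C' v₀ = gA T r hT.isConnected C v₀ + 1 := by
  have hc := hT.isConnected
  rw [gA_eq, gA_eq]
  have hsum : ∀ u ∈ children T r v₀, gA T r hc C' u = gA T r hc C u := by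
    intro u hu
    obtain ⟨-, hd⟩ := (mem_children T r).1 hu
    refine (gA_local T r hc u fun x hx => ?_).symm
    have h1 := below_dist_le T r hx
    subst hC'
    have hx1 : x ≠ u₀ := by rintro rfl; omega
    have hx2 : x ≠ v₀ := by rintro rfl; omega
    simp [hx1, hx2]
  rw [Finset.sum_congr rfl fun u hu => by rw [hsum u hu]]
  have hv : C' v₀ = C v₀ + 1 := by subst hC'; simp [(hadj.ne.symm : v₀ ≠ u₀)]
  omega

lemma gA_B2 : gA T r hT.isConnected C' u₀ + 1 ≤ gA T r hT.isConnected C u₀ := by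
  have hc := hT.isConnected
  have hv₀ : v₀ ∈ children T r u₀ := (mem_children T r).2 ⟨hadj, hDn⟩
  rw [gA_eq, gA_eq, ← Finset.add_sum_erase _ _ hv₀, ← Finset.add_sum_erase _ _ hv₀]
  have hsum : ∀ u ∈ (children T r u₀).erase v₀, gA T r hc C' u = gA T r hc C u := by
    intro u hu
    have hne := Finset.ne_of_mem_erase hu
    obtain ⟨-, hd⟩ := (mem_children T r).1 (Finset.mem_of_mem_erase hu)
    refine (gA_local T r hc u fun x hx => ?_).symm
    have h1 := below_dist_le T r hx
    subst hC'
    have hx1 : x ≠ u₀ := by rintro rfl; omega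
    have hx2 : x ≠ v₀ := by
      rintro rfl
      exact hne (below_eq_of_dist_eq T r hc hx (by omega)).symm
    simp [hx1, hx2]
  rw [Finset.sum_congr rfl fun u hu => by rw [hsum u hu]]
  have hB1 := gA_B1 T r hT hadj h2 hC' hDn
  have hdiv : gA T r hc C' v₀ / 2 ≤ gA T r hc C v₀ / 2 + 1 := by
    rw [hB1]
    calc (gA T r hc C v₀ + 1) / 2 ≤ (gA T r hc C v₀ + 2) / 2 :=
          Nat.div_le_div_right (by omega)
      _ = gA T r hc C v₀ / 2 + 1 := Nat.add_div_right _ (by norm_num)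
  have hu : C' u₀ = C u₀ - 2 := by subst hC'; simp
  omega

lemma gA_B3 : ∀ w, w ≠ v₀ → gA T r hT.isConnected C' w ≤ gA T r hT.isConnected C w := by
  have hc := hT.isConnected
  refine children_ind T r hc _ fun w ih hw2 => ?_
  by_cases hw1 : w = u₀
  · subst hw1; have := gA_B2 T r hT hadj h2 hC' hDn; omega
  rw [gA_eq, gA_eq]
  have : C' w = C w := by subst hC'; simp [hw1, hw2]
  rw [this]
  refine Nat.add_le_add_left (Finset.sum_le_sum fun u hu => Nat.div_le_div_right ?_) _
  refine ih u hu ?_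
  rintro rfl
  obtain ⟨hadj', hd'⟩ := (mem_children T r).1 hu
  exact hw1 (parent_unique T r hT hadj'.symm hadj.symm (by omega) (by omega))

end CaseB

include hT in
lemma gA_move_le (hm : PebblingMove T C C') :
    gA T r hT.isConnected C' r ≤ gA T r hT.isConnected C r := by
  obtain ⟨u₀, v₀, hadj, h2, hC'⟩ := hm
  rcases adj_depth T r hT hadj with hUp | hDn
  · exact gA_A3 T r hT hadj h2 hC' hUp r
  · refine gA_B3 T r hT hadj h2 hC' hDn r ?_
    rintro rfl
    simp [SimpleGraph.dist_self] at hDn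

end Move

lemma unsolvable_of_gA_zero (hT : T.IsTree) {C : V → ℕ}
    (h0 : gA T r hT.isConnected C r = 0) : ¬ PebblingSolvable T r C := by
  rintro ⟨C', hR, h1⟩
  have hmono : gA T r hT.isConnected C' r ≤ gA T r hT.isConnected C r := by
    clear h1 h0
    induction hR with
    | refl => exact le_refl _
    | tail _ hm ih => exact le_trans (gA_move_le T r hT hm) ih
  have := self_le_gA T r hT.isConnected C' r
  omega

section Walks

omit [Fintype V] [DecidableEq V]

lemma walk_dart_at {a b : V} (p : T.Walk a b) :
    ∀ m, m < p.length → ∃ d ∈ p.darts, d.toProd = (p.getVert m, p.getVert (m + 1)) := by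
  induction p with
  | nil => intro m hm; simp at hm
  | @cons u v w h q ih =>
    intro m hm
    cases m with
    | zero =>
      refine ⟨⟨(u, v), h⟩, by simp [SimpleGraph.Walk.darts_cons], ?_⟩
      simp [SimpleGraph.Walk.getVert_zero, SimpleGraph.Walk.getVert_cons_succ]
    | succ m =>
      simp only [SimpleGraph.Walk.length_cons, Nat.succ_lt_succ_iff] at hm
      obtain ⟨d, hd, hdp⟩ := ih m hm
      exact ⟨d, by simp [SimpleGraph.Walk.darts_cons, hd],
        by simpa [SimpleGraph.Walk.getVert_cons_succ] using hdp⟩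

lemma walk_pos_of_dart {a b : V} (p : T.Walk a b) {d : T.Dart} (hd : d ∈ p.darts) :
    ∃ m, m < p.length ∧ d.toProd.1 = p.getVert m ∧ d.toProd.2 = p.getVert (m + 1) := by
  induction p with
  | nil => simp at hd
  | @cons u v w h q ih =>
    rw [SimpleGraph.Walk.darts_cons, List.mem_cons] at hd
    rcases hd with hd | hd
    · refine ⟨0, by simp, ?_, ?_⟩ <;>
        simp [hd, SimpleGraph.Walk.getVert_zero, SimpleGraph.Walk.getVert_cons_succ]
    · obtain ⟨m, hm, h1, h2⟩ := ih hd
      exact ⟨m + 1, by simp [SimpleGraph.Walk.length_cons]; omega,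
        by simpa [SimpleGraph.Walk.getVert_cons_succ] using h1,
        by simpa [SimpleGraph.Walk.getVert_cons_succ] using h2⟩

lemma walk_depth_getVert {a b : V} (p : T.Walk a b)
    (hd : ∀ d ∈ p.darts, T.dist d.toProd.2 r + 1 = T.dist d.toProd.1 r) :
    ∀ m, m ≤ p.length → T.dist (p.getVert m) r = T.dist b r + (p.length - m) := by
  suffices H : ∀ n m, m ≤ p.length → p.length - m ≤ n →
      T.dist (p.getVert m) r = T.dist b r + (p.length - m) from
    fun m hm => H p.length m hm (by omega)
  intro n
  induction n with
  | zero =>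
    intro m hm h0
    have : m = p.length := by omega
    subst this
    simp [SimpleGraph.Walk.getVert_length]
  | succ n ih =>
    intro m hm h0
    by_cases he : m = p.length
    · subst he; simp [SimpleGraph.Walk.getVert_length]
    have hlt : m < p.length := by omega
    obtain ⟨d, hdm, hdp⟩ := walk_dart_at T p m hlt
    have := hd d hdm
    rw [hdp] at this
    have h2 := ih (m + 1) (by omega) (by omega)
    simp only at this
    omega

end Walks

section Paths

variable (hT : T.IsTree) {k : ℕ} (P : Fin k → Σ a b : V, T.Walk a b)
  (hdesc : ∀ i, ∀ d ∈ (P i).2.2.darts,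
      T.dist d.toProd.2 r + 1 = T.dist d.toProd.1 r)
  (hdisj : ∀ i j, i ≠ j → ∀ e ∈ (P i).2.2.edges, e ∉ (P j).2.2.edges)
  (hcover : ∀ e ∈ T.edgeSet, ∃ i, e ∈ (P i).2.2.edges)

include hdesc in
lemma path_depth (i : Fin k) :
    ∀ m, m ≤ (P i).2.2.length → T.dist ((P i).2.2.getVert m) r
      = T.dist (P i).2.1 r + ((P i).2.2.length - m) :=
  walk_depth_getVert T r (P i).2.2 (hdesc i)

include hT hdesc hdisj in
lemma up_unique {v : V} {i j : Fin k} {m mj : ℕ}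
    (hm : m < (P i).2.2.length) (hmj : mj < (P j).2.2.length)
    (hv : v = (P i).2.2.getVert m) (hvj : v = (P j).2.2.getVert mj) :
    i = j ∧ m = mj := by
  obtain ⟨d, hdm, hdp⟩ := walk_dart_at T (P i).2.2 m hm
  obtain ⟨d', hdm', hdp'⟩ := walk_dart_at T (P j).2.2 mj hmj
  have hadj : T.Adj v ((P i).2.2.getVert (m + 1)) := by
    have := d.adj; rwa [show d.fst = v by rw [← hv] at hdp; exact congrArg Prod.fst hdp,
      show d.snd = (P i).2.2.getVert (m+1) from congrArg Prod.snd hdp] at this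
  have hadj' : T.Adj v ((P j).2.2.getVert (mj + 1)) := by
    have := d'.adj; rwa [show d'.fst = v by rw [← hvj] at hdp'; exact congrArg Prod.fst hdp',
      show d'.snd = (P j).2.2.getVert (mj+1) from congrArg Prod.snd hdp'] at this
  have hdep : T.dist ((P i).2.2.getVert (m + 1)) r + 1 = T.dist v r := by
    have := hdesc i d hdm; rwa [hdp, ← hv] at this
  have hdep' : T.dist ((P j).2.2.getVert (mj + 1)) r + 1 = T.dist v r := by
    have := hdesc j d' hdm'; rwa [hdp', ← hvj] at this
  have hw : (P i).2.2.getVert (m + 1) = (P j).2.2.getVert (mj + 1) :=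
    parent_unique T r hT hadj hadj' (by omega) (by omega)
  have hij : i = j := by
    by_contra hne
    refine hdisj i j hne d.edge ?_ ?_
    · exact List.mem_map_of_mem hdm
    · have : d.edge = d'.edge := by
        show s(d.toProd.1, d.toProd.2) = s(d'.toProd.1, d'.toProd.2)
        rw [hdp, hdp', ← hv, ← hvj, hw]
      rw [this]
      exact List.mem_map_of_mem hdm'
  subst hij
  refine ⟨rfl, ?_⟩
  have e1 := path_depth T r P hdesc i m (by omega)
  have e2 := path_depth T r P hdesc i mj (by omega)
  rw [← hv] at e1; rw [← hvj] at e2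
  omega

include hdesc hcover in
lemma child_struct {v u : V} (hu : u ∈ children T r v) :
    ∃ j mc, mc < (P j).2.2.length ∧ u = (P j).2.2.getVert mc ∧
      v = (P j).2.2.getVert (mc + 1) := by
  obtain ⟨hadj, hd⟩ := (mem_children T r).1 hu
  obtain ⟨j, hj⟩ := hcover s(v, u) (T.mem_edgeSet.2 hadj)
  rw [SimpleGraph.Walk.edges, List.mem_map] at hj
  obtain ⟨d, hdm, hde⟩ := hj
  obtain ⟨⟨x, y⟩, hxy⟩ := d
  have hdesc' := hdesc j _ hdm
  simp only [SimpleGraph.Dart.edge, Sym2.eq, Sym2.rel_iff', Prod.mk.injEq, Prod.swap_prod_mk]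
    at hde
  simp only at hdesc'
  obtain ⟨mc, hmc, h1, h2⟩ := walk_pos_of_dart T (P j).2.2 hdm
  simp only at h1 h2
  rcases hde with ⟨rfl, rfl⟩ | ⟨rfl, rfl⟩
  · omega
  · exact ⟨j, mc, hmc, h1 ▸ rfl, h2 ▸ rfl⟩

end Paths

section PathVal

variable (hT : T.IsTree) {k : ℕ} (P : Fin k → Σ a b : V, T.Walk a b)
  (hdesc : ∀ i, ∀ d ∈ (P i).2.2.darts,
      T.dist d.toProd.2 r + 1 = T.dist d.toProd.1 r)
  (hdisj : ∀ i j, i ≠ j → ∀ e ∈ (P i).2.2.edges, e ∉ (P j).2.2.edges)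
  (hcover : ∀ e ∈ T.edgeSet, ∃ i, e ∈ (P i).2.2.edges)

/-- The canonical unsolvable configuration for the path cover `P`. -/
noncomputable def cfg : V → ℕ :=
  fun v => ∑ i, if v = (P i).1 then 2 ^ (P i).2.2.length - 1 else 0

include hT hdesc hdisj hcover in
lemma gA_path_val : ∀ v : V, ∀ (i : Fin k) (m : ℕ), m < (P i).2.2.length →
    v = (P i).2.2.getVert m →
    gA T r hT.isConnected (cfg T P) v = 2 ^ ((P i).2.2.length - m) - 1 := by
  have hc := hT.isConnected
  refine children_ind T r hc _ fun v ih => ?_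
  intro i m hm hv
  -- value of the configuration at v
  have hC0 : cfg T P v = if m = 0 then 2 ^ (P i).2.2.length - 1 else 0 := by
    by_cases hm0 : m = 0
    · subst hm0
      rw [if_pos rfl, cfg, Finset.sum_eq_single i]
      · have hvy : v = (P i).1 := by rw [hv, SimpleGraph.Walk.getVert_zero]
        simp [hvy]
      · intro j _ hne
        split_ifs with hyj
        · by_cases hLj : (P j).2.2.length = 0
          · simp [hLj]
          · exfalso
            have hvj : v = (P j).2.2.getVert 0 := by
              rw [hyj, SimpleGraph.Walk.getVert_zero]
            exact hne.symm
              (up_unique T r hT P hdesc hdisj hm (by omega) hv hvj).1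
        · rfl
      · intro hi; exact absurd (Finset.mem_univ i) hi
    · rw [if_neg hm0, cfg]
      apply Finset.sum_eq_zero
      intro j _
      split_ifs with hyj
      · by_cases hLj : (P j).2.2.length = 0
        · simp [hLj]
        · exfalso
          have hvj : v = (P j).2.2.getVert 0 := by
            rw [hyj, SimpleGraph.Walk.getVert_zero]
          exact hm0 (up_unique T r hT P hdesc hdisj hm (by omega) hv hvj).2
      · rfl
  rw [gA_eq, hC0]
  by_cases hm0 : m = 0
  · subst hm0
    rw [if_pos rfl]
    have hzero : ∑ u ∈ children T r v, gA T r hc (cfg T P) u / 2 = 0 := by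
      apply Finset.sum_eq_zero
      intro u hu
      obtain ⟨j, mc, hmc, hu1, hu2⟩ := child_struct T r P hdesc hcover hu
      have hgu := ih u hu j mc hmc hu1
      by_cases hend : mc + 1 = (P j).2.2.length
      · rw [hgu]
        have : (P j).2.2.length - mc = 1 := by omega
        simp [this]
      · exfalso
        have := (up_unique T r hT P hdesc hdisj hm (by omega) hv hu2).2
        omega
    simp only [Nat.sub_zero]
    omega
  · rw [if_neg hm0]
    have hm1 : 1 ≤ m := by omega
    obtain ⟨d, hdm, hdp⟩ := walk_dart_at T (P i).2.2 (m - 1) (by omega)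
    have hm1' : m - 1 + 1 = m := by omega
    rw [hm1'] at hdp
    have hcmem : (P i).2.2.getVert (m - 1) ∈ children T r v := by
      refine (mem_children T r).2 ⟨?_, ?_⟩
      · have := d.adj
        rw [show d.fst = (P i).2.2.getVert (m-1) from congrArg Prod.fst hdp,
          show d.snd = (P i).2.2.getVert m from congrArg Prod.snd hdp] at this
        rw [hv]
        exact this.symm
      · have := hdesc i d hdm
        rw [hdp] at this
        simp only at this
        rw [← hv] at this
        omega
    have hsum : ∑ u ∈ children T r v, gA T r hc (cfg T P) u / 2
        = gA T r hc (cfg T P) ((P i).2.2.getVert (m - 1)) / 2 := by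
      refine Finset.sum_eq_single_of_mem _ hcmem ?_
      intro u hu hne
      obtain ⟨j, mc, hmc, hu1, hu2⟩ := child_struct T r P hdesc hcover hu
      have hgu := ih u hu j mc hmc hu1
      by_cases hend : mc + 1 = (P j).2.2.length
      · rw [hgu]
        have : (P j).2.2.length - mc = 1 := by omega
        simp [this]
      · exfalso
        obtain ⟨hij, hmm⟩ := up_unique T r hT P hdesc hdisj hm (by omega) hv hu2
        subst hij
        refine hne ?_
        rw [hu1]
        congr 1
        omega
    rw [hsum, ih _ hcmem i (m - 1) (by omega) rfl]
    have ht : (P i).2.2.length - (m - 1) = ((P i).2.2.length - m) + 1 := by omega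
    rw [ht]
    have h1 : 1 ≤ (2:ℕ) ^ ((P i).2.2.length - m) := Nat.one_le_two_pow
    have h2 : (2:ℕ) ^ (((P i).2.2.length - m) + 1) - 1
        = 2 * ((2:ℕ) ^ ((P i).2.2.length - m) - 1) + 1 := by
      rw [pow_succ]
      omega
    rw [h2, Nat.mul_add_div (by norm_num)]
    simp

include hT hdesc hdisj hcover in
lemma gA_root : gA T r hT.isConnected (cfg T P) r = 0 := by
  have hc := hT.isConnected
  rw [gA_eq]
  have hC0 : cfg T P r = 0 := by
    rw [cfg]
    apply Finset.sum_eq_zero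
    intro j _
    split_ifs with hyj
    · by_cases hLj : (P j).2.2.length = 0
      · simp [hLj]
      · exfalso
        have h3 := path_depth T r P hdesc j 0 (by omega)
        rw [SimpleGraph.Walk.getVert_zero] at h3
        have h4 : T.dist (P j).fst r = 0 := by rw [← hyj, SimpleGraph.dist_self]
        omega
    · rfl
  have hzero : ∑ u ∈ children T r r, gA T r hc (cfg T P) u / 2 = 0 := by
    apply Finset.sum_eq_zero
    intro u hu
    obtain ⟨j, mc, hmc, hu1, hu2⟩ := child_struct T r P hdesc hcover hu
    have hgu := gA_path_val T r hT P hdesc hdisj hcover u j mc hmc hu1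
    have hdep := path_depth T r P hdesc j (mc + 1) (by omega)
    rw [← hu2] at hdep
    have hend : mc + 1 = (P j).2.2.length := by
      rw [SimpleGraph.dist_self] at hdep
      omega
    rw [hgu]
    have : (P j).2.2.length - mc = 1 := by omega
    simp [this]
  omega

end PathVal

section Solvable

lemma moves_many {u w : V} (hadj : T.Adj u w) (C : V → ℕ) :
    ∀ j, 2 * j ≤ C u → Relation.ReflTransGen (PebblingMove T) C
      (fun x => if x = u then C u - 2 * j else if x = w then C w + j else C x) := by
  intro j
  induction j with
  | zero =>
    intro _
    have : (fun x => if x = u then C u - 2 * 0 else if x = w then C w + 0 else C x) = C := by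
      funext x
      split_ifs with h1 h2
      · subst h1; simp
      · subst h2; simp
      · rfl
    rw [this]
  | succ j ih =>
    intro hj
    have hne : u ≠ w := hadj.ne
    refine Relation.ReflTransGen.tail (ih (by omega)) ?_
    refine ⟨u, w, hadj, by simp [hne]; omega, ?_⟩
    funext x
    by_cases h1 : x = u
    · subst h1; simp [hne]; omega
    · by_cases h2 : x = w
      · subst h2; simp [hne.symm]; omega
      · simp [h1, h2]

lemma solvable_of_big (hc : T.Connected) :
    ∀ (n : ℕ) (C : V → ℕ) (u : V), T.dist u r ≤ n → 2 ^ (T.dist u r) ≤ C u →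
      PebblingSolvable T r C := by
  intro n
  induction n with
  | zero =>
    intro C u hn hC
    have hu : u = r := hc.dist_eq_zero_iff.mp (by omega)
    subst hu
    exact ⟨C, Relation.ReflTransGen.refl, le_trans Nat.one_le_two_pow hC⟩
  | succ n ih =>
    intro C u hn hC
    by_cases hur : u = r
    · subst hur
      exact ⟨C, Relation.ReflTransGen.refl, le_trans Nat.one_le_two_pow hC⟩
    · have hpos : 0 < T.dist u r := hc.pos_dist_of_ne hur
      obtain ⟨p, hp, hl⟩ := exists_spath T r hc u
      have hplen : 0 < p.length := by omega
      have hadj : T.Adj u (p.getVert 1) := by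
        have := p.adj_getVert_succ hplen
        rwa [p.getVert_zero] at this
      set w := p.getVert 1 with hw
      have hnil : ¬ p.Nil := SimpleGraph.Walk.not_nil_iff_lt_length.2 hplen
      have hdep : T.dist (p.getVert 1) r ≤ p.tail.length := SimpleGraph.dist_le p.tail
      have hlen := SimpleGraph.Walk.length_tail_add_one hnil
      have hdw : T.dist w r ≤ T.dist u r - 1 := by
        rw [hw]
        omega
      set d := T.dist u r with hd
      have hpow : 2 * 2 ^ (d - 1) = 2 ^ d := by
        rw [← pow_succ']
        congr 1
        omega
      have hmoves := moves_many T hadj C (2 ^ (d - 1)) (by omega)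
      set C₁ := fun x => if x = u then C u - 2 * 2 ^ (d - 1)
        else if x = w then C w + 2 ^ (d - 1) else C x with hC₁
      have hC₁w : C₁ w = C w + 2 ^ (d - 1) := by
        simp [hC₁, hadj.ne']
      have hsol := ih C₁ w (by omega) ?_
      · obtain ⟨C', rtg, h1⟩ := hsol
        exact ⟨C', hmoves.trans rtg, h1⟩
      · rw [hC₁w]
        have : (2:ℕ) ^ T.dist w r ≤ 2 ^ (d - 1) :=
          Nat.pow_le_pow_right (by norm_num) (by omega)
        omega

end Solvable

lemma big_total_solvable (hc : T.Connected) (C : V → ℕ)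
    (h : (∑ v, C v) = Fintype.card V * 2 ^ (Fintype.card V)) : PebblingSolvable T r C := by
  have hcard : 0 < Fintype.card V := Fintype.card_pos_iff.2 ⟨r⟩
  have hbig : ∃ u, 2 ^ (Fintype.card V) ≤ C u := by
    by_contra hb
    push_neg at hb
    have : (∑ v, C v) ≤ ∑ _v : V, (2 ^ (Fintype.card V) - 1) :=
      Finset.sum_le_sum fun v _ => by have := hb v; omega
    rw [Finset.sum_const, Finset.card_univ, smul_eq_mul] at this
    have h2 : (1:ℕ) ≤ 2 ^ (Fintype.card V) := Nat.one_le_two_pow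
    have h3 : Fintype.card V * (2 ^ (Fintype.card V) - 1) + Fintype.card V
        = Fintype.card V * 2 ^ (Fintype.card V) := by
      rw [← Nat.mul_succ]
      congr 1
      omega
    omega
  obtain ⟨u, hu⟩ := hbig
  refine solvable_of_big T r hc (Fintype.card V) C u (le_of_lt (depth_lt_card T r hc u)) ?_
  calc (2:ℕ) ^ T.dist u r ≤ 2 ^ (Fintype.card V) :=
        Nat.pow_le_pow_right (by norm_num) (le_of_lt (depth_lt_card T r hc u))
    _ ≤ C u := hu

omit [DecidableEq V] in
lemma reduce_exists (C : V → ℕ) : ∀ (j t : ℕ), (∑ v, C v) = t + j →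
    ∃ D : V → ℕ, (∀ v, D v ≤ C v) ∧ (∑ v, D v) = t := by
  intro j
  induction j generalizing C with
  | zero => intro t ht; exact ⟨C, fun v => le_refl _, by omega⟩
  | succ j ih =>
    intro t ht
    classical
    have hpos : ∃ v, 0 < C v := by
      by_contra hb
      push_neg at hb
      have : (∑ v, C v) = 0 := Finset.sum_eq_zero fun v _ => by have := hb v; omega
      omega
    obtain ⟨v, hv⟩ := hpos
    set C' := Function.update C v (C v - 1) with hC'
    have hsum : (∑ x, C' x) = t + j := by
      have h1 : (∑ x, C' x) + 1 = ∑ x, C x := by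
        rw [Finset.sum_update_of_mem (Finset.mem_univ v),
          ← Finset.add_sum_erase _ C (Finset.mem_univ v), Finset.erase_eq]
        omega
      omega
    obtain ⟨D, hD, hDs⟩ := ih C' t hsum
    refine ⟨D, fun x => le_trans (hD x) ?_, hDs⟩
    by_cases hx : x = v
    · subst hx; simp [hC']
    · simp [hC', Function.update_of_ne hx]

lemma gA_pos_of_solvable (hT : T.IsTree) {C : V → ℕ}
    (hs : PebblingSolvable T r C) : 1 ≤ gA T r hT.isConnected C r := by
  obtain ⟨C', hR, h1⟩ := hs
  have hmono : gA T r hT.isConnected C' r ≤ gA T r hT.isConnected C r := by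
    clear h1
    induction hR with
    | refl => exact le_refl _
    | tail _ hm ih => exact le_trans (gA_move_le T r hT hm) ih
  have := self_le_gA T r hT.isConnected C' r
  omega

end PebAux

/-- **Tree lower bound.** Let `T` be a finite tree rooted at `r` and let
`P 0, …, P (k-1)` be pairwise edge-disjoint descending paths covering all edges of
`T` (descending: each step of the walk moves toward `r`, so `(P i).1` is the
endpoint `y_P` farthest from `r`). Then the configuration placing exactly
`2^{e_P} - 1` pebbles on each `y_P` and none elsewhere is `r`-unsolvable, and hence
`π(T, r) ≥ (∑_P 2^{e_P}) - k + 1`. -/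
theorem tree_pebbling_lower_bound {V : Type*} [Fintype V] [DecidableEq V]
    (T : SimpleGraph V) (hT : T.IsTree) (r : V) (k : ℕ)
    (P : Fin k → Σ a b : V, T.Walk a b)
    (hpath : ∀ i, (P i).2.2.IsPath)
    (hdesc : ∀ i, ∀ d ∈ (P i).2.2.darts,
      T.dist d.toProd.2 r + 1 = T.dist d.toProd.1 r)
    (hdisj : ∀ i j, i ≠ j → ∀ e ∈ (P i).2.2.edges, e ∉ (P j).2.2.edges)
    (hcover : ∀ e ∈ T.edgeSet, ∃ i, e ∈ (P i).2.2.edges) :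
    ¬ PebblingSolvable T r
        (fun v => ∑ i, if v = (P i).1 then 2 ^ (P i).2.2.length - 1 else 0) ∧
    (∑ i, 2 ^ (P i).2.2.length) - k + 1 ≤ rootedPebblingNumber T r := by
  have hroot := PebAux.gA_root T r hT P hdesc hdisj hcover
  have huns : ¬ PebblingSolvable T r (PebAux.cfg T P) :=
    PebAux.unsolvable_of_gA_zero T r hT hroot
  refine ⟨huns, ?_⟩
  have hSne : {t : ℕ | ∀ C : V → ℕ, (∑ v, C v) = t → PebblingSolvable T r C}.Nonempty :=
    ⟨Fintype.card V * 2 ^ (Fintype.card V),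
      fun C hC => PebAux.big_total_solvable T r hT.isConnected C hC⟩
  rw [rootedPebblingNumber]
  refine le_csInf hSne ?_
  intro b hb
  by_contra hlt
  push_neg at hlt
  have htot : (∑ v, PebAux.cfg T P v) = ∑ i, (2 ^ (P i).2.2.length - 1) := by
    have hcfg : PebAux.cfg T P
        = fun v => ∑ i, if v = (P i).1 then 2 ^ (P i).2.2.length - 1 else 0 := rfl
    rw [hcfg, Finset.sum_comm]
    refine Finset.sum_congr rfl fun i _ => ?_
    rw [Finset.sum_ite_eq' Finset.univ (P i).1 (fun _ => 2 ^ (P i).2.2.length - 1)]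
    simp
  have hks : (∑ i, (2 ^ (P i).2.2.length - 1)) + k = ∑ i, 2 ^ (P i).2.2.length := by
    have h1 : ∀ i : Fin k, (2 ^ (P i).2.2.length - 1) + 1 = 2 ^ (P i).2.2.length :=
      fun i => by have : (1:ℕ) ≤ 2 ^ (P i).2.2.length := Nat.one_le_two_pow; omega
    calc (∑ i, (2 ^ (P i).2.2.length - 1)) + k
        = (∑ i, (2 ^ (P i).2.2.length - 1)) + ∑ _i : Fin k, 1 := by
          simp
      _ = ∑ i, ((2 ^ (P i).2.2.length - 1) + 1) := by rw [Finset.sum_add_distrib]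
      _ = ∑ i, 2 ^ (P i).2.2.length := Finset.sum_congr rfl fun i _ => h1 i
  have hble : b ≤ ∑ v, PebAux.cfg T P v := by omega
  obtain ⟨D, hD, hDs⟩ := PebAux.reduce_exists (PebAux.cfg T P)
    ((∑ v, PebAux.cfg T P v) - b) b (by omega)
  have hsol : PebblingSolvable T r D := hb D hDs
  have hpos := PebAux.gA_pos_of_solvable T r hT hsol
  have hmono := PebAux.gA_mono T r hT.isConnected hD r
  omega
end

section
/- For every integer d ≥ 1, the pebbling number of the d-dimensional hypercube graph satisfies π(Q_d) = 2^d. -/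
/-- The `d`-dimensional hypercube graph: vertices are 0–1 vectors of length `d`,
adjacent exactly when they differ in exactly one coordinate. -/
def hypercubeGraph (d : ℕ) : SimpleGraph (Fin d → Bool) where
  Adj x y := (Finset.univ.filter fun i => x i ≠ y i).card = 1
  symm := by
    constructor
    intro x y h
    rw [show (Finset.univ.filter fun i => y i ≠ x i)
        = (Finset.univ.filter fun i => x i ≠ y i) from
      Finset.filter_congr fun i _ => by tauto]
    exact h
  loopless := by constructor; intro x h; simp at h

namespace HCPf
variable {α : Type*} [DecidableEq α] {G : SimpleGraph α}

abbrev RT (G : SimpleGraph α) : (α → ℕ) → (α → ℕ) → Prop := Relation.ReflTransGen (PebblingMove G)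

lemma move_add {C C' E : α → ℕ} (h : PebblingMove G C C') : PebblingMove G (C + E) (C' + E) := by
  obtain ⟨u, v, huv, h2, rfl⟩ := h
  refine ⟨u, v, huv, le_trans h2 (by simp [Pi.add_apply]), ?_⟩
  funext w
  simp only [Pi.add_apply]
  have hvu : ¬ (v = u) := fun h => (G.ne_of_adj huv) h.symm
  by_cases hu : w = u
  · subst hu; simp; omega
  · by_cases hv : w = v
    · subst hv; simp [hvu, hu]; omega
    · simp [hu, hv]

lemma rt_add {C C' : α → ℕ} (h : RT G C C') (E : α → ℕ) : RT G (C + E) (C' + E) :=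
  Relation.ReflTransGen.lift (· + E) (fun _ _ hm => move_add hm) _ _ h

lemma rt_add_left {C C' : α → ℕ} (h : RT G C C') (E : α → ℕ) : RT G (E + C) (E + C') := by
  rw [add_comm E C, add_comm E C']; exact rt_add h E

lemma rt_sum {ι : Type*} [DecidableEq ι] (s : Finset ι) (F F' : ι → α → ℕ)
    (h : ∀ i ∈ s, RT G (F i) (F' i)) :
    RT G (∑ i ∈ s, F i) (∑ i ∈ s, F' i) := by
  induction s using Finset.induction_on with
  | empty => simp [Relation.ReflTransGen.refl]
  | insert a s hns ih =>
    rw [Finset.sum_insert hns, Finset.sum_insert hns]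
    exact (rt_add (h a (Finset.mem_insert_self a s)) _).trans
      (rt_add_left (ih fun i hi => h i (Finset.mem_insert_of_mem hi)) _)

lemma move_halves {u v : α} (huv : G.Adj u v) (k : ℕ) :
    ∀ C : α → ℕ, 2 * k ≤ C u →
      RT G C (fun w => if w = u then C u - 2 * k else if w = v then C v + k else C w) := by
  induction k with
  | zero =>
    intro C _
    have : (fun w => if w = u then C u - 2 * 0 else if w = v then C v + 0 else C w) = C := by
      funext w; split_ifs with h1 h2 <;> simp [h1] <;> simp [h2]
    rw [this]
  | succ k ih =>
    intro C hC
    have hne : u ≠ v := G.ne_of_adj huv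
    have step : PebblingMove G C
        (fun w => if w = u then C u - 2 else if w = v then C v + 1 else C w) :=
      ⟨u, v, huv, by omega, rfl⟩
    refine Relation.ReflTransGen.head step ?_
    have := ih (fun w => if w = u then C u - 2 else if w = v then C v + 1 else C w)
      (by simp; omega)
    convert this using 1
    funext w
    have hvu : ¬ (v = u) := fun h => hne h.symm
    by_cases h1 : w = u
    · simp [h1]; omega
    · by_cases h2 : w = v
      · simp [h1, h2, hvu]; omega
      · simp [h1, h2]


lemma adj_cons {b : Bool} {x y : Fin n → Bool} (h : (hypercubeGraph n).Adj x y) :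
    (hypercubeGraph (n+1)).Adj (Fin.cons b x) (Fin.cons b y) := by
  show _ = 1
  rw [Finset.card_filter, Fin.sum_univ_succ]
  simp only [Fin.cons_zero, Fin.cons_succ, ne_eq, not_true_eq_false, if_false]
  rw [← Finset.card_filter]
  simpa [hypercubeGraph] using h

lemma adj_cross (b : Bool) (x : Fin n → Bool) :
    (hypercubeGraph (n+1)).Adj (Fin.cons b x) (Fin.cons (!b) x) := by
  show _ = 1
  rw [Finset.card_filter, Fin.sum_univ_succ]
  simp

lemma cons_ne_cons {b b' : Bool} (h : b ≠ b') (x y : Fin n → Bool) :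
    (Fin.cons b x : Fin (n+1) → Bool) ≠ (Fin.cons b' y : Fin (n+1) → Bool) := by
  intro he
  exact h (by simpa using congrFun he 0)

/-- Place configuration `X` on the half `{w | w 0 = b}`. -/
def lift (b : Bool) (X : (Fin n → Bool) → ℕ) : (Fin (n+1) → Bool) → ℕ :=
  fun w => if w 0 = b then X (Fin.tail w) else 0

lemma lift_cons (b : Bool) (X : (Fin n → Bool) → ℕ) (x : Fin n → Bool) :
    lift b X (Fin.cons b x) = X x := by
  simp [lift]

lemma lift_cons_ne {b b' : Bool} (h : b' ≠ b) (X : (Fin n → Bool) → ℕ) (x : Fin n → Bool) :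
    lift b X (Fin.cons b' x) = 0 := by
  simp [lift, h]

lemma lift_add (b : Bool) (X Y : (Fin n → Bool) → ℕ) :
    lift b (X + Y) = lift b X + lift b Y := by
  funext w
  by_cases h : w 0 = b <;> simp [lift, h]

lemma bool_dich {b c : Bool} (h : ¬ c = b) : c = !b := by
  cases b <;> cases c <;> simp_all

lemma decomp (β : Bool) (C : (Fin (n+1) → Bool) → ℕ) :
    C = lift β (fun x => C (Fin.cons β x)) + lift (!β) (fun x => C (Fin.cons (!β) x)) := by
  funext w
  by_cases h : w 0 = β
  · have hw : Fin.cons β (Fin.tail w) = w := by rw [← h]; exact Fin.cons_self_tail w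
    simp [lift, h, hw]
  · have h2 : w 0 = !β := bool_dich h
    have hw : Fin.cons (!β) (Fin.tail w) = w := by rw [← h2]; exact Fin.cons_self_tail w
    simp [lift, h, h2, hw]

def splitEquiv (n : ℕ) : (Bool × (Fin n → Bool)) ≃ (Fin (n+1) → Bool) :=
  ⟨fun p => Fin.cons p.1 p.2, fun w => (w 0, Fin.tail w),
   fun p => by simp, fun w => Fin.cons_self_tail w⟩

@[simp] lemma splitEquiv_apply (n : ℕ) (b : Bool) (x : Fin n → Bool) :
    splitEquiv n (b, x) = Fin.cons b x := rfl

lemma sum_lift (b : Bool) (X : (Fin n → Bool) → ℕ) :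
    ∑ w, lift b X w = ∑ x, X x := by
  classical
  rw [← Equiv.sum_comp (splitEquiv n) (fun w => lift b X w)]
  rw [Fintype.sum_prod_type, Fintype.sum_bool]
  simp only [splitEquiv_apply]
  cases b <;> simp [lift, Fin.tail_cons]

lemma lift_move {b : Bool} {X X' : (Fin n → Bool) → ℕ}
    (h : PebblingMove (hypercubeGraph n) X X') :
    PebblingMove (hypercubeGraph (n+1)) (lift b X) (lift b X') := by
  obtain ⟨u, v, huv, h2, rfl⟩ := h
  refine ⟨Fin.cons b u, Fin.cons b v, adj_cons huv, by rwa [lift_cons], ?_⟩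
  funext w
  by_cases hb : w 0 = b
  · have hw : w = Fin.cons b (Fin.tail w) := by rw [← hb]; exact (Fin.cons_self_tail w).symm
    rw [hw]
    rcases eq_or_ne (Fin.tail w) u with he | he
    · rw [he]
      simp only [lift_cons, if_pos rfl, Fin.tail_cons, lift]
      simp
    · have h1 : Fin.cons b (Fin.tail w) ≠ Fin.cons b u := by
        intro hc; exact he (by simpa using congrArg Fin.tail hc)
      rw [if_neg h1]
      rcases eq_or_ne (Fin.tail w) v with hv | hv
      · rw [hv]; simp only [lift_cons, if_pos rfl]
        have hvu : ¬ (v = u) := fun hh => he (hv.trans hh)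
        simp [hvu]
      · have h2' : Fin.cons b (Fin.tail w) ≠ Fin.cons b v := by
          intro hc; exact hv (by simpa using congrArg Fin.tail hc)
        rw [if_neg h2']
        simp only [lift_cons]
        simp [he, hv]
  · have h1 : w ≠ Fin.cons b u := by
      intro hc; apply hb; rw [hc]; simp
    have h2' : w ≠ Fin.cons b v := by
      intro hc; apply hb; rw [hc]; simp
    rw [if_neg h1, if_neg h2']
    simp [lift, hb]

lemma lift_rt {b : Bool} {X X' : (Fin n → Bool) → ℕ}
    (h : RT (hypercubeGraph n) X X') :
    RT (hypercubeGraph (n+1)) (lift b X) (lift b X') :=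
  Relation.ReflTransGen.lift (lift b) (fun _ _ hm => lift_move hm) _ _ h



lemma delta_sum (b : Bool) (Y : (Fin n → Bool) → ℕ) (w : Fin (n+1) → Bool) :
    (∑ x, if w = Fin.cons b x then Y x else 0) = lift b Y w := by
  by_cases hb : w 0 = b
  · have hw : Fin.cons b (Fin.tail w) = w := by rw [← hb]; exact Fin.cons_self_tail w
    rw [Finset.sum_congr rfl (g := fun x => if x = Fin.tail w then Y x else 0)
      (fun x _ => by
        by_cases hx : x = Fin.tail w
        · subst hx; simp [hw]
        · have hc : w ≠ Fin.cons b x := fun hc => hx (by rw [hc, Fin.tail_cons])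
          simp [hx, hc])]
    rw [Finset.sum_ite_eq' Finset.univ (Fin.tail w) Y]
    simp [lift, hb]
  · rw [Finset.sum_congr rfl (g := fun _ => 0)
      (fun x _ => by
        have hc : w ≠ Fin.cons b x := fun hc => hb (by rw [hc]; simp)
        simp [hc])]
    simp [lift, hb]

lemma transfer (β : Bool) (Y : (Fin n → Bool) → ℕ) :
    RT (hypercubeGraph (n+1)) (lift (!β) Y)
      (lift β (fun x => Y x / 2) + lift (!β) (fun x => Y x % 2)) := by
  classical
  have hne : (!β) ≠ β := by cases β <;> simp
  have hstart : lift (!β) Y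
      = ∑ x, (fun w => if w = Fin.cons (!β) x then Y x else 0) := by
    funext w; rw [Finset.sum_apply]; exact (delta_sum (!β) Y w).symm
  have hend : (lift β (fun x => Y x / 2) + lift (!β) (fun x => Y x % 2))
      = ∑ x, (fun w => if w = Fin.cons β x then Y x / 2
          else if w = Fin.cons (!β) x then Y x % 2 else 0) := by
    funext w
    rw [Pi.add_apply, Finset.sum_apply]
    rw [Finset.sum_congr rfl (g := fun x => (if w = Fin.cons β x then Y x / 2 else 0)
        + (if w = Fin.cons (!β) x then Y x % 2 else 0))
      (fun x _ => by
        by_cases h1 : w = Fin.cons β x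
        · have hc : w ≠ Fin.cons (!β) x := by
            rw [h1]; exact cons_ne_cons hne.symm x x
          simp [h1, hc]
        · simp [h1])]
    rw [Finset.sum_add_distrib, delta_sum, delta_sum]
  rw [hstart, hend]
  apply rt_sum
  intro x _
  have hadj : (hypercubeGraph (n+1)).Adj (Fin.cons (!β) x) (Fin.cons β x) := by
    have := adj_cross (!β) x
    rwa [Bool.not_not] at this
  have h2k : 2 * (Y x / 2) ≤ (fun w => if w = Fin.cons (!β) x then Y x else 0)
      ((Fin.cons (!β) x : Fin (n+1) → Bool)) := by simp; omega
  have := move_halves hadj (Y x / 2) (fun w => if w = Fin.cons (!β) x then Y x else 0) h2k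
  convert this using 1
  funext w
  have hcc : ((Fin.cons (!β) x : Fin (n+1) → Bool) ≠ (Fin.cons β x : Fin (n+1) → Bool)) :=
    cons_ne_cons hne x x
  by_cases h1 : w = Fin.cons (!β) x
  · subst h1; simp [hcc]; omega
  · by_cases h2 : w = Fin.cons β x
    · subst h2; simp [hcc.symm]
    · simp [h1, h2]

lemma exists_piece {ι : Type*} [Fintype ι] [DecidableEq ι] (f : ι → ℕ) :
    ∀ k : ℕ, k ≤ ∑ i, f i → ∃ t : ι → ℕ, (∀ i, t i ≤ f i) ∧ ∑ i, t i = k := by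
  intro k
  induction k with
  | zero => exact fun _ => ⟨0, fun i => Nat.zero_le _, by simp⟩
  | succ k ih =>
    intro hk
    obtain ⟨t, ht, hsum⟩ := ih (by omega)
    have hex : ∃ i, t i < f i := by
      by_contra h
      push_neg at h
      have : ∑ i, f i ≤ ∑ i, t i := Finset.sum_le_sum (fun i _ => h i)
      omega
    obtain ⟨i, hi⟩ := hex
    refine ⟨Function.update t i (t i + 1), fun j => ?_, ?_⟩
    · by_cases hj : j = i
      · subst hj; rw [Function.update_self]; omega
      · rw [Function.update_of_ne hj]; exact ht j
    · rw [Finset.sum_update_of_mem (Finset.mem_univ i), Finset.sdiff_singleton_eq_erase]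
      rw [← hsum, ← Finset.sum_erase_add Finset.univ t (Finset.mem_univ i)]
      omega

/-- The weight of a configuration with respect to a root `r`. -/
def wt {d : ℕ} (r : Fin d → Bool) (C : (Fin d → Bool) → ℕ) : ℕ :=
  ∑ v, C v * 2 ^ (Finset.univ.filter fun i => v i = r i).card

lemma wt_add {d : ℕ} (r : Fin d → Bool) (C D : (Fin d → Bool) → ℕ) :
    wt r (C + D) = wt r C + wt r D := by
  unfold wt
  rw [← Finset.sum_add_distrib]
  exact Finset.sum_congr rfl fun v _ => by simp [add_mul]

lemma wt_single {d : ℕ} (r u : Fin d → Bool) (k : ℕ) :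
    wt r (fun w => if w = u then k else 0)
      = k * 2 ^ (Finset.univ.filter fun i => u i = r i).card := by
  unfold wt
  rw [Finset.sum_congr rfl (g := fun v => if v = u
      then k * 2 ^ (Finset.univ.filter fun i => u i = r i).card else 0)
    (fun v _ => by
      by_cases hv : v = u
      · subst hv; simp
      · simp [hv])]
  rw [Finset.sum_ite_eq' Finset.univ u]
  simp

lemma wt_move {d : ℕ} (r : Fin d → Bool) {C C' : (Fin d → Bool) → ℕ}
    (h : PebblingMove (hypercubeGraph d) C C') : wt r C' ≤ wt r C := by
  obtain ⟨u, v, huv, h2, rfl⟩ := h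
  have hne : ¬ (u = v) := (hypercubeGraph d).ne_of_adj huv
  have hvu : ¬ (v = u) := fun hh => hne hh.symm
  -- the key bookkeeping identity
  have key : (fun w => if w = u then C u - 2 else if w = v then C v + 1 else C w)
      + (fun w => if w = u then 2 else 0)
      = C + (fun w => if w = v then 1 else 0) := by
    funext w
    by_cases h1 : w = u
    · subst h1; simp [Pi.add_apply, hvu, hne]; omega
    · by_cases h2' : w = v
      · subst h2'; simp [Pi.add_apply, h1]
      · simp [Pi.add_apply, h1, h2']
  have hw := congrArg (wt r) key
  rw [wt_add, wt_add, wt_single, wt_single] at hw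
  -- agreement count increases by at most one along an edge
  obtain ⟨i0, hi0⟩ := Finset.card_eq_one.mp huv
  have hsub : (Finset.univ.filter fun i => v i = r i)
      ⊆ insert i0 (Finset.univ.filter fun i => u i = r i) := by
    intro i hi
    rw [Finset.mem_filter] at hi
    by_cases hii : i = i0
    · exact Finset.mem_insert.mpr (Or.inl hii)
    · refine Finset.mem_insert.mpr (Or.inr (Finset.mem_filter.mpr ⟨Finset.mem_univ i, ?_⟩))
      have : i ∉ Finset.univ.filter fun j => u j ≠ v j := by
        rw [hi0]; simp [hii]
      have hui : u i = v i := by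
        by_contra hne
        exact this (Finset.mem_filter.mpr ⟨Finset.mem_univ i, hne⟩)
      rw [hui]; exact hi.2
  have hcard : (Finset.univ.filter fun i => v i = r i).card
      ≤ (Finset.univ.filter fun i => u i = r i).card + 1 := by
    calc (Finset.univ.filter fun i => v i = r i).card
        ≤ (insert i0 (Finset.univ.filter fun i => u i = r i)).card :=
          Finset.card_le_card hsub
      _ ≤ _ := Finset.card_insert_le _ _
  have hpow : (2:ℕ) ^ (Finset.univ.filter fun i => v i = r i).card
      ≤ 2 * 2 ^ (Finset.univ.filter fun i => u i = r i).card := by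
    calc (2:ℕ) ^ (Finset.univ.filter fun i => v i = r i).card
        ≤ 2 ^ ((Finset.univ.filter fun i => u i = r i).card + 1) :=
          Nat.pow_le_pow_right (by norm_num) hcard
      _ = 2 * 2 ^ (Finset.univ.filter fun i => u i = r i).card := by ring
  omega

lemma wt_rt {d : ℕ} (r : Fin d → Bool) {C C' : (Fin d → Bool) → ℕ}
    (h : RT (hypercubeGraph d) C C') : wt r C' ≤ wt r C := by
  induction h with
  | refl => exact le_refl _
  | tail _ hm ih => exact le_trans (wt_move r hm) ih

lemma bneq (β : Bool) : β ≠ !β := by cases β <;> simp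

lemma bneq' (β : Bool) : (!β) ≠ β := by cases β <;> simp

theorem key : ∀ n : ℕ,
    (∀ (r : Fin n → Bool) (C : (Fin n → Bool) → ℕ), 2^n ≤ ∑ v, C v →
      ∃ C', RT (hypercubeGraph n) C C' ∧ 1 ≤ C' r) ∧
    (∀ (r : Fin n → Bool) (C : (Fin n → Bool) → ℕ),
      2^(n+1) + 1 ≤ (∑ v, C v) + ∑ v, C v % 2 →
      ∃ C', RT (hypercubeGraph n) C C' ∧ 2 ≤ C' r) := by
  intro n
  induction n with
  | zero =>
    have hall : ∀ v : Fin 0 → Bool, v = fun i => i.elim0 := fun v => funext fun i => i.elim0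
    have huniv : ∀ r : Fin 0 → Bool, (Finset.univ : Finset (Fin 0 → Bool)) = {r} := by
      intro r
      apply Finset.eq_singleton_iff_unique_mem.mpr
      exact ⟨Finset.mem_univ r, fun v _ => (hall v).trans (hall r).symm⟩
    constructor
    · intro r C h
      rw [huniv r, Finset.sum_singleton] at h
      exact ⟨C, Relation.ReflTransGen.refl, by simpa using h⟩
    · intro r C h
      rw [huniv r, Finset.sum_singleton, Finset.sum_singleton] at h
      exact ⟨C, Relation.ReflTransGen.refl, by omega⟩
  | succ n ih =>
    obtain ⟨ihI, ihII⟩ := ih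
    constructor
    -- ================= Part (I) =================
    · intro r C hp
      have hr : r = Fin.cons (r 0) (Fin.tail r) := (Fin.cons_self_tail r).symm
      set β := r 0 with hβ
      set r₀ := Fin.tail r with hr₀
      clear_value β r₀
      have hdec := decomp β C
      have hsum : ∑ w, C w
          = (∑ x, C (Fin.cons β x)) + ∑ x, C (Fin.cons (!β) x) := by
        conv_lhs => rw [hdec]
        simp only [Pi.add_apply]
        rw [Finset.sum_add_distrib, sum_lift, sum_lift]
      have hpb : (∑ x, C (Fin.cons (!β) x))
          = 2 * (∑ x, C (Fin.cons (!β) x) / 2) + ∑ x, C (Fin.cons (!β) x) % 2 := by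
        rw [Finset.sum_congr rfl
          (g := fun x => 2 * (C (Fin.cons (!β) x) / 2) + C (Fin.cons (!β) x) % 2)
          (fun x _ => by
            show C (Fin.cons (!β) x)
              = 2 * (C (Fin.cons (!β) x) / 2) + C (Fin.cons (!β) x) % 2
            omega)]
        rw [Finset.sum_add_distrib, ← Finset.mul_sum]
      by_cases hcase : 2^n ≤ (∑ x, C (Fin.cons β x)) + ∑ x, C (Fin.cons (!β) x) / 2
      · -- transfer all of B and solve inside A
        obtain ⟨D, hD, hD1⟩ := ihI r₀
          (fun x => C (Fin.cons β x) + C (Fin.cons (!β) x) / 2)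
          (by rw [Finset.sum_add_distrib]; exact hcase)
        have lmerge : lift β (fun x => C (Fin.cons β x))
              + lift β (fun x => C (Fin.cons (!β) x) / 2)
            = lift β (fun x => C (Fin.cons β x) + C (Fin.cons (!β) x) / 2) := by
          rw [← lift_add]; rfl
        have chain1 := rt_add_left
          (transfer β (fun x => C (Fin.cons (!β) x)))
          (lift β (fun x => C (Fin.cons β x)))
        rw [← hdec] at chain1
        have chain2 := rt_add (lift_rt (b := β) hD)
          (lift (!β) (fun x => C (Fin.cons (!β) x) % 2))
        have total : RT (hypercubeGraph (n+1)) C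
            (lift β D + lift (!β) (fun x => C (Fin.cons (!β) x) % 2)) := by
          refine chain1.trans ?_
          rw [show lift β (fun x => C (Fin.cons β x))
              + (lift β (fun x => C (Fin.cons (!β) x) / 2)
                + lift (!β) (fun x => C (Fin.cons (!β) x) % 2))
            = lift β (fun x => C (Fin.cons β x) + C (Fin.cons (!β) x) / 2)
              + lift (!β) (fun x => C (Fin.cons (!β) x) % 2) from by
            rw [← lmerge]; abel]
          exact chain2
        refine ⟨_, total, ?_⟩
        rw [hr, Pi.add_apply, lift_cons, lift_cons_ne (bneq β) _ _]
        omega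
      · -- use part (II) inductively inside B, then one move to the root
        have hq : 2^(n+1) + 1 ≤ (∑ x, C (Fin.cons (!β) x))
            + ∑ x, C (Fin.cons (!β) x) % 2 := by
          rw [hsum] at hp
          rw [pow_succ] at hp ⊢
          omega
        obtain ⟨D, hD, hD2⟩ := ihII r₀ (fun x => C (Fin.cons (!β) x)) hq
        have chain1 := rt_add (lift_rt (b := !β) hD) (lift β (fun x => C (Fin.cons β x)))
        have e0 : C = lift (!β) (fun x => C (Fin.cons (!β) x))
            + lift β (fun x => C (Fin.cons β x)) := hdec.trans (add_comm _ _)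
        rw [← e0] at chain1
        have hadj : (hypercubeGraph (n+1)).Adj (Fin.cons (!β) r₀) (Fin.cons β r₀) := by
          have := adj_cross (!β) r₀; rwa [Bool.not_not] at this
        have hu2 : 2 ≤ (lift (!β) D + lift β (fun x => C (Fin.cons β x)))
            ((Fin.cons (!β) r₀ : Fin (n+1) → Bool)) := by
          rw [Pi.add_apply, lift_cons, lift_cons_ne (bneq' β) _ _]
          omega
        have mv : PebblingMove (hypercubeGraph (n+1))
            (lift (!β) D + lift β (fun x => C (Fin.cons β x)))
            (fun w => if w = Fin.cons (!β) r₀ then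
                (lift (!β) D + lift β (fun x => C (Fin.cons β x)))
                  ((Fin.cons (!β) r₀ : Fin (n+1) → Bool)) - 2
              else if w = Fin.cons β r₀ then
                (lift (!β) D + lift β (fun x => C (Fin.cons β x)))
                  ((Fin.cons β r₀ : Fin (n+1) → Bool)) + 1
              else (lift (!β) D + lift β (fun x => C (Fin.cons β x))) w) :=
          ⟨_, _, hadj, hu2, rfl⟩
        refine ⟨_, chain1.tail mv, ?_⟩
        have hne2 := cons_ne_cons (bneq β) r₀ r₀
        rw [hr]
        simp only [hne2, if_false]
        simp
    -- ================= Part (II) =================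
    · intro r C hp
      have hr : r = Fin.cons (r 0) (Fin.tail r) := (Fin.cons_self_tail r).symm
      set β := r 0 with hβ
      set r₀ := Fin.tail r with hr₀
      clear_value β r₀
      have hdec := decomp β C
      have hsum : ∑ w, C w
          = (∑ x, C (Fin.cons β x)) + ∑ x, C (Fin.cons (!β) x) := by
        conv_lhs => rw [hdec]
        simp only [Pi.add_apply]
        rw [Finset.sum_add_distrib, sum_lift, sum_lift]
      have hqdec := decomp β (fun w => C w % 2)
      have hqsum : ∑ w, C w % 2
          = (∑ x, C (Fin.cons β x) % 2) + ∑ x, C (Fin.cons (!β) x) % 2 := by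
        rw [Finset.sum_congr rfl (fun w _ => congrFun hqdec w)]
        simp only [Pi.add_apply]
        rw [Finset.sum_add_distrib, sum_lift, sum_lift]
      by_cases hcase : 2^(n+1) + 1 ≤ (∑ x, C (Fin.cons β x)) + ∑ x, C (Fin.cons β x) % 2
      · -- solve entirely inside A
        obtain ⟨D, hD, hD2⟩ := ihII r₀ (fun x => C (Fin.cons β x)) hcase
        have chain1 := rt_add (lift_rt (b := β) hD) (lift (!β) (fun x => C (Fin.cons (!β) x)))
        rw [← hdec] at chain1
        refine ⟨_, chain1, ?_⟩
        rw [hr, Pi.add_apply, lift_cons, lift_cons_ne (bneq β) _ _]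
        omega
      · -- Chung's parity argument
        have haqa : (∑ x, C (Fin.cons β x) % 2) ≤ ∑ x, C (Fin.cons β x) :=
          Finset.sum_le_sum (fun x _ => Nat.mod_le _ 2)
        have hqble : (∑ x, C (Fin.cons (!β) x) % 2) ≤ 2^n := by
          calc (∑ x, C (Fin.cons (!β) x) % 2) ≤ ∑ _x : Fin n → Bool, 1 :=
                Finset.sum_le_sum (fun x _ => by omega)
            _ = 2^n := by simp [Finset.card_univ]
        have hpb : (∑ x, C (Fin.cons (!β) x))
            = 2 * (∑ x, C (Fin.cons (!β) x) / 2) + ∑ x, C (Fin.cons (!β) x) % 2 := by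
          rw [Finset.sum_congr rfl
            (g := fun x => 2 * (C (Fin.cons (!β) x) / 2) + C (Fin.cons (!β) x) % 2)
            (fun x _ => by
              show C (Fin.cons (!β) x)
                = 2 * (C (Fin.cons (!β) x) / 2) + C (Fin.cons (!β) x) % 2
              omega)]
          rw [Finset.sum_add_distrib, ← Finset.mul_sum]
        have harith : (2^n + 1 - (∑ x, C (Fin.cons (!β) x) % 2))
            ≤ ∑ x, C (Fin.cons (!β) x) / 2 := by
          rw [hsum, hqsum] at hp
          rw [pow_succ] at hcase
          rw [pow_succ, pow_succ] at hp
          omega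
        obtain ⟨t, htle, htsum⟩ := exists_piece (fun x => C (Fin.cons (!β) x) / 2)
          (2^n + 1 - (∑ x, C (Fin.cons (!β) x) % 2)) harith
        have htle' : ∀ x, t x ≤ C (Fin.cons (!β) x) / 2 := htle
        have hXle : ∀ x, 2 * t x + C (Fin.cons (!β) x) % 2 ≤ C (Fin.cons (!β) x) := by
          intro x; have := htle' x; omega
        have hBXY : (fun x => C (Fin.cons (!β) x))
            = (fun x => 2 * t x + C (Fin.cons (!β) x) % 2)
              + (fun x => C (Fin.cons (!β) x) - (2 * t x + C (Fin.cons (!β) x) % 2)) := by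
          funext x
          show C (Fin.cons (!β) x) = (2 * t x + C (Fin.cons (!β) x) % 2)
            + (C (Fin.cons (!β) x) - (2 * t x + C (Fin.cons (!β) x) % 2))
          have := hXle x
          omega
        -- apply (II) to X inside B
        have hXsum : (∑ x, (2 * t x + C (Fin.cons (!β) x) % 2))
            = 2 * (2^n + 1 - (∑ x, C (Fin.cons (!β) x) % 2))
              + ∑ x, C (Fin.cons (!β) x) % 2 := by
          rw [Finset.sum_add_distrib, ← Finset.mul_sum, htsum]
        have hXq : (∑ x, (2 * t x + C (Fin.cons (!β) x) % 2) % 2)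
            = ∑ x, C (Fin.cons (!β) x) % 2 :=
          Finset.sum_congr rfl (fun x _ => by
            show (2 * t x + C (Fin.cons (!β) x) % 2) % 2 = C (Fin.cons (!β) x) % 2
            omega)
        obtain ⟨D, hD, hD2⟩ := ihII r₀ (fun x => 2 * t x + C (Fin.cons (!β) x) % 2)
          (by rw [hXsum, hXq, pow_succ]; omega)
        -- apply (I) to A plus the transferred half of Y
        obtain ⟨D2, hD2', hD21⟩ := ihI r₀
          (fun x => C (Fin.cons β x)
            + (C (Fin.cons (!β) x) - (2 * t x + C (Fin.cons (!β) x) % 2)) / 2)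
          (by
            rw [Finset.sum_add_distrib]
            have hYsum : (∑ x, (C (Fin.cons (!β) x)
                  - (2 * t x + C (Fin.cons (!β) x) % 2)) / 2)
                + (2^n + 1 - (∑ x, C (Fin.cons (!β) x) % 2))
                = ∑ x, C (Fin.cons (!β) x) / 2 := by
              rw [← htsum, ← Finset.sum_add_distrib]
              refine Finset.sum_congr rfl (fun x _ => ?_)
              show (C (Fin.cons (!β) x) - (2 * t x + C (Fin.cons (!β) x) % 2)) / 2 + t x
                = C (Fin.cons (!β) x) / 2
              have := htle' x
              omega
            rw [hsum, hqsum] at hp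
            rw [pow_succ] at hcase
            rw [pow_succ, pow_succ] at hp
            omega)
        -- now compose all the moves
        have hadj : (hypercubeGraph (n+1)).Adj (Fin.cons (!β) r₀) (Fin.cons β r₀) := by
          have := adj_cross (!β) r₀; rwa [Bool.not_not] at this
        have hu2 : 2 ≤ lift (!β) D ((Fin.cons (!β) r₀ : Fin (n+1) → Bool)) := by
          rw [lift_cons]; omega
        have mv : PebblingMove (hypercubeGraph (n+1)) (lift (!β) D)
            (fun w => if w = Fin.cons (!β) r₀ then
                lift (!β) D ((Fin.cons (!β) r₀ : Fin (n+1) → Bool)) - 2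
              else if w = Fin.cons β r₀ then
                lift (!β) D ((Fin.cons β r₀ : Fin (n+1) → Bool)) + 1
              else lift (!β) D w) := ⟨_, _, hadj, hu2, rfl⟩
        have phaseA : RT (hypercubeGraph (n+1))
            (lift (!β) (fun x => 2 * t x + C (Fin.cons (!β) x) % 2))
            (fun w => if w = Fin.cons (!β) r₀ then
                lift (!β) D ((Fin.cons (!β) r₀ : Fin (n+1) → Bool)) - 2
              else if w = Fin.cons β r₀ then
                lift (!β) D ((Fin.cons β r₀ : Fin (n+1) → Bool)) + 1
              else lift (!β) D w) :=
          (lift_rt hD).tail mv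
        have hne2 := cons_ne_cons (bneq β) r₀ r₀
        have hE1r : 1 ≤ (fun w => if w = Fin.cons (!β) r₀ then
                lift (!β) D ((Fin.cons (!β) r₀ : Fin (n+1) → Bool)) - 2
              else if w = Fin.cons β r₀ then
                lift (!β) D ((Fin.cons β r₀ : Fin (n+1) → Bool)) + 1
              else lift (!β) D w) ((Fin.cons β r₀ : Fin (n+1) → Bool)) := by
          simp only [hne2, if_false]
          simp
        -- composition of phases
        have e1 : C = lift (!β) (fun x => 2 * t x + C (Fin.cons (!β) x) % 2)
            + (lift β (fun x => C (Fin.cons β x))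
              + lift (!β) (fun x => C (Fin.cons (!β) x)
                  - (2 * t x + C (Fin.cons (!β) x) % 2))) := by
          conv_lhs => rw [hdec]
          conv_lhs => rw [hBXY]
          rw [lift_add]; abel
        have chain1 := rt_add phaseA
          (lift β (fun x => C (Fin.cons β x))
            + lift (!β) (fun x => C (Fin.cons (!β) x)
                - (2 * t x + C (Fin.cons (!β) x) % 2)))
        have chain2 := rt_add
          (transfer β (fun x => C (Fin.cons (!β) x) - (2 * t x + C (Fin.cons (!β) x) % 2)))
          ((fun w => if w = Fin.cons (!β) r₀ then
                lift (!β) D ((Fin.cons (!β) r₀ : Fin (n+1) → Bool)) - 2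
              else if w = Fin.cons β r₀ then
                lift (!β) D ((Fin.cons β r₀ : Fin (n+1) → Bool)) + 1
              else lift (!β) D w)
            + lift β (fun x => C (Fin.cons β x)))
        have lmerge : lift β (fun x => (C (Fin.cons (!β) x)
              - (2 * t x + C (Fin.cons (!β) x) % 2)) / 2)
              + lift β (fun x => C (Fin.cons β x))
            = lift β (fun x => C (Fin.cons β x)
              + (C (Fin.cons (!β) x) - (2 * t x + C (Fin.cons (!β) x) % 2)) / 2) := by
          have hfg : ((fun x => (C (Fin.cons (!β) x)
                - (2 * t x + C (Fin.cons (!β) x) % 2)) / 2)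
                + fun x => C (Fin.cons β x))
              = (fun x => C (Fin.cons β x)
                + (C (Fin.cons (!β) x) - (2 * t x + C (Fin.cons (!β) x) % 2)) / 2) := by
            funext x
            exact Nat.add_comm _ _
          rw [← lift_add, hfg]
        have chain3 := rt_add (lift_rt (b := β) hD2')
          ((fun w => if w = Fin.cons (!β) r₀ then
                lift (!β) D ((Fin.cons (!β) r₀ : Fin (n+1) → Bool)) - 2
              else if w = Fin.cons β r₀ then
                lift (!β) D ((Fin.cons β r₀ : Fin (n+1) → Bool)) + 1
              else lift (!β) D w)
            + lift (!β) (fun x => (C (Fin.cons (!β) x)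
                - (2 * t x + C (Fin.cons (!β) x) % 2)) % 2))
        have total : RT (hypercubeGraph (n+1))
            (lift (!β) (fun x => 2 * t x + C (Fin.cons (!β) x) % 2)
              + (lift β (fun x => C (Fin.cons β x))
                + lift (!β) (fun x => C (Fin.cons (!β) x)
                    - (2 * t x + C (Fin.cons (!β) x) % 2))))
            (lift β D2
              + ((fun w => if w = Fin.cons (!β) r₀ then
                    lift (!β) D ((Fin.cons (!β) r₀ : Fin (n+1) → Bool)) - 2
                  else if w = Fin.cons β r₀ then
                    lift (!β) D ((Fin.cons β r₀ : Fin (n+1) → Bool)) + 1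
                  else lift (!β) D w)
                + lift (!β) (fun x => (C (Fin.cons (!β) x)
                    - (2 * t x + C (Fin.cons (!β) x) % 2)) % 2))) := by
          refine chain1.trans ?_
          rw [show (fun w => if w = Fin.cons (!β) r₀ then
                lift (!β) D ((Fin.cons (!β) r₀ : Fin (n+1) → Bool)) - 2
              else if w = Fin.cons β r₀ then
                lift (!β) D ((Fin.cons β r₀ : Fin (n+1) → Bool)) + 1
              else lift (!β) D w)
              + (lift β (fun x => C (Fin.cons β x))
                + lift (!β) (fun x => C (Fin.cons (!β) x)
                    - (2 * t x + C (Fin.cons (!β) x) % 2)))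
            = lift (!β) (fun x => C (Fin.cons (!β) x)
                  - (2 * t x + C (Fin.cons (!β) x) % 2))
              + ((fun w => if w = Fin.cons (!β) r₀ then
                  lift (!β) D ((Fin.cons (!β) r₀ : Fin (n+1) → Bool)) - 2
                else if w = Fin.cons β r₀ then
                  lift (!β) D ((Fin.cons β r₀ : Fin (n+1) → Bool)) + 1
                else lift (!β) D w)
                + lift β (fun x => C (Fin.cons β x))) from by abel]
          refine chain2.trans ?_
          rw [show (lift β (fun x => (C (Fin.cons (!β) x)
                - (2 * t x + C (Fin.cons (!β) x) % 2)) / 2)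
                + lift (!β) (fun x => (C (Fin.cons (!β) x)
                  - (2 * t x + C (Fin.cons (!β) x) % 2)) % 2))
              + ((fun w => if w = Fin.cons (!β) r₀ then
                  lift (!β) D ((Fin.cons (!β) r₀ : Fin (n+1) → Bool)) - 2
                else if w = Fin.cons β r₀ then
                  lift (!β) D ((Fin.cons β r₀ : Fin (n+1) → Bool)) + 1
                else lift (!β) D w)
                + lift β (fun x => C (Fin.cons β x)))
            = lift β (fun x => C (Fin.cons β x)
              + (C (Fin.cons (!β) x) - (2 * t x + C (Fin.cons (!β) x) % 2)) / 2)
              + ((fun w => if w = Fin.cons (!β) r₀ then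
                  lift (!β) D ((Fin.cons (!β) r₀ : Fin (n+1) → Bool)) - 2
                else if w = Fin.cons β r₀ then
                  lift (!β) D ((Fin.cons β r₀ : Fin (n+1) → Bool)) + 1
                else lift (!β) D w)
                + lift (!β) (fun x => (C (Fin.cons (!β) x)
                    - (2 * t x + C (Fin.cons (!β) x) % 2)) % 2)) from by
            rw [← lmerge]; abel]
          exact chain3
        rw [← e1] at total
        refine ⟨_, total, ?_⟩
        rw [hr]
        rw [Pi.add_apply, Pi.add_apply, lift_cons]
        have h0 : lift (!β) (fun x => (C (Fin.cons (!β) x)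
            - (2 * t x + C (Fin.cons (!β) x) % 2)) % 2)
            ((Fin.cons β r₀ : Fin (n+1) → Bool)) = 0 :=
          lift_cons_ne (bneq β) _ _
        rw [h0]
        have hE1r' := hE1r
        beta_reduce at hE1r'
        omega

end HCPf

/-- For every `d ≥ 1`, the pebbling number of the `d`-dimensional hypercube is `2^d`. -/
theorem pebblingNumber_hypercube (d : ℕ) (hd : 1 ≤ d) :
    pebblingNumber (hypercubeGraph d) = 2 ^ d := by
  classical
  have hmem : ∀ r : Fin d → Bool, (2^d) ∈ {t : ℕ | ∀ C : (Fin d → Bool) → ℕ,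
      (∑ v, C v) = t → PebblingSolvable (hypercubeGraph d) r C} := by
    intro r C hC
    obtain ⟨C', h1, h2⟩ := (HCPf.key d).1 r C (le_of_eq hC.symm)
    exact ⟨C', h1, h2⟩
  have hub : ∀ r, rootedPebblingNumber (hypercubeGraph d) r ≤ 2^d :=
    fun r => Nat.sInf_le (hmem r)
  -- lower bound, with the root at the all-`false` vertex
  have hlb : 2^d ≤ rootedPebblingNumber (hypercubeGraph d) (fun _ : Fin d => false) := by
    by_contra hlt
    push_neg at hlt
    have hSne : {t : ℕ | ∀ C : (Fin d → Bool) → ℕ,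
        (∑ v, C v) = t → PebblingSolvable (hypercubeGraph d) (fun _ : Fin d => false) C}.Nonempty :=
      ⟨2^d, hmem _⟩
    have hmem2 := Nat.sInf_mem hSne
    have hbad := hmem2 (fun v => if v = (fun _ : Fin d => true) then
        rootedPebblingNumber (hypercubeGraph d) (fun _ : Fin d => false) else 0)
      (by rw [Finset.sum_ite_eq' Finset.univ]; simp [rootedPebblingNumber])
    obtain ⟨C', hrt, h1⟩ := hbad
    have hw := HCPf.wt_rt (fun _ : Fin d => false) hrt
    have hwi : HCPf.wt (fun _ : Fin d => false) (fun v => if v = (fun _ : Fin d => true) then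
        rootedPebblingNumber (hypercubeGraph d) (fun _ : Fin d => false) else 0)
        = rootedPebblingNumber (hypercubeGraph d) (fun _ : Fin d => false) := by
      rw [HCPf.wt_single]
      have hf : (Finset.univ.filter fun i =>
          (fun _ : Fin d => true) i = (fun _ : Fin d => false) i) = ∅ :=
        Finset.filter_false_of_mem (fun i _ => by simp)
      rw [hf]
      simp
    have hwf : 2^d ≤ HCPf.wt (fun _ : Fin d => false) C' := by
      have hft : (Finset.univ.filter fun i =>
          (fun _ : Fin d => false) i = (fun _ : Fin d => false) i) = Finset.univ :=
        Finset.filter_true_of_mem (fun i _ => rfl)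
      have hle : C' (fun _ : Fin d => false)
            * 2 ^ (Finset.univ.filter fun i =>
                (fun _ : Fin d => false) i = (fun _ : Fin d => false) i).card
          ≤ HCPf.wt (fun _ : Fin d => false) C' :=
        Finset.single_le_sum (f := fun v => C' v
            * 2 ^ (Finset.univ.filter fun i => v i = (fun _ : Fin d => false) i).card)
          (fun v _ => Nat.zero_le _) (Finset.mem_univ _)
      rw [hft] at hle
      calc 2^d = 1 * 2^d := (one_mul _).symm
        _ ≤ C' (fun _ : Fin d => false) * 2^d := by
            exact Nat.mul_le_mul_right _ h1
        _ = C' (fun _ : Fin d => false) * 2^(Finset.univ : Finset (Fin d)).card := by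
            rw [Finset.card_univ, Fintype.card_fin]
        _ ≤ _ := hle
    rw [hwi] at hw
    omega
  apply le_antisymm
  · exact Finset.sup_le fun r _ => hub r
  · exact le_trans hlb (Finset.le_sup (Finset.mem_univ _))
end
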